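/- arXiv:2005.08145 — 8 statements merged into one kernel-verified Lean document; each statement's English description precedes it below -/
import Mathlib

section
/- (Corollary: spectral gap for positive semi-definite reversible chains.) Suppose the probability measure π is reversible and invariant for the Markov operator P, that π(K) > 0, that P satisfies the drift condition PV(x) ≤ (1−λ)V(x) + b·1_K(x) for all x and the minorization condition P1_A(x) ≥ α ν(A) 1_K(x) for all A ∈ ℬ and x, and that P is positive semi-definite on L²(π), i.e. ⟨f, Pf⟩_π ≥ 0 for all f ∈ L²(π). Then for every f ∈ L²(π) with ∫ f dπ = 0, ‖Pf‖_{2,π} ≤ (1 − β₊) ‖f‖_{2,π}, where β₊ = λ/(1 + 2b/α). -/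
/-!
Reversibility makes the one-step joint law `π ⊗ₘ κ` symmetric, so `⟨u, P u⟩ = ∫ u(x) u(y)` and
`2 (‖u‖² - ⟨u, P u⟩) = ∫ (u(x) - u(y))²`. Let `u` have `π`-mean zero and put `c = ∫ u dν`.
Symmetrising `2 u(x) u(y) ≤ u(x)² V(y) / V(x) + u(y)² V(x) / V(y)` and applying the drift
condition gives `⟨u - c, P (u - c)⟩ ≤ (1 - λ) ‖u - c‖² + b ∫_K (u - c)²`, and the minorization
bounds `α ∫_K (u - c)²` by the Dirichlet form above. Since shifting by `c` adds `c²` to both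
`‖u‖²` and `⟨u, P u⟩`, eliminating the `K`-term yields `⟨u, P u⟩ ≤ (1 - β₊) ‖u‖²`.
For `P` self-adjoint and positive semi-definite, Cauchy–Schwarz for the form `⟨·, P ·⟩` then gives
`‖P f‖⁴ = ⟨f, P (P f)⟩² ≤ ⟨f, P f⟩ ⟨P f, P (P f)⟩ ≤ (1 - β₊)² ‖f‖² ‖P f‖²`.
-/

open MeasureTheory ProbabilityTheory Set

section

variable {Ω : Type*} [MeasurableSpace Ω]

lemma sq_integral_le_integral_sq {μ : Measure Ω} [IsProbabilityMeasure μ] {f : Ω → ℝ}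
    (hf : MemLp f 2 μ) : (∫ ω, f ω ∂μ) ^ 2 ≤ ∫ ω, f ω ^ 2 ∂μ := by
  have := variance_nonneg f μ
  rw [variance_eq_sub hf, sub_nonneg] at this
  simpa using this

lemma mul_sq_sub_integral_le_integral_sq_sub {μ ν : Measure Ω} [IsProbabilityMeasure ν]
    {α : ℝ} (hα : 0 < α) (hle : ENNReal.ofReal α • ν ≤ μ) {f : Ω → ℝ}
    (hf : AEStronglyMeasurable f ν)
    (t : ℝ) (hint : Integrable (fun ω => (t - f ω) ^ 2) μ) :
    α * (t - ∫ ω, f ω ∂ν) ^ 2 ≤ ∫ ω, (t - f ω) ^ 2 ∂μ := by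
  have hintν : Integrable (fun ω => (t - f ω) ^ 2) ν :=
    (integrable_smul_measure (by simpa using hα) ENNReal.ofReal_ne_top).1
      (hint.mono_measure hle)
  have hL : MemLp (fun ω => t - f ω) 2 ν :=
    (memLp_two_iff_integrable_sq (aestronglyMeasurable_const.sub hf)).2 hintν
  have hfi : Integrable f ν := by
    convert (integrable_const t).sub (hL.integrable one_le_two) using 1
    ext; simp
  calc α * (t - ∫ ω, f ω ∂ν) ^ 2 = α * (∫ ω, (t - f ω) ∂ν) ^ 2 := by
        rw [integral_sub (integrable_const t) hfi]; simp
    _ ≤ α * ∫ ω, (t - f ω) ^ 2 ∂ν := by gcongr; exact sq_integral_le_integral_sq hL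
    _ = ∫ ω, (t - f ω) ^ 2 ∂(ENNReal.ofReal α • ν) := by
        rw [integral_smul_measure, ENNReal.toReal_ofReal hα.le, smul_eq_mul]
    _ ≤ ∫ ω, (t - f ω) ^ 2 ∂μ :=
        integral_mono_measure hle (.of_forall fun _ => sq_nonneg _) hint

lemma integrable_and_integral_le_of_lintegral_le {μ : Measure Ω} {f : Ω → ℝ} {c : ℝ}
    (hf : AEStronglyMeasurable f μ) (hf₀ : ∀ ω, 0 ≤ f ω) (hc : 0 ≤ c)
    (h : ∫⁻ ω, ENNReal.ofReal (f ω) ∂μ ≤ ENNReal.ofReal c) :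
    Integrable f μ ∧ ∫ ω, f ω ∂μ ≤ c :=
  ⟨⟨hf, (hasFiniteIntegral_iff_ofReal (.of_forall hf₀)).2
      (h.trans_lt ENNReal.ofReal_lt_top)⟩,
    by rw [integral_eq_lintegral_of_nonneg_ae (.of_forall hf₀) hf]
       exact ENNReal.toReal_le_of_le_ofReal hc h⟩

end

lemma le_one_sub_div_mul_of_drift_of_minorization {E I S c lam b α : ℝ} (hlam : 0 ≤ lam)
    (hb : 0 ≤ b) (hα : 0 < α) (hdrift : E + c ^ 2 ≤ (1 - lam) * (I + c ^ 2) + b * S)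
    (hminor : α * S ≤ 2 * (I - E)) :
    E ≤ (1 - lam / (1 + 2 * b / α)) * I := by
  have hbS : b * S ≤ 2 * b / α * (I - E) := by
    rw [div_mul_eq_mul_div, le_div_iff₀ hα]; nlinarith
  have hkey : (1 + 2 * b / α) * E ≤ (1 + 2 * b / α - lam) * I := by nlinarith [sq_nonneg c]
  rw [one_sub_div (by positivity), div_mul_eq_mul_div, le_div_iff₀ (by positivity)]
  linarith

namespace ProbabilityTheory.Kernel

variable {X : Type*} [MeasurableSpace X] {κ : Kernel X X} {π : Measure X} {f u v : X → ℝ}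

lemma integral_indicator_mul_integral_indicator [IsFiniteKernel κ] {A B : Set X}
    (hA : MeasurableSet A) (hB : MeasurableSet B) :
    ∫ x, A.indicator 1 x * ∫ y, B.indicator 1 y ∂κ x ∂π = (∫⁻ x in A, κ x B ∂π).toReal := by
  have (x : X) : A.indicator 1 x * (κ x).real B = A.indicator (fun x => (κ x).real B) x := by
    by_cases hx : x ∈ A <;> simp [hx]
  simp_rw [integral_indicator_one hB, this, integral_indicator hA]
  exact integral_toReal (κ.measurable_coe hB).aemeasurable
    (.of_forall fun _ => measure_lt_top _ _)

/-- This is what makes `∫ u ∂ν` depend only on the class of `u` in `L²(π)`. -/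
lemma Invariant.absolutelyContinuous_of_minorization (h : Invariant κ π) {K : Set X} {α : ℝ}
    {ν : Measure X} (hα : 0 < α) (hπK : π K ≠ 0)
    (hminor : ∀ A, MeasurableSet A → ∀ x ∈ K, ENNReal.ofReal α * ν A ≤ κ x A) : ν ≪ π := by
  refine Measure.AbsolutelyContinuous.mk fun A hA hπA => ?_
  have : ENNReal.ofReal α * ν A * π K ≤ π A :=
    calc ENNReal.ofReal α * ν A * π K = ∫⁻ _ in K, ENNReal.ofReal α * ν A ∂π :=
          (MeasureTheory.setLIntegral_const _ _).symm
      _ ≤ ∫⁻ x in K, κ x A ∂π := setLIntegral_mono (κ.measurable_coe hA) (hminor A hA)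
      _ ≤ ∫⁻ x, κ x A ∂π := setLIntegral_le_lintegral _ _
      _ = π A := by rw [← Measure.bind_apply hA κ.aemeasurable, h.def]
  simpa [hπA, hα.not_ge, hπK] using this

variable [IsMarkovKernel κ]

lemma measurePreserving_fst_compProd [SFinite π] : MeasurePreserving Prod.fst (π ⊗ₘ κ) π :=
  ⟨measurable_fst, Measure.fst_compProd π κ⟩

lemma Invariant.measurePreserving_snd [SFinite π] (h : Invariant κ π) :
    MeasurePreserving Prod.snd (π ⊗ₘ κ) π :=
  ⟨measurable_snd, by rw [← Measure.snd, Measure.snd_compProd]; exact h⟩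

lemma Invariant.memLp_integral (h : Invariant κ π) (hf : MemLp f 2 π) :
    MemLp (fun x => ∫ y, f y ∂κ x) 2 π := by
  have hf' : MemLp f 2 (κ ∘ₘ π) := by rwa [h.def]
  have hsm : AEStronglyMeasurable (fun x => ∫ y, f y ∂κ x) π := by
    have := hf'.1
    rw [Measure.comp_eq_comp_const_apply] at this
    simpa using this.integral_kernel_comp
  have hsm_ae : ∀ᵐ x ∂π, AEStronglyMeasurable f (κ x) := by
    filter_upwards [Measure.ae_ae_of_ae_comp hf'.1.ae_eq_mk] with x hx
    exact ⟨_, hf'.1.stronglyMeasurable_mk, hx⟩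
  refine (memLp_two_iff_integrable_sq hsm).2 <|
    (Measure.integrable_integral_norm_of_integrable_comp hf'.integrable_sq).mono' (hsm.pow 2) ?_
  filter_upwards [Measure.ae_integrable_of_integrable_comp hf'.integrable_sq, hsm_ae]
    with x hsq hfx
  simp only [Real.norm_of_nonneg (sq_nonneg _)]
  exact sq_integral_le_integral_sq ((memLp_two_iff_integrable_sq hfx).2 hsq)

variable [IsProbabilityMeasure π]

lemma isReversible_of_integral_mul_eq
    (h : ∀ f g : X → ℝ, MemLp f 2 π → MemLp g 2 π →
      ∫ x, f x * (∫ y, g y ∂(κ x)) ∂π = ∫ x, (∫ y, f y ∂(κ x)) * g x ∂π) :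
    IsReversible κ π := by
  intro A B hA hB
  have hmem {C : Set X} (hC : MeasurableSet C) : MemLp (C.indicator (1 : X → ℝ)) 2 π :=
    memLp_indicator_const 2 hC 1 (.inr (measure_ne_top π C))
  have := h _ _ (hmem hA) (hmem hB)
  simp_rw [mul_comm (∫ y, _ ∂κ _), integral_indicator_mul_integral_indicator hA hB,
    integral_indicator_mul_integral_indicator hB hA] at this
  have hfin {C D : Set X} (hC : MeasurableSet C) (hD : MeasurableSet D) :
      ∫⁻ x in C, κ x D ∂π ≠ ⊤ := by
    rw [← Measure.compProd_apply_prod hC hD]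
    exact measure_ne_top _ _
  rwa [ENNReal.toReal_eq_toReal_iff' (hfin hA hB) (hfin hB hA)] at this

lemma Invariant.integral_integral (h : Invariant κ π) (hf : Integrable f π) :
    ∫ x, ∫ y, f y ∂κ x ∂π = ∫ x, f x ∂π := by
  have hsnd := h.measurePreserving_snd
  calc ∫ x, ∫ y, f y ∂κ x ∂π = ∫ z, f z.2 ∂(π ⊗ₘ κ) :=
        (Measure.integral_compProd (f := fun z => f z.2)
          (hsnd.integrable_comp_of_integrable hf)).symm
    _ = ∫ x, f x ∂π := by
        rw [← integral_map measurable_snd.aemeasurable (by rw [hsnd.map_eq]; exact hf.1),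
          hsnd.map_eq]

lemma Invariant.integrable_mul (h : Invariant κ π) (hu : MemLp u 2 π) (hv : MemLp v 2 π) :
    Integrable (fun z : X × X => u z.1 * v z.2) (π ⊗ₘ κ) :=
  (hu.comp_measurePreserving measurePreserving_fst_compProd).integrable_mul
    (hv.comp_measurePreserving h.measurePreserving_snd)

lemma Invariant.integral_mul_integral_eq (h : Invariant κ π) (hu : MemLp u 2 π)
    (hv : MemLp v 2 π) :
    ∫ x, u x * ∫ y, v y ∂κ x ∂π = ∫ z, u z.1 * v z.2 ∂(π ⊗ₘ κ) := by
  rw [Measure.integral_compProd (h.integrable_mul hu hv)]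
  simp_rw [integral_const_mul]

lemma Invariant.mul_setIntegral_le_integral_sub_sq (h : Invariant κ π) {K : Set X} {α : ℝ}
    {ν : Measure X} [IsProbabilityMeasure ν] (hα : 0 < α) (hK : MeasurableSet K)
    (hminor : ∀ A, MeasurableSet A → ∀ x ∈ K, ENNReal.ofReal α * ν A ≤ κ x A) (hνπ : ν ≪ π)
    (hu : MemLp u 2 π) :
    α * ∫ x in K, (u x - ∫ y, u y ∂ν) ^ 2 ∂π ≤ ∫ z, (u z.1 - u z.2) ^ 2 ∂(π ⊗ₘ κ) := by
  have hD : Integrable (fun z : X × X => (u z.1 - u z.2) ^ 2) (π ⊗ₘ κ) :=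
    ((hu.comp_measurePreserving measurePreserving_fst_compProd).sub
      (hu.comp_measurePreserving h.measurePreserving_snd)).integrable_sq
  have hD' : Integrable (fun x => ∫ y, (u x - u y) ^ 2 ∂κ x) π := hD.integral_compProd
  have hpt : ∀ᵐ x ∂π, x ∈ K → α * (u x - ∫ y, u y ∂ν) ^ 2 ≤ ∫ y, (u x - u y) ^ 2 ∂κ x := by
    filter_upwards [((Measure.integrable_compProd_iff hD.1).1 hD).1] with x hx hxK
    exact mul_sq_sub_integral_le_integral_sq_sub hα
      (Measure.le_iff.2 fun A hA => by simpa using hminor A hA x hxK) (hu.1.mono_ac hνπ) _ hx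
  calc α * ∫ x in K, (u x - ∫ y, u y ∂ν) ^ 2 ∂π
      = ∫ x in K, α * (u x - ∫ y, u y ∂ν) ^ 2 ∂π := (integral_const_mul _ _).symm
    _ ≤ ∫ x in K, ∫ y, (u x - u y) ^ 2 ∂κ x ∂π :=
        setIntegral_mono_on_ae ((hu.sub (memLp_const _)).integrable_sq.const_mul α).integrableOn
          hD'.integrableOn hK hpt
    _ ≤ ∫ x, ∫ y, (u x - u y) ^ 2 ∂κ x ∂π :=
        setIntegral_le_integral hD' (.of_forall fun _ => integral_nonneg fun _ => sq_nonneg _)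
    _ = ∫ z, (u z.1 - u z.2) ^ 2 ∂(π ⊗ₘ κ) := (Measure.integral_compProd hD).symm

lemma IsReversible.measurePreserving_swap (h : IsReversible κ π) :
    MeasurePreserving Prod.swap (π ⊗ₘ κ) (π ⊗ₘ κ) := by
  refine ⟨measurable_swap, ext_of_generate_finite _ generateFrom_prod.symm isPiSystem_prod ?_
    (by simp [Measure.map_apply measurable_swap MeasurableSet.univ])⟩
  rintro s ⟨A, hA, B, hB, rfl⟩
  rw [Measure.map_apply measurable_swap ((hA : MeasurableSet A).prod hB), preimage_swap_prod,
    Measure.compProd_apply_prod hB hA, Measure.compProd_apply_prod hA hB]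
  exact h hB hA

lemma IsReversible.integral_comp_swap (h : IsReversible κ π) (F : X × X → ℝ) :
    ∫ z, F z.swap ∂(π ⊗ₘ κ) = ∫ z, F z ∂(π ⊗ₘ κ) :=
  h.measurePreserving_swap.integral_comp MeasurableEquiv.prodComm.measurableEmbedding F

lemma IsReversible.integral_mul_comm (h : IsReversible κ π) (u v : X → ℝ) :
    ∫ z, v z.1 * u z.2 ∂(π ⊗ₘ κ) = ∫ z, u z.1 * v z.2 ∂(π ⊗ₘ κ) := by
  rw [← h.integral_comp_swap]
  simp_rw [Prod.fst_swap, Prod.snd_swap, mul_comm]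

lemma IsReversible.integral_add_mul_add (h : IsReversible κ π) (hu : MemLp u 2 π)
    (hv : MemLp v 2 π) :
    ∫ z, (u z.1 + v z.1) * (u z.2 + v z.2) ∂(π ⊗ₘ κ) =
      ∫ z, u z.1 * u z.2 ∂(π ⊗ₘ κ) + 2 * ∫ z, u z.1 * v z.2 ∂(π ⊗ₘ κ) +
        ∫ z, v z.1 * v z.2 ∂(π ⊗ₘ κ) := by
  have hi {a b : X → ℝ} := h.invariant.integrable_mul (u := a) (v := b)
  have (z : X × X) : (u z.1 + v z.1) * (u z.2 + v z.2) =
      u z.1 * u z.2 + (u z.1 * v z.2 + v z.1 * u z.2) + v z.1 * v z.2 := by ring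
  simp_rw [this]
  rw [integral_add ((hi hu hu).fun_add ((hi hu hv).fun_add (hi hv hu))) (hi hv hv),
    integral_add (hi hu hu) ((hi hu hv).fun_add (hi hv hu)), integral_add (hi hu hv) (hi hv hu),
    h.integral_mul_comm u v]
  ring

lemma IsReversible.sq_integral_mul_le (h : IsReversible κ π)
    (hpsd : ∀ w : X → ℝ, MemLp w 2 π → 0 ≤ ∫ z, w z.1 * w z.2 ∂(π ⊗ₘ κ))
    (hu : MemLp u 2 π) (hv : MemLp v 2 π) :
    (∫ z, u z.1 * v z.2 ∂(π ⊗ₘ κ)) ^ 2 ≤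
      (∫ z, u z.1 * u z.2 ∂(π ⊗ₘ κ)) * ∫ z, v z.1 * v z.2 ∂(π ⊗ₘ κ) := by
  have hquad (t : ℝ) : 0 ≤ (∫ z, v z.1 * v z.2 ∂(π ⊗ₘ κ)) * (t * t) +
      2 * (∫ z, u z.1 * v z.2 ∂(π ⊗ₘ κ)) * t + ∫ z, u z.1 * u z.2 ∂(π ⊗ₘ κ) := by
    have := hpsd _ (hu.add (hv.const_mul t))
    simp only [Pi.add_apply] at this
    rw [h.integral_add_mul_add hu (hv.const_mul t)] at this
    simp_rw [mul_left_comm (u _) t, mul_mul_mul_comm t, integral_const_mul] at this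
    linarith
  have := discrim_le_zero hquad
  rw [discrim] at this
  nlinarith

lemma IsReversible.integral_sub_sq (h : IsReversible κ π) (hu : MemLp u 2 π) :
    ∫ z, (u z.1 - u z.2) ^ 2 ∂(π ⊗ₘ κ) =
      2 * (∫ x, u x ^ 2 ∂π - ∫ z, u z.1 * u z.2 ∂(π ⊗ₘ κ)) := by
  have hu₁ : Integrable (fun z : X × X => u z.1 ^ 2) (π ⊗ₘ κ) :=
    (hu.comp_measurePreserving measurePreserving_fst_compProd).integrable_sq
  have hu₂ : Integrable (fun z : X × X => u z.2 ^ 2) (π ⊗ₘ κ) :=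
    (hu.comp_measurePreserving h.invariant.measurePreserving_snd).integrable_sq
  have hmarg : ∫ z, u z.1 ^ 2 ∂(π ⊗ₘ κ) = ∫ x, u x ^ 2 ∂π := by
    rw [Measure.integral_compProd hu₁]
    simp
  have (z : X × X) : (u z.1 - u z.2) ^ 2 = u z.1 ^ 2 + u z.2 ^ 2 - 2 * (u z.1 * u z.2) := by ring
  simp_rw [this]
  rw [integral_sub (hu₁.fun_add hu₂) ((h.invariant.integrable_mul hu hu).const_mul 2),
    integral_add hu₁ hu₂, integral_const_mul, ← h.integral_comp_swap (fun z => u z.2 ^ 2)]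
  simp only [Prod.snd_swap]
  rw [hmarg]
  ring

lemma IsReversible.integral_mul_le_integral_sq_div_mul (h : IsReversible κ π) {V : X → ℝ}
    (hVm : Measurable V) (hV : ∀ x, 0 < V x) (hVint : ∀ x, Integrable V (κ x))
    (hu : MemLp u 2 π) (hint : Integrable (fun x => u x ^ 2 / V x * ∫ y, V y ∂κ x) π) :
    ∫ z, u z.1 * u z.2 ∂(π ⊗ₘ κ) ≤ ∫ x, u x ^ 2 / V x * ∫ y, V y ∂κ x ∂π := by
  set W : X × X → ℝ := fun z => u z.1 ^ 2 / V z.1 * V z.2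
  have hWsection (x : X) : ∫ y, W (x, y) ∂κ x = u x ^ 2 / V x * ∫ y, V y ∂κ x :=
    integral_const_mul (u x ^ 2 / V x) V
  have hW : Integrable W (π ⊗ₘ κ) := by
    have hWm : AEStronglyMeasurable W (π ⊗ₘ κ) :=
      (((hu.1.comp_measurePreserving measurePreserving_fst_compProd).pow 2).div₀
        (hVm.comp measurable_fst).aestronglyMeasurable).mul
        (hVm.comp measurable_snd).aestronglyMeasurable
    refine (Measure.integrable_compProd_iff hWm).2
      ⟨.of_forall fun x => (hVint x).const_mul (u x ^ 2 / V x), hint.congr (.of_forall fun x => ?_)⟩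
    dsimp only
    rw [← hWsection]
    refine integral_congr_ae (.of_forall fun y => (Real.norm_of_nonneg ?_).symm)
    have := hV x; have := hV y
    positivity
  have hWswap : Integrable (fun z => W z.swap) (π ⊗ₘ κ) :=
    h.measurePreserving_swap.integrable_comp_of_integrable hW
  have hamgm (z : X × X) : u z.1 * u z.2 ≤ (W z + W z.swap) / 2 := by
    have := hV z.1; have := hV z.2
    have hsq : (W z + W z.swap) / 2 - u z.1 * u z.2 =
        (u z.1 * V z.2 - u z.2 * V z.1) ^ 2 / (2 * V z.1 * V z.2) := by
      simp only [W, Prod.fst_swap, Prod.snd_swap]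
      field_simp
      ring
    have : 0 ≤ (u z.1 * V z.2 - u z.2 * V z.1) ^ 2 / (2 * V z.1 * V z.2) := by positivity
    linarith
  calc ∫ z, u z.1 * u z.2 ∂(π ⊗ₘ κ) ≤ ∫ z, (W z + W z.swap) / 2 ∂(π ⊗ₘ κ) :=
        integral_mono (h.invariant.integrable_mul hu hu) ((hW.fun_add hWswap).div_const 2) hamgm
    _ = ∫ z, W z ∂(π ⊗ₘ κ) := by
        rw [integral_div, integral_add hW hWswap, h.integral_comp_swap W]
        ring
    _ = ∫ x, u x ^ 2 / V x * ∫ y, V y ∂κ x ∂π := by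
        rw [Measure.integral_compProd hW]
        exact integral_congr_ae (.of_forall hWsection)

lemma IsReversible.integral_mul_le_of_drift (h : IsReversible κ π) {V : X → ℝ} {lam b : ℝ}
    {K : Set X} (hVm : Measurable V) (hV1 : ∀ x, 1 ≤ V x) (hVint : ∀ x, Integrable V (κ x))
    (hPV : ∀ x, ∫ y, V y ∂κ x ≤ (1 - lam) * V x + b * K.indicator 1 x) (hb : 0 ≤ b)
    (hK : MeasurableSet K) (hu : MemLp u 2 π) :
    ∫ z, u z.1 * u z.2 ∂(π ⊗ₘ κ) ≤ (1 - lam) * ∫ x, u x ^ 2 ∂π + b * ∫ x in K, u x ^ 2 ∂π := by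
  have hV (x : X) : 0 < V x := zero_lt_one.trans_le (hV1 x)
  set B : X → ℝ := fun x => (1 - lam) * u x ^ 2 + b * K.indicator (fun x => u x ^ 2) x
  have hB : Integrable B π :=
    (hu.integrable_sq.const_mul _).fun_add ((hu.integrable_sq.indicator hK).const_mul b)
  have hnonneg (x : X) : 0 ≤ u x ^ 2 / V x * ∫ y, V y ∂κ x :=
    mul_nonneg (div_nonneg (sq_nonneg _) (hV x).le) (integral_nonneg fun y => (hV y).le)
  have hle (x : X) : u x ^ 2 / V x * ∫ y, V y ∂κ x ≤ B x := by
    have hind : K.indicator 1 x * (u x ^ 2 / V x) ≤ K.indicator (fun x => u x ^ 2) x := by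
      by_cases hx : x ∈ K <;> simp [hx, div_le_self (sq_nonneg _) (hV1 x)]
    have := hV x
    calc u x ^ 2 / V x * ∫ y, V y ∂κ x
        ≤ u x ^ 2 / V x * ((1 - lam) * V x + b * K.indicator 1 x) :=
          mul_le_mul_of_nonneg_left (hPV x) (by positivity)
      _ = (1 - lam) * u x ^ 2 + b * (K.indicator 1 x * (u x ^ 2 / V x)) := by
        field_simp
      _ ≤ B x := by simp only [B]; gcongr
  have hint : Integrable (fun x => u x ^ 2 / V x * ∫ y, V y ∂κ x) π :=
    hB.mono' (((hu.1.pow 2).div₀ hVm.aestronglyMeasurable).mul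
        hVm.stronglyMeasurable.integral_kernel.aestronglyMeasurable)
      (.of_forall fun x => (Real.norm_of_nonneg (hnonneg x)).trans_le (hle x))
  calc ∫ z, u z.1 * u z.2 ∂(π ⊗ₘ κ) ≤ ∫ x, u x ^ 2 / V x * ∫ y, V y ∂κ x ∂π :=
        h.integral_mul_le_integral_sq_div_mul hVm hV hVint hu hint
    _ ≤ ∫ x, B x ∂π := integral_mono hint hB hle
    _ = (1 - lam) * ∫ x, u x ^ 2 ∂π + b * ∫ x in K, u x ^ 2 ∂π := by
        rw [integral_add (hu.integrable_sq.const_mul _)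
            ((hu.integrable_sq.indicator hK).const_mul b),
          integral_const_mul, integral_const_mul, integral_indicator hK]

lemma IsReversible.integral_mul_le_of_drift_of_minorization (h : IsReversible κ π) {V : X → ℝ}
    {lam b α : ℝ} {K : Set X} {ν : Measure X} [IsProbabilityMeasure ν] (hVm : Measurable V)
    (hV1 : ∀ x, 1 ≤ V x) (hVint : ∀ x, Integrable V (κ x))
    (hPV : ∀ x, ∫ y, V y ∂κ x ≤ (1 - lam) * V x + b * K.indicator 1 x) (hlam : 0 ≤ lam)
    (hb : 0 ≤ b) (hK : MeasurableSet K) (hα : 0 < α)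
    (hminor : ∀ A, MeasurableSet A → ∀ x ∈ K, ENNReal.ofReal α * ν A ≤ κ x A) (hνπ : ν ≪ π)
    (hu : MemLp u 2 π) (hu0 : ∫ x, u x ∂π = 0) :
    ∫ z, u z.1 * u z.2 ∂(π ⊗ₘ κ) ≤ (1 - lam / (1 + 2 * b / α)) * ∫ x, u x ^ 2 ∂π := by
  set c := ∫ y, u y ∂ν
  have hshift : ∫ z, (u z.1 - c) * (u z.2 - c) ∂(π ⊗ₘ κ) =
      ∫ z, u z.1 * u z.2 ∂(π ⊗ₘ κ) + c ^ 2 := by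
    simp_rw [sub_eq_add_neg]
    rw [h.integral_add_mul_add hu (memLp_const (-c)),
      ← h.invariant.integral_mul_integral_eq hu (memLp_const (-c))]
    simp [integral_neg, integral_mul_const, hu0, sq]
  have hnorm : ∫ x, (u x - c) ^ 2 ∂π = ∫ x, u x ^ 2 ∂π + c ^ 2 := by
    have (x : X) : (u x - c) ^ 2 = u x ^ 2 + (-(2 * c) * u x + c ^ 2) := by ring
    simp_rw [this]
    rw [integral_add hu.integrable_sq (((hu.integrable one_le_two).const_mul _).fun_add
      (integrable_const _)), integral_add ((hu.integrable one_le_two).const_mul _)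
      (integrable_const _), integral_const_mul, hu0]
    simp
  have hdrift := h.integral_mul_le_of_drift hVm hV1 hVint hPV hb hK
    (hu.sub (memLp_const c))
  have hminor' := h.invariant.mul_setIntegral_le_integral_sub_sq hα hK hminor hνπ hu
  simp only [Pi.sub_apply] at hdrift
  rw [hshift, hnorm] at hdrift
  rw [h.integral_sub_sq hu] at hminor'
  exact le_one_sub_div_mul_of_drift_of_minorization hlam hb hα hdrift hminor'

lemma IsReversible.sqrt_integral_sq_integral_le (h : IsReversible κ π) {c : ℝ} (hc : 0 ≤ c)
    (hpsd : ∀ w : X → ℝ, MemLp w 2 π → 0 ≤ ∫ z, w z.1 * w z.2 ∂(π ⊗ₘ κ))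
    (hgap : ∀ w : X → ℝ, MemLp w 2 π → ∫ x, w x ∂π = 0 →
      ∫ z, w z.1 * w z.2 ∂(π ⊗ₘ κ) ≤ c * ∫ x, w x ^ 2 ∂π)
    (hf : MemLp f 2 π) (hf0 : ∫ x, f x ∂π = 0) :
    √(∫ x, (∫ y, f y ∂κ x) ^ 2 ∂π) ≤ c * √(∫ x, f x ^ 2 ∂π) := by
  set q := fun x => ∫ y, f y ∂κ x
  have hq : MemLp q 2 π := h.invariant.memLp_integral hf
  have hq0 : ∫ x, q x ∂π = 0 :=
    (h.invariant.integral_integral (hf.integrable one_le_two)).trans hf0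
  have hqq : ∫ x, q x ^ 2 ∂π = ∫ z, f z.1 * q z.2 ∂(π ⊗ₘ κ) := by
    simp_rw [sq]
    rw [h.invariant.integral_mul_integral_eq hq hf, h.integral_mul_comm]
  have hCS := h.sq_integral_mul_le hpsd hf hq
  have hgap_f := hgap f hf hf0
  have hgap_q := hgap q hq hq0
  have hpsd_f := hpsd f hf
  have key : ∫ x, q x ^ 2 ∂π ≤ c ^ 2 * ∫ x, f x ^ 2 ∂π := by
    rw [← hqq] at hCS
    have hN : 0 ≤ ∫ x, q x ^ 2 ∂π := integral_nonneg fun x => sq_nonneg _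
    rcases hN.eq_or_lt with h0 | hpos
    · rw [← h0]
      exact mul_nonneg (sq_nonneg c) (integral_nonneg fun x => sq_nonneg (f x))
    · nlinarith [mul_le_mul hgap_f hgap_q (hpsd q hq) (hpsd_f.trans hgap_f)]
  rw [← Real.sqrt_sq hc, ← Real.sqrt_mul (sq_nonneg c)]
  exact Real.sqrt_le_sqrt key

end ProbabilityTheory.Kernel

theorem positive_semidefinite_spectral_gap_general
    {X : Type*} [MeasurableSpace X]
    (κ : Kernel X X) [IsMarkovKernel κ]
    (π : Measure X) [IsProbabilityMeasure π]
    -- reversibility: ⟨f, Pg⟩_π = ⟨Pf, g⟩_π for all f, g ∈ L²(π)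
    (hrev : ∀ f g : X → ℝ, MemLp f 2 π → MemLp g 2 π →
      ∫ x, f x * (∫ y, g y ∂(κ x)) ∂π = ∫ x, (∫ y, f y ∂(κ x)) * g x ∂π)
    (V : X → ℝ) (hVmeas : Measurable V) (hV1 : ∀ x, 1 ≤ V x)
    (lam b : ℝ) (hlam : 0 < lam) (hlam1 : lam ≤ 1) (hb : 0 ≤ b)
    (K : Set X) (hK : MeasurableSet K) (hπK : 0 < π K)
    (α : ℝ) (hα : 0 < α) (ν : Measure X) [IsProbabilityMeasure ν]
    -- drift condition (v4): PV ≤ (1-λ) V + b 1_K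
    (hdrift : ∀ x, ∫⁻ y, ENNReal.ofReal (V y) ∂(κ x)
      ≤ ENNReal.ofReal ((1 - lam) * V x + b * K.indicator 1 x))
    -- minorization condition: P 1_A(x) ≥ α ν(A) 1_K(x)
    (hminor : ∀ A : Set X, MeasurableSet A → ∀ x ∈ K, ENNReal.ofReal α * ν A ≤ κ x A)
    -- positive semi-definiteness of P on L²(π)
    (hpsd : ∀ f : X → ℝ, MemLp f 2 π → 0 ≤ ∫ x, f x * (∫ y, f y ∂(κ x)) ∂π) :
    ∀ f : X → ℝ, MemLp f 2 π → ∫ x, f x ∂π = 0 →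
      Real.sqrt (∫ x, (∫ y, f y ∂(κ x)) ^ 2 ∂π)
        ≤ (1 - lam / (1 + 2 * b / α)) * Real.sqrt (∫ x, (f x) ^ 2 ∂π) := by
  intro f hf hf0
  have hR : κ.IsReversible π := Kernel.isReversible_of_integral_mul_eq hrev
  have hPV (x : X) := integrable_and_integral_le_of_lintegral_le hVmeas.aestronglyMeasurable
    (fun y => zero_le_one.trans (hV1 y))
    (add_nonneg (mul_nonneg (sub_nonneg.2 hlam1) (zero_le_one.trans (hV1 x)))
      (mul_nonneg hb (indicator_nonneg (fun _ _ => zero_le_one) x))) (hdrift x)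
  have hνπ := hR.invariant.absolutelyContinuous_of_minorization hα hπK.ne' hminor
  have hc : 0 ≤ 1 - lam / (1 + 2 * b / α) := by
    rw [sub_nonneg, div_le_one (by positivity)]
    linarith [show 0 ≤ 2 * b / α by positivity]
  refine hR.sqrt_integral_sq_integral_le hc (fun w hw => ?_) (fun w hw hw0 =>
    hR.integral_mul_le_of_drift_of_minorization hVmeas hV1 (fun x => (hPV x).1)
      (fun x => (hPV x).2) hlam.le hb hK hα hminor hνπ hw hw0) hf hf0
  rw [← hR.invariant.integral_mul_integral_eq hw hw]
  exact hpsd w hw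

/-- **Corollary.** Under the drift and minorization conditions, a reversible Markov
operator `P` which is positive semi-definite on `L²(π)` admits the spectral gap
`β₊ = λ / (1 + 2 b / α)`. -/
theorem positive_semidefinite_spectral_gap
    {X : Type*} [MeasurableSpace X]
    (κ : Kernel X X) [IsMarkovKernel κ]
    (π : Measure X) [IsProbabilityMeasure π]
    -- invariance: ∫ Pf dπ = ∫ f dπ for all bounded measurable f
    (hinv : ∀ f : X → ℝ, Measurable f → (∃ C : ℝ, ∀ x, |f x| ≤ C) →
      ∫ x, (∫ y, f y ∂(κ x)) ∂π = ∫ x, f x ∂π)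
    -- reversibility: ⟨f, Pg⟩_π = ⟨Pf, g⟩_π for all f, g ∈ L²(π)
    (hrev : ∀ f g : X → ℝ, MemLp f 2 π → MemLp g 2 π →
      ∫ x, f x * (∫ y, g y ∂(κ x)) ∂π = ∫ x, (∫ y, f y ∂(κ x)) * g x ∂π)
    (V : X → ℝ) (hVmeas : Measurable V) (hV1 : ∀ x, 1 ≤ V x)
    (lam b : ℝ) (hlam : 0 < lam) (hlam1 : lam ≤ 1) (hb : 0 ≤ b)
    (K : Set X) (hK : MeasurableSet K) (hπK : 0 < π K)
    (α : ℝ) (hα : 0 < α) (ν : Measure X) [IsProbabilityMeasure ν]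
    -- drift condition (v4): PV ≤ (1-λ) V + b 1_K
    (hdrift : ∀ x, ∫⁻ y, ENNReal.ofReal (V y) ∂(κ x)
      ≤ ENNReal.ofReal ((1 - lam) * V x + b * K.indicator 1 x))
    -- minorization condition: P 1_A(x) ≥ α ν(A) 1_K(x)
    (hminor : ∀ A : Set X, MeasurableSet A → ∀ x ∈ K, ENNReal.ofReal α * ν A ≤ κ x A)
    -- positive semi-definiteness of P on L²(π)
    (hpsd : ∀ f : X → ℝ, MemLp f 2 π → 0 ≤ ∫ x, f x * (∫ y, f y ∂(κ x)) ∂π) :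
    ∀ f : X → ℝ, MemLp f 2 π → ∫ x, f x ∂π = 0 →
      Real.sqrt (∫ x, (∫ y, f y ∂(κ x)) ^ 2 ∂π)
        ≤ (1 - lam / (1 + 2 * b / α)) * Real.sqrt (∫ x, (f x) ^ 2 ∂π) :=
  positive_semidefinite_spectral_gap_general κ π hrev V hVmeas hV1 lam b hlam hlam1 hb K hK hπK α hα
    ν hdrift hminor hpsd
end

section
/- (Claim 1 in the proof of Theorem 1.) Suppose the probability measure π is reversible and invariant for the Markov operator P, let V : X → [1, ∞) be measurable, and let g ∈ L²(π). Then ⟨g, Pg⟩_π ≤ ∫ (g(x)²/V(x)) · PV(x) dπ(x), where the right-hand side is allowed to be +∞ and PV(x) = ∫ V(y) p(x, dy). -/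
open MeasureTheory ProbabilityTheory

private lemma iSup_mul_mono {a b : ℕ → ENNReal} (ha : Monotone a) (hb : Monotone b) :
    ⨆ n, a n * b n = (⨆ n, a n) * (⨆ n, b n) := by
  apply le_antisymm
  · exact iSup_le fun n => mul_le_mul' (le_iSup a n) (le_iSup b n)
  · rw [ENNReal.iSup_mul]
    refine iSup_le fun i => ?_
    rw [ENNReal.mul_iSup]
    refine iSup_le fun j => ?_
    calc a i * b j ≤ a (max i j) * b (max i j) :=
          mul_le_mul' (ha (le_max_left i j)) (hb (le_max_right i j))
      _ ≤ ⨆ n, a n * b n := le_iSup (fun n => a n * b n) (max i j)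

private lemma iSup_ofReal_min (a : ℝ) : ⨆ n : ℕ, ENNReal.ofReal (min a n) = ENNReal.ofReal a := by
  apply le_antisymm
  · exact iSup_le fun n => ENNReal.ofReal_le_ofReal (min_le_left _ _)
  · calc ENNReal.ofReal a = ENNReal.ofReal (min a (⌈a⌉₊ : ℕ)) := by
          rw [min_eq_left]
          exact le_trans (Nat.le_ceil a) (by exact_mod_cast le_refl _)
      _ ≤ ⨆ n : ℕ, ENNReal.ofReal (min a n) := le_iSup (fun n : ℕ => ENNReal.ofReal (min a n)) ⌈a⌉₊

private lemma lint_eq_ofReal_int {X : Type*} [MeasurableSpace X]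
    (κ : Kernel X X) [IsMarkovKernel κ] (π : Measure X) [IsProbabilityMeasure π]
    (u v : X → ℝ) (hu : Measurable u) (hv : Measurable v)
    (hu0 : ∀ x, 0 ≤ u x) (hv0 : ∀ x, 0 ≤ v x)
    (C : ℝ) (huC : ∀ x, u x ≤ C) (hvC : ∀ x, v x ≤ C) :
    ∫⁻ x, ENNReal.ofReal (u x) * ∫⁻ y, ENNReal.ofReal (v y) ∂κ x ∂π
      = ENNReal.ofReal (∫ x, u x * ∫ y, v y ∂κ x ∂π) := by
  have hvint : ∀ x : X, Integrable v (κ x) := fun x =>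
    Integrable.mono' (integrable_const C) hv.aestronglyMeasurable
      (Filter.Eventually.of_forall fun y => by
        rw [Real.norm_eq_abs, abs_of_nonneg (hv0 y)]; exact hvC y)
  have hstep : ∀ x : X, ∫⁻ y, ENNReal.ofReal (v y) ∂κ x = ENNReal.ofReal (∫ y, v y ∂κ x) :=
    fun x => (ofReal_integral_eq_lintegral_ofReal (hvint x) (Filter.Eventually.of_forall hv0)).symm
  have hPv0 : ∀ x, 0 ≤ ∫ y, v y ∂κ x := fun x => integral_nonneg hv0
  have hPvC : ∀ x, ∫ y, v y ∂κ x ≤ C := fun x => by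
    calc ∫ y, v y ∂κ x ≤ ∫ _, C ∂κ x := integral_mono (hvint x) (integrable_const C) hvC
      _ = C := by simp
  have hPvmeas : Measurable fun x => ∫ y, v y ∂κ x := by
    have : (fun x => ∫ y, v y ∂κ x) = fun x => (∫⁻ y, ENNReal.ofReal (v y) ∂κ x).toReal := by
      funext x; rw [hstep x, ENNReal.toReal_ofReal (hPv0 x)]
    rw [this]
    exact (Measurable.lintegral_kernel (hv.ennreal_ofReal)).ennreal_toReal
  have hwint : Integrable (fun x => u x * ∫ y, v y ∂κ x) π := by
    refine Integrable.mono' (integrable_const (C * C))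
      ((hu.mul hPvmeas).aestronglyMeasurable) (Filter.Eventually.of_forall fun x => ?_)
    rw [Real.norm_eq_abs, abs_of_nonneg (mul_nonneg (hu0 x) (hPv0 x))]
    have hC0 : 0 ≤ C := le_trans (hu0 x) (huC x)
    exact mul_le_mul (huC x) (hPvC x) (hPv0 x) hC0
  rw [ofReal_integral_eq_lintegral_ofReal hwint
    (Filter.Eventually.of_forall fun x => mul_nonneg (hu0 x) (hPv0 x))]
  refine lintegral_congr fun x => ?_
  rw [hstep x, ← ENNReal.ofReal_mul (hu0 x)]

private lemma symm_lint {X : Type*} [MeasurableSpace X]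
    (κ : Kernel X X) [IsMarkovKernel κ] (π : Measure X) [IsProbabilityMeasure π]
    (hrev : ∀ f g : X → ℝ, MemLp f 2 π → MemLp g 2 π →
      ∫ x, f x * (∫ y, g y ∂(κ x)) ∂π = ∫ x, (∫ y, f y ∂(κ x)) * g x ∂π)
    (f h : X → ℝ) (hf : Measurable f) (hh : Measurable h)
    (hf0 : ∀ x, 0 ≤ f x) (hh0 : ∀ x, 0 ≤ h x) :
    ∫⁻ x, ENNReal.ofReal (f x) * ∫⁻ y, ENNReal.ofReal (h y) ∂κ x ∂π
      = ∫⁻ x, ENNReal.ofReal (h x) * ∫⁻ y, ENNReal.ofReal (f y) ∂κ x ∂π := by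
  -- truncations
  set fn : ℕ → X → ℝ := fun n x => min (f x) n with hfn
  set hn : ℕ → X → ℝ := fun n x => min (h x) n with hhn
  have hfnm : ∀ n, Measurable (fn n) := fun n => hf.min measurable_const
  have hhnm : ∀ n, Measurable (hn n) := fun n => hh.min measurable_const
  have hfn0 : ∀ n x, 0 ≤ fn n x := fun n x => le_min (hf0 x) (Nat.cast_nonneg n)
  have hhn0 : ∀ n x, 0 ≤ hn n x := fun n x => le_min (hh0 x) (Nat.cast_nonneg n)
  have hfnC : ∀ n x, fn n x ≤ (n : ℝ) := fun n x => min_le_right _ _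
  have hhnC : ∀ n x, hn n x ≤ (n : ℝ) := fun n x => min_le_right _ _
  have hmemfn : ∀ n, MemLp (fn n) 2 π := fun n =>
    (memLp_top_of_bound (hfnm n).aestronglyMeasurable n
      (Filter.Eventually.of_forall fun x => by
        rw [Real.norm_eq_abs, abs_of_nonneg (hfn0 n x)]; exact hfnC n x)).mono_exponent le_top
  have hmemhn : ∀ n, MemLp (hn n) 2 π := fun n =>
    (memLp_top_of_bound (hhnm n).aestronglyMeasurable n
      (Filter.Eventually.of_forall fun x => by
        rw [Real.norm_eq_abs, abs_of_nonneg (hhn0 n x)]; exact hhnC n x)).mono_exponent le_top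
  have key : ∀ n : ℕ,
      ∫⁻ x, ENNReal.ofReal (fn n x) * ∫⁻ y, ENNReal.ofReal (hn n y) ∂κ x ∂π
        = ∫⁻ x, ENNReal.ofReal (hn n x) * ∫⁻ y, ENNReal.ofReal (fn n y) ∂κ x ∂π := by
    intro n
    rw [lint_eq_ofReal_int κ π (fn n) (hn n) (hfnm n) (hhnm n) (hfn0 n) (hhn0 n) n (hfnC n) (hhnC n),
      lint_eq_ofReal_int κ π (hn n) (fn n) (hhnm n) (hfnm n) (hhn0 n) (hfn0 n) n (hhnC n) (hfnC n)]
    congr 1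
    rw [hrev (fn n) (hn n) (hmemfn n) (hmemhn n)]
    exact integral_congr_ae (Filter.Eventually.of_forall fun x => mul_comm _ _)
  -- limits
  have innmono : ∀ (v : X → ℝ) (x : X), Monotone fun n : ℕ =>
      ∫⁻ y, ENNReal.ofReal (min (v y) n) ∂κ x := by
    intro v x n m hnm
    refine lintegral_mono fun y => ENNReal.ofReal_le_ofReal ?_
    exact min_le_min le_rfl (by exact_mod_cast hnm)
  have ofRmono : ∀ (a : ℝ), Monotone fun n : ℕ => ENNReal.ofReal (min a n) := by
    intro a n m hnm
    exact ENNReal.ofReal_le_ofReal (min_le_min le_rfl (by exact_mod_cast hnm))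
  have inn_sup : ∀ (v : X → ℝ), Measurable v → ∀ x : X,
      (⨆ n : ℕ, ∫⁻ y, ENNReal.ofReal (min (v y) n) ∂κ x) = ∫⁻ y, ENNReal.ofReal (v y) ∂κ x := by
    intro v hv x
    rw [← lintegral_iSup (fun n => (hv.min measurable_const).ennreal_ofReal)
      (fun n m hnm => fun y => ofRmono (v y) hnm)]
    exact lintegral_congr fun y => iSup_ofReal_min (v y)
  have conv : ∀ (u v : X → ℝ), Measurable u → Measurable v →
      (⨆ n : ℕ, ∫⁻ x, ENNReal.ofReal (min (u x) n) * ∫⁻ y, ENNReal.ofReal (min (v y) n) ∂κ x ∂π)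
        = ∫⁻ x, ENNReal.ofReal (u x) * ∫⁻ y, ENNReal.ofReal (v y) ∂κ x ∂π := by
    intro u v hu hv
    rw [← lintegral_iSup]
    · refine lintegral_congr fun x => ?_
      rw [iSup_mul_mono (ofRmono (u x)) (innmono v x), iSup_ofReal_min, inn_sup v hv x]
    · exact fun n => ((hu.min measurable_const).ennreal_ofReal).mul
        (Measurable.lintegral_kernel ((hv.min measurable_const).ennreal_ofReal))
    · intro n m hnm x
      exact mul_le_mul' (ofRmono (u x) hnm) (innmono v x hnm)
  rw [← conv f h hf hh, ← conv h f hh hf]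
  exact iSup_congr key

private lemma amgm_real (a b s t : ℝ) (hs : 1 ≤ s) (ht : 1 ≤ t) :
    2 * (|a| * |b|) ≤ a ^ 2 / s * t + s * (b ^ 2 / t) := by
  have hs0 : (0:ℝ) < s := lt_of_lt_of_le one_pos hs
  have ht0 : (0:ℝ) < t := lt_of_lt_of_le one_pos ht
  have ha : a ^ 2 / s * s = a ^ 2 := div_mul_cancel₀ _ hs0.ne'
  have hb : b ^ 2 / t * t = b ^ 2 := div_mul_cancel₀ _ ht0.ne'
  have key : 2 * (|a| * |b|) * (s * t) ≤ (a ^ 2 / s * t + s * (b ^ 2 / t)) * (s * t) := by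
    have expand : (a ^ 2 / s * t + s * (b ^ 2 / t)) * (s * t) = a ^ 2 * t ^ 2 + b ^ 2 * s ^ 2 := by
      field_simp
    rw [expand]
    nlinarith [sq_nonneg (|a| * t - |b| * s), sq_abs a, sq_abs b]
  exact le_of_mul_le_mul_right key (mul_pos hs0 ht0)

/-- **Claim 1** in the proof of Theorem 1: for a reversible invariant measure `π`,
a function `V ≥ 1`, and `g ∈ L²(π)`, one has `⟨g, Pg⟩_π ≤ ∫ (g²/V) · PV dπ`, where the
right-hand side (interpreted in `[0, ∞]`) is allowed to be `+∞`. -/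
theorem claim1_reversible_bound
    {X : Type*} [MeasurableSpace X]
    (κ : Kernel X X) [IsMarkovKernel κ]
    (π : Measure X) [IsProbabilityMeasure π]
    -- invariance: ∫ Pf dπ = ∫ f dπ for all bounded measurable f
    (hinv : ∀ f : X → ℝ, Measurable f → (∃ C : ℝ, ∀ x, |f x| ≤ C) →
      ∫ x, (∫ y, f y ∂(κ x)) ∂π = ∫ x, f x ∂π)
    -- reversibility: ⟨f, Pg⟩_π = ⟨Pf, g⟩_π for all f, g ∈ L²(π)
    (hrev : ∀ f g : X → ℝ, MemLp f 2 π → MemLp g 2 π →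
      ∫ x, f x * (∫ y, g y ∂(κ x)) ∂π = ∫ x, (∫ y, f y ∂(κ x)) * g x ∂π)
    (V : X → ℝ) (hVmeas : Measurable V) (hV1 : ∀ x, 1 ≤ V x)
    (g : X → ℝ) (hg : MemLp g 2 π) :
    ENNReal.ofReal (∫ x, g x * (∫ y, g y ∂(κ x)) ∂π)
      ≤ ∫⁻ x, ENNReal.ofReal ((g x) ^ 2 / V x)
          * (∫⁻ y, ENNReal.ofReal (V y) ∂(κ x)) ∂π := by
  -- measurable representative of g
  obtain ⟨g', hg'sm, hgg'⟩ := hg.1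
  have hg'meas : Measurable g' := hg'sm.measurable
  -- measurable null set containing {g ≠ g'}
  obtain ⟨N, hNsub, hNmeas, hNnull⟩ :=
    exists_measurable_superset_of_null (hgg' : π {x | g x ≠ g' x} = 0)
  -- κ x N = 0 for π-a.e. x, via invariance
  have hkerN : ∀ᵐ x ∂π, κ x N = 0 := by
    have hind : Measurable (N.indicator fun _ => (1:ℝ)) :=
      measurable_const.indicator hNmeas
    have hbdd : ∃ C : ℝ, ∀ x, |N.indicator (fun _ => (1:ℝ)) x| ≤ C := by
      refine ⟨1, fun x => ?_⟩
      by_cases hx : x ∈ N <;> simp [Set.indicator, hx]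
    have h0 := hinv (N.indicator fun _ => (1:ℝ)) hind hbdd
    have hin : ∀ x : X, ∫ y, N.indicator (fun _ => (1:ℝ)) y ∂κ x = (κ x N).toReal := by
      intro x
      rw [integral_indicator_const (1:ℝ) hNmeas]; simp [Measure.real]
    have hout : ∫ y, N.indicator (fun _ => (1:ℝ)) y ∂π = 0 := by
      rw [integral_indicator_const (1:ℝ) hNmeas]; simp [Measure.real, hNnull]
    rw [hout] at h0
    simp_rw [hin] at h0
    have hmeas : Measurable fun x => (κ x N).toReal :=
      (Kernel.measurable_coe κ hNmeas).ennreal_toReal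
    have hint : Integrable (fun x => (κ x N).toReal) π := by
      refine Integrable.mono' (integrable_const (1:ℝ)) hmeas.aestronglyMeasurable
        (Filter.Eventually.of_forall fun x => ?_)
      rw [Real.norm_eq_abs, abs_of_nonneg ENNReal.toReal_nonneg]
      exact ENNReal.toReal_le_of_le_ofReal one_pos.le
        (by rw [ENNReal.ofReal_one]
            exact le_trans (measure_mono (Set.subset_univ N)) (le_of_eq measure_univ))
    have hae := (integral_eq_zero_iff_of_nonneg (fun x => ENNReal.toReal_nonneg) hint).mp h0
    filter_upwards [hae] with x hx
    have := (ENNReal.toReal_eq_zero_iff _).mp hx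
    rcases this with h | h
    · exact h
    · exact absurd h (measure_ne_top _ _)
  have hgg'π : ∀ᵐ x ∂π, g x = g' x := hgg'
  have hgg'κ : ∀ᵐ x ∂π, g =ᵐ[κ x] g' := by
    filter_upwards [hkerN] with x hx
    exact ae_iff.mpr (measure_mono_null hNsub hx)
  -- notation
  set G : X → ℝ := fun x => |g' x| with hG
  set W : X → ℝ := fun x => (g' x) ^ 2 / V x with hW
  have hGmeas : Measurable G := hg'meas.abs
  have hWmeas : Measurable W := (hg'meas.pow_const 2).div hVmeas
  have hG0 : ∀ x, 0 ≤ G x := fun x => abs_nonneg _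
  have hW0 : ∀ x, 0 ≤ W x := fun x =>
    div_nonneg (sq_nonneg _) (le_trans zero_le_one (hV1 x))
  have hV0 : ∀ x, 0 ≤ V x := fun x => le_trans zero_le_one (hV1 x)
  set A : ENNReal := ∫⁻ x, ENNReal.ofReal (G x) * ∫⁻ y, ENNReal.ofReal (G y) ∂κ x ∂π with hA
  set R : ENNReal := ∫⁻ x, ENNReal.ofReal (W x) * ∫⁻ y, ENNReal.ofReal (V y) ∂κ x ∂π with hR
  -- Step 1: LHS ≤ ∫⁻ ofReal (g x * ∫ g dκ x)
  have step1 : ENNReal.ofReal (∫ x, g x * (∫ y, g y ∂(κ x)) ∂π)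
      ≤ ∫⁻ x, ENNReal.ofReal (g x * ∫ y, g y ∂κ x) ∂π := by
    by_cases hInt : Integrable (fun x => g x * ∫ y, g y ∂κ x) π
    · have hpos : Integrable (fun x => max (g x * ∫ y, g y ∂κ x) 0) π := hInt.pos_part
      calc ENNReal.ofReal (∫ x, g x * (∫ y, g y ∂(κ x)) ∂π)
          ≤ ENNReal.ofReal (∫ x, max (g x * ∫ y, g y ∂κ x) 0 ∂π) :=
            ENNReal.ofReal_le_ofReal
              (integral_mono hInt hpos fun x => le_max_left _ _)
        _ = ∫⁻ x, ENNReal.ofReal (max (g x * ∫ y, g y ∂κ x) 0) ∂π :=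
            ofReal_integral_eq_lintegral_ofReal hpos
              (Filter.Eventually.of_forall fun x => le_max_right _ _)
        _ = ∫⁻ x, ENNReal.ofReal (g x * ∫ y, g y ∂κ x) ∂π := by
            refine lintegral_congr fun x => ?_
            rcases le_or_gt 0 (g x * ∫ y, g y ∂κ x) with h | h
            · rw [max_eq_left h]
            · rw [max_eq_right h.le, ENNReal.ofReal_of_nonpos h.le, ENNReal.ofReal_zero]
    · rw [integral_undef hInt]; simp
  -- Step 2: pointwise bound giving ≤ A
  have step2 : ∫⁻ x, ENNReal.ofReal (g x * ∫ y, g y ∂κ x) ∂π ≤ A := by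
    refine lintegral_mono_ae ?_
    filter_upwards [hgg'π, hgg'κ] with x hx hκx
    by_cases hix : Integrable g (κ x)
    · have h1 : g x * ∫ y, g y ∂κ x ≤ G x * ∫ y, |g y| ∂κ x := by
        calc g x * ∫ y, g y ∂κ x ≤ |g x * ∫ y, g y ∂κ x| := le_abs_self _
          _ = |g x| * |∫ y, g y ∂κ x| := abs_mul _ _
          _ ≤ |g x| * ∫ y, |g y| ∂κ x := by
              refine mul_le_mul_of_nonneg_left ?_ (abs_nonneg _)
              simpa [Real.norm_eq_abs] using norm_integral_le_integral_norm (μ := κ x) g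
          _ = G x * ∫ y, |g y| ∂κ x := by rw [hG]; simp [hx]
      calc ENNReal.ofReal (g x * ∫ y, g y ∂κ x)
          ≤ ENNReal.ofReal (G x * ∫ y, |g y| ∂κ x) := ENNReal.ofReal_le_ofReal h1
        _ = ENNReal.ofReal (G x) * ENNReal.ofReal (∫ y, |g y| ∂κ x) :=
            ENNReal.ofReal_mul (hG0 x)
        _ = ENNReal.ofReal (G x) * ∫⁻ y, ENNReal.ofReal (|g y|) ∂κ x := by
            rw [ofReal_integral_eq_lintegral_ofReal hix.abs
              (Filter.Eventually.of_forall fun y => abs_nonneg _)]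
        _ = ENNReal.ofReal (G x) * ∫⁻ y, ENNReal.ofReal (G y) ∂κ x := by
            congr 1
            refine lintegral_congr_ae ?_
            filter_upwards [hκx] with y hy
            rw [hG]; simp [hy]
    · rw [integral_undef hix, mul_zero, ENNReal.ofReal_zero]
      exact zero_le
  -- Step 3: AM-GM, A ≤ R
  have step3 : A ≤ R := by
    have T2eq : ∫⁻ x, ENNReal.ofReal (V x) * ∫⁻ y, ENNReal.ofReal (W y) ∂κ x ∂π = R := by
      rw [hR]
      exact symm_lint κ π hrev V W hVmeas hWmeas hV0 hW0
    have h2 : 2 * A ≤ 2 * R := by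
      have pointwise : ∀ x : X,
          2 * (ENNReal.ofReal (G x) * ∫⁻ y, ENNReal.ofReal (G y) ∂κ x)
            ≤ ENNReal.ofReal (W x) * ∫⁻ y, ENNReal.ofReal (V y) ∂κ x
              + ENNReal.ofReal (V x) * ∫⁻ y, ENNReal.ofReal (W y) ∂κ x := by
        intro x
        have lhs_eq : 2 * (ENNReal.ofReal (G x) * ∫⁻ y, ENNReal.ofReal (G y) ∂κ x)
            = ∫⁻ y, 2 * ENNReal.ofReal (G x) * ENNReal.ofReal (G y) ∂κ x := by
          rw [← mul_assoc, ← lintegral_const_mul _ hGmeas.ennreal_ofReal]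
        have rhs_eq : ENNReal.ofReal (W x) * ∫⁻ y, ENNReal.ofReal (V y) ∂κ x
              + ENNReal.ofReal (V x) * ∫⁻ y, ENNReal.ofReal (W y) ∂κ x
            = ∫⁻ y, (ENNReal.ofReal (W x) * ENNReal.ofReal (V y)
                + ENNReal.ofReal (V x) * ENNReal.ofReal (W y)) ∂κ x := by
          rw [lintegral_add_left (hVmeas.ennreal_ofReal.const_mul (ENNReal.ofReal (W x))),
            lintegral_const_mul _ hVmeas.ennreal_ofReal,
            lintegral_const_mul _ hWmeas.ennreal_ofReal]
        rw [lhs_eq, rhs_eq]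
        refine lintegral_mono fun y => ?_
        have hreal : 2 * (G x * G y) ≤ W x * V y + V x * W y := by
          have := amgm_real (g' x) (g' y) (V x) (V y) (hV1 x) (hV1 y)
          simpa [hG, hW] using this
        calc 2 * ENNReal.ofReal (G x) * ENNReal.ofReal (G y)
            = ENNReal.ofReal (2 * (G x * G y)) := by
              rw [ENNReal.ofReal_mul (by norm_num : (0:ℝ) ≤ 2),
                ENNReal.ofReal_mul (hG0 x), ENNReal.ofReal_ofNat, mul_assoc]
          _ ≤ ENNReal.ofReal (W x * V y + V x * W y) := ENNReal.ofReal_le_ofReal hreal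
          _ ≤ ENNReal.ofReal (W x * V y) + ENNReal.ofReal (V x * W y) :=
              ENNReal.ofReal_add_le
          _ = ENNReal.ofReal (W x) * ENNReal.ofReal (V y)
              + ENNReal.ofReal (V x) * ENNReal.ofReal (W y) := by
              rw [ENNReal.ofReal_mul (hW0 x), ENNReal.ofReal_mul (hV0 x)]
      calc 2 * A = ∫⁻ x, 2 * (ENNReal.ofReal (G x) * ∫⁻ y, ENNReal.ofReal (G y) ∂κ x) ∂π := by
            rw [hA, ← lintegral_const_mul]
            exact hGmeas.ennreal_ofReal.mul
              (Measurable.lintegral_kernel hGmeas.ennreal_ofReal)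
        _ ≤ ∫⁻ x, (ENNReal.ofReal (W x) * ∫⁻ y, ENNReal.ofReal (V y) ∂κ x
              + ENNReal.ofReal (V x) * ∫⁻ y, ENNReal.ofReal (W y) ∂κ x) ∂π :=
            lintegral_mono pointwise
        _ = R + ∫⁻ x, ENNReal.ofReal (V x) * ∫⁻ y, ENNReal.ofReal (W y) ∂κ x ∂π := by
            rw [hR, lintegral_add_left]
            exact hWmeas.ennreal_ofReal.mul
              (Measurable.lintegral_kernel hVmeas.ennreal_ofReal)
        _ = R + R := by rw [T2eq]
        _ = 2 * R := by ring
    exact (ENNReal.mul_le_mul_iff_right (by norm_num) (by norm_num)).mp h2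
  -- Step 4: R equals the stated RHS
  have step4 : R = ∫⁻ x, ENNReal.ofReal ((g x) ^ 2 / V x)
      * (∫⁻ y, ENNReal.ofReal (V y) ∂(κ x)) ∂π := by
    rw [hR]
    refine lintegral_congr_ae ?_
    filter_upwards [hgg'π] with x hx
    rw [hW]; simp [hx]
  rw [← step4]
  exact le_trans step1 (le_trans step2 step3)
end

section
/- (Claim 2 in the proof of Theorem 1.) Suppose the probability measure π is invariant for the Markov operator P, that π(K) > 0, and that P satisfies the minorization condition P1_A(x) ≥ α ν(A) 1_K(x) for all A ∈ ℬ and x, with α > 0 and ν a probability measure. Then for every f ∈ L²(π), setting m = (1/π(K)) ∫_K f dπ, one has ∫_K (f − m)² dπ ≤ (2/α) · ⟨f, (I−P)f⟩_π. -/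
/-!
For `x ∈ K` the minorization gives `α ∫ (f x - f y)² dν(y) ≤ ∫ (f x - f y)² κ(x, dy)`. Since the
mean `m` over `K` minimizes `t ↦ ∫_K (f - t)² dπ`, taking `t = f y` and averaging over `y ∼ ν`
(Tonelli) yields `α ∫_K (f - m)² dπ ≤ ∫∫ (f x - f y)² κ(x, dy) π(dx)`. By invariance both marginals
of `π ⊗ κ` are `π`, so the right-hand side equals `2 ⟨f, (I - P) f⟩_π`.
-/
open MeasureTheory ProbabilityTheory
open scoped ENNReal

section

variable {X : Type*} [MeasurableSpace X]

lemma integral_sq_sub_average_le {μ : Measure X} [IsFiniteMeasure μ] {f : X → ℝ}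
    (hf : MemLp f 2 μ) (t : ℝ) :
    ∫ x, (f x - ⨍ y, f y ∂μ) ^ 2 ∂μ ≤ ∫ x, (f x - t) ^ 2 ∂μ := by
  set m := ⨍ y, f y ∂μ
  have hcentered : Integrable (fun x => 2 * (m - t) * (f x - m)) μ :=
    ((hf.integrable one_le_two).sub (integrable_const m)).const_mul _
  have hsq : Integrable (fun x => (f x - m) ^ 2) μ := (hf.sub (memLp_const m)).integrable_sq
  have hexpand : ∫ x, (f x - t) ^ 2 ∂μ
      = ∫ x, (f x - m) ^ 2 ∂μ + 2 * (m - t) * ∫ x, (f x - m) ∂μ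
        + μ.real Set.univ * (m - t) ^ 2 := by
    rw [integral_congr_ae (ae_of_all _ fun x =>
        show (f x - t) ^ 2 = ((f x - m) ^ 2 + 2 * (m - t) * (f x - m)) + (m - t) ^ 2 by ring),
      integral_add (f := fun x => (f x - m) ^ 2 + 2 * (m - t) * (f x - m))
        (hsq.add hcentered) (integrable_const _), integral_add hsq hcentered,
      integral_const_mul, integral_const, smul_eq_mul]
  rw [hexpand, integral_sub_average, mul_zero, add_zero, le_add_iff_nonneg_right]
  positivity

lemma ofReal_integral_sq_sub_average_le_lintegral_prod {μ ν : Measure X} [IsFiniteMeasure μ]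
    [IsProbabilityMeasure ν] {f : X → ℝ} (hf : MemLp f 2 μ)
    (hF : AEMeasurable (fun p : X × X => ENNReal.ofReal ((f p.1 - f p.2) ^ 2)) (μ.prod ν)) :
    ENNReal.ofReal (∫ x, (f x - ⨍ y, f y ∂μ) ^ 2 ∂μ)
      ≤ ∫⁻ p, ENNReal.ofReal ((f p.1 - f p.2) ^ 2) ∂(μ.prod ν) := by
  rw [lintegral_prod_symm _ hF]
  calc ENNReal.ofReal (∫ x, (f x - ⨍ y, f y ∂μ) ^ 2 ∂μ)
      = ∫⁻ _, ENNReal.ofReal (∫ x, (f x - ⨍ y, f y ∂μ) ^ 2 ∂μ) ∂ν := by simp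
    _ ≤ ∫⁻ y, ∫⁻ x, ENNReal.ofReal ((f x - f y) ^ 2) ∂μ ∂ν := by
      refine lintegral_mono fun y => ?_
      rw [← ofReal_integral_eq_lintegral_ofReal (f := fun x => (f x - f y) ^ 2)
        (hf.sub (memLp_const _)).integrable_sq (ae_of_all _ fun x => sq_nonneg _)]
      exact ENNReal.ofReal_le_ofReal (integral_sq_sub_average_le hf _)

lemma MeasureTheory.Measure.smul_prod_restrict_le_compProd {μ ν : Measure X} [SFinite μ]
    [SFinite ν] {κ : Kernel X X} [IsSFiniteKernel κ] {K : Set X} {c : ℝ≥0∞}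
    (h : ∀ x ∈ K, c • ν ≤ κ x) :
    c • (μ.restrict K).prod ν ≤ μ ⊗ₘ κ := by
  refine Measure.le_iff.2 fun s hs => ?_
  rw [Measure.smul_apply, Measure.prod_apply hs, Measure.compProd_apply hs, smul_eq_mul,
    ← lintegral_const_mul _ (measurable_measure_prodMk_left hs)]
  calc ∫⁻ x in K, c * ν (Prod.mk x ⁻¹' s) ∂μ ≤ ∫⁻ x in K, κ x (Prod.mk x ⁻¹' s) ∂μ :=
        setLIntegral_mono (Kernel.measurable_kernel_prodMk_left hs) fun x hx => h x hx _
    _ ≤ ∫⁻ x, κ x (Prod.mk x ⁻¹' s) ∂μ := setLIntegral_le_lintegral K _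

lemma ProbabilityTheory.Kernel.invariant_of_integral_integral_eq {κ : Kernel X X}
    [IsMarkovKernel κ] {π : Measure X} [IsFiniteMeasure π]
    (hinv : ∀ f : X → ℝ, Measurable f → (∃ C : ℝ, ∀ x, |f x| ≤ C) →
      ∫ x, (∫ y, f y ∂(κ x)) ∂π = ∫ x, f x ∂π) :
    κ.Invariant π := by
  ext A hA
  have h := hinv (A.indicator 1) (measurable_one.indicator hA)
    ⟨1, fun x => by by_cases hx : x ∈ A <;> simp [hx]⟩
  simp_rw [integral_indicator_one hA, measureReal_def] at h
  rw [integral_toReal (κ.measurable_coe hA).aemeasurable (ae_of_all _ fun x => measure_lt_top _ _)]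
    at h
  rw [Measure.bind_apply hA κ.aemeasurable]
  refine (ENNReal.toReal_eq_toReal_iff' ?_ (measure_ne_top π A)).mp h
  refine ne_top_of_le_ne_top (measure_ne_top π Set.univ) ?_
  calc ∫⁻ x, κ x A ∂π ≤ ∫⁻ _, 1 ∂π := lintegral_mono fun x => prob_le_one
    _ = π Set.univ := by simp

lemma MeasureTheory.Measure.measurePreserving_fst_compProd (μ : Measure X) [SFinite μ]
    (κ : Kernel X X) [IsMarkovKernel κ] : MeasurePreserving Prod.fst (μ ⊗ₘ κ) μ :=
  ⟨measurable_fst, Measure.fst_compProd μ κ⟩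

lemma ProbabilityTheory.Kernel.Invariant.measurePreserving_snd_compProd {κ : Kernel X X}
    [IsSFiniteKernel κ] {π : Measure X} [SFinite π] (hκ : κ.Invariant π) :
    MeasurePreserving Prod.snd (π ⊗ₘ κ) π :=
  ⟨measurable_snd, (Measure.snd_compProd π κ).trans hκ⟩

lemma ProbabilityTheory.Kernel.Invariant.integral_sq_sub_compProd {κ : Kernel X X}
    [IsMarkovKernel κ] {π : Measure X} [IsFiniteMeasure π] (hκ : κ.Invariant π) {f : X → ℝ}
    (hf : MemLp f 2 π) :
    ∫ p, (f p.1 - f p.2) ^ 2 ∂(π ⊗ₘ κ) = 2 * ∫ x, f x * (f x - ∫ y, f y ∂κ x) ∂π := by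
  have hfst := Measure.measurePreserving_fst_compProd π κ
  have hsnd := hκ.measurePreserving_snd_compProd
  have hf₁ : MemLp (fun p : X × X => f p.1) 2 (π ⊗ₘ κ) := hf.comp_measurePreserving hfst
  have hf₂ : MemLp (fun p : X × X => f p.2) 2 (π ⊗ₘ κ) := hf.comp_measurePreserving hsnd
  have hcross : Integrable (fun p : X × X => f p.1 * (f p.1 - f p.2)) (π ⊗ₘ κ) :=
    hf₁.integrable_mul (hf₁.sub hf₂)
  have hmarginals : ∫ p, f p.2 ^ 2 ∂(π ⊗ₘ κ) = ∫ p, f p.1 ^ 2 ∂(π ⊗ₘ κ) := by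
    have hφ : ∀ {φ : X × X → X}, MeasurePreserving φ (π ⊗ₘ κ) π →
        ∫ p, f (φ p) ^ 2 ∂(π ⊗ₘ κ) = ∫ x, f x ^ 2 ∂π := fun hφ => by
      conv_rhs => rw [← hφ.map_eq]
      exact (integral_map hφ.aemeasurable
        (hφ.map_eq ▸ hf.integrable_sq.aestronglyMeasurable)).symm
    rw [hφ hsnd, hφ hfst]
  have hinner : ∀ᵐ x ∂π, ∫ y, f x * (f x - f y) ∂κ x = f x * (f x - ∫ y, f y ∂κ x) := by
    have hfκπ : Integrable f (κ ∘ₘ π) := hκ.symm ▸ hf.integrable one_le_two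
    filter_upwards [Measure.ae_integrable_of_integrable_comp hfκπ] with x hx
    rw [integral_const_mul, integral_sub (integrable_const _) hx, MeasureTheory.integral_const]
    simp
  calc ∫ p, (f p.1 - f p.2) ^ 2 ∂(π ⊗ₘ κ)
      = ∫ p, (2 * (f p.1 * (f p.1 - f p.2)) + (f p.2 ^ 2 - f p.1 ^ 2)) ∂(π ⊗ₘ κ) :=
        integral_congr_ae (ae_of_all _ fun p => by ring)
    _ = 2 * ∫ p, f p.1 * (f p.1 - f p.2) ∂(π ⊗ₘ κ) := by
        rw [integral_add (g := fun p => f p.2 ^ 2 - f p.1 ^ 2) (hcross.const_mul 2)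
            (hf₂.integrable_sq.sub hf₁.integrable_sq),
          integral_sub hf₂.integrable_sq hf₁.integrable_sq, hmarginals, sub_self, add_zero,
          integral_const_mul]
    _ = 2 * ∫ x, f x * (f x - ∫ y, f y ∂κ x) ∂π := by
        rw [Measure.integral_compProd hcross, integral_congr_ae hinner]

lemma setIntegral_sq_sub_setAverage_le_of_minorization {κ : Kernel X X} [IsMarkovKernel κ]
    {π : Measure X} [IsFiniteMeasure π] (hκ : κ.Invariant π) {K : Set X} {α : ℝ} (hα : 0 < α)
    {ν : Measure X} [IsProbabilityMeasure ν] (hminor : ∀ x ∈ K, ENNReal.ofReal α • ν ≤ κ x)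
    {f : X → ℝ} (hf : MemLp f 2 π) :
    ∫ x in K, (f x - ⨍ y in K, f y ∂π) ^ 2 ∂π
      ≤ (2 / α) * ∫ x, f x * (f x - ∫ y, f y ∂κ x) ∂π := by
  have hle := Measure.smul_prod_restrict_le_compProd (μ := π) hminor
  have hF : Integrable (fun p : X × X => (f p.1 - f p.2) ^ 2) (π ⊗ₘ κ) :=
    ((hf.comp_measurePreserving (Measure.measurePreserving_fst_compProd π κ)).sub
      (hf.comp_measurePreserving hκ.measurePreserving_snd_compProd)).integrable_sq
  have hac : (π.restrict K).prod ν ≪ π ⊗ₘ κ :=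
    (Measure.absolutelyContinuous_smul (ENNReal.ofReal_ne_zero_iff.2 hα)).trans
      (Measure.absolutelyContinuous_of_le hle)
  have hbound : ENNReal.ofReal (α * ∫ x in K, (f x - ⨍ y in K, f y ∂π) ^ 2 ∂π)
      ≤ ENNReal.ofReal (2 * ∫ x, f x * (f x - ∫ y, f y ∂κ x) ∂π) := by
    rw [← hκ.integral_sq_sub_compProd hf, ofReal_integral_eq_lintegral_ofReal hF
      (ae_of_all _ fun p => sq_nonneg _), ENNReal.ofReal_mul hα.le]
    calc ENNReal.ofReal α * ENNReal.ofReal (∫ x in K, (f x - ⨍ y in K, f y ∂π) ^ 2 ∂π)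
        ≤ ENNReal.ofReal α * ∫⁻ p, ENNReal.ofReal ((f p.1 - f p.2) ^ 2) ∂(π.restrict K).prod ν :=
          mul_le_mul_right (ofReal_integral_sq_sub_average_le_lintegral_prod (hf.restrict K)
            (hF.aemeasurable.ennreal_ofReal.mono_ac hac)) _
      _ = ∫⁻ p, ENNReal.ofReal ((f p.1 - f p.2) ^ 2)
            ∂(ENNReal.ofReal α • (π.restrict K).prod ν) := by
          rw [lintegral_smul_measure, smul_eq_mul]
      _ ≤ ∫⁻ p, ENNReal.ofReal ((f p.1 - f p.2) ^ 2) ∂(π ⊗ₘ κ) := lintegral_mono' hle le_rfl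
  have hD : 0 ≤ 2 * ∫ x, f x * (f x - ∫ y, f y ∂κ x) ∂π :=
    hκ.integral_sq_sub_compProd hf ▸ integral_nonneg fun p => sq_nonneg _
  rw [div_mul_eq_mul_div, le_div_iff₀' hα]
  exact (ENNReal.ofReal_le_ofReal_iff hD).1 hbound

end

theorem claim2_minorization_bound_general
    {X : Type*} [MeasurableSpace X]
    (κ : Kernel X X) [IsMarkovKernel κ]
    (π : Measure X) [IsProbabilityMeasure π]
    -- invariance: ∫ Pf dπ = ∫ f dπ for all bounded measurable f
    (hinv : ∀ f : X → ℝ, Measurable f → (∃ C : ℝ, ∀ x, |f x| ≤ C) →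
      ∫ x, (∫ y, f y ∂(κ x)) ∂π = ∫ x, f x ∂π)
    (K : Set X)
    (α : ℝ) (hα : 0 < α) (ν : Measure X) [IsProbabilityMeasure ν]
    -- minorization condition: P 1_A(x) ≥ α ν(A) 1_K(x)
    (hminor : ∀ A : Set X, MeasurableSet A → ∀ x ∈ K, ENNReal.ofReal α * ν A ≤ κ x A) :
    ∀ f : X → ℝ, MemLp f 2 π →
      (∫ x in K, (f x - (π K).toReal⁻¹ * ∫ y in K, f y ∂π) ^ 2 ∂π)
        ≤ (2 / α) * ∫ x, f x * (f x - ∫ y, f y ∂(κ x)) ∂π := by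
  intro f hf
  have hminor' : ∀ x ∈ K, ENNReal.ofReal α • ν ≤ κ x := fun x hx =>
    Measure.le_iff.2 fun A hA => hminor A hA x hx
  simpa only [setAverage_eq, smul_eq_mul, measureReal_def] using
    setIntegral_sq_sub_setAverage_le_of_minorization
      (Kernel.invariant_of_integral_integral_eq hinv) hα hminor' hf

/-- **Claim 2** in the proof of Theorem 1: under the minorization condition on the set `K`
with `π K > 0`, for every `f ∈ L²(π)`, with `m` the mean of `f` over `K`,
`∫_K (f - m)² dπ ≤ (2/α) ⟨f, (I - P) f⟩_π`. -/
theorem claim2_minorization_bound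
    {X : Type*} [MeasurableSpace X]
    (κ : Kernel X X) [IsMarkovKernel κ]
    (π : Measure X) [IsProbabilityMeasure π]
    -- invariance: ∫ Pf dπ = ∫ f dπ for all bounded measurable f
    (hinv : ∀ f : X → ℝ, Measurable f → (∃ C : ℝ, ∀ x, |f x| ≤ C) →
      ∫ x, (∫ y, f y ∂(κ x)) ∂π = ∫ x, f x ∂π)
    (K : Set X) (hK : MeasurableSet K) (hπK : 0 < π K)
    (α : ℝ) (hα : 0 < α) (ν : Measure X) [IsProbabilityMeasure ν]
    -- minorization condition: P 1_A(x) ≥ α ν(A) 1_K(x)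
    (hminor : ∀ A : Set X, MeasurableSet A → ∀ x ∈ K, ENNReal.ofReal α * ν A ≤ κ x A) :
    ∀ f : X → ℝ, MemLp f 2 π →
      (∫ x in K, (f x - (π K).toReal⁻¹ * ∫ y in K, f y ∂π) ^ 2 ∂π)
        ≤ (2 / α) * ∫ x, f x * (f x - ∫ y, f y ∂(κ x)) ∂π :=
  claim2_minorization_bound_general κ π hinv K α hα ν hminor
end

section
/- (Proposition 1, drift part: the drift condition propagates to P².) Suppose the Markov operator P satisfies the drift condition PV(x) ≤ (1−λ)V(x) + b·1_K(x) for all x, where V : X → [1, ∞) is measurable, λ ∈ (0,1], b ∈ [0, ∞), and K = {x ∈ X : V(x) ≤ R} with R > 2b/λ. Then P²V(x) ≤ (1−λ′)V(x) + b′·1_K(x) for all x, where λ′ = λ(3/2 − λ) and b′ = (2−λ)b. -/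
/-!
Bounding the indicator by `1`, the drift condition gives `PV ≤ (1-λ)V + b`; applying `P` once
more, `P²V ≤ (1-λ)PV + b ≤ (1-λ)²V + (1-λ)b 1_K + b`. On `K` this is the claim since
`(1-λ)² ≤ 1-λ'`. Off `K` we have `b < λV/2` because `V > R > 2b/λ`, and
`(1-λ)² + λ/2 = 1-λ'`.
-/

open MeasureTheory ProbabilityTheory

open scoped ENNReal

theorem lintegral_le_mul_lintegral_add {α : Type*} [MeasurableSpace α] {μ : Measure α}
    [IsProbabilityMeasure μ] {f g : α → ℝ≥0∞} {a c : ℝ≥0∞} (ha : a ≠ ∞)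
    (h : ∀ y, g y ≤ a * f y + c) :
    ∫⁻ y, g y ∂μ ≤ a * ∫⁻ y, f y ∂μ + c := by
  calc ∫⁻ y, g y ∂μ ≤ ∫⁻ y, a * f y + c ∂μ := lintegral_mono h
    _ = a * ∫⁻ y, f y ∂μ + c := by
      rw [lintegral_add_right _ measurable_const, lintegral_const_mul' _ _ ha]
      simp

namespace ENNReal

theorem ofReal_mul_add_mul_le {a b s : ℝ} (ha : 0 ≤ a) (hb : 0 ≤ b) (hs : s ≤ 1) (v : ℝ) :
    ENNReal.ofReal (a * v + b * s) ≤ ENNReal.ofReal a * ENNReal.ofReal v + ENNReal.ofReal b :=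
  calc ENNReal.ofReal (a * v + b * s) ≤ ENNReal.ofReal (a * v) + ENNReal.ofReal (b * s) :=
        ofReal_add_le
    _ ≤ ENNReal.ofReal a * ENNReal.ofReal v + ENNReal.ofReal b := by
      rw [ofReal_mul ha]
      gcongr
      exact mul_le_of_le_one_right hb hs

end ENNReal

theorem iterated_drift_bound_le {X : Type*} {V : X → ℝ} {lam b R : ℝ} (hlam : 0 < lam)
    (hR : 2 * b / lam < R) {x : X} (hVx : 0 ≤ V x) :
    (1 - lam) * ((1 - lam) * V x + b * Set.indicator {x | V x ≤ R} 1 x) + b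
      ≤ (1 - lam * (3 / 2 - lam)) * V x + (2 - lam) * b * Set.indicator {x | V x ≤ R} 1 x := by
  by_cases hK : V x ≤ R
  · simp only [Set.indicator_of_mem (show x ∈ {x | V x ≤ R} from hK), Pi.one_apply]
    nlinarith
  · have h2b : 2 * b < lam * V x := (div_lt_iff₀' hlam).mp (hR.trans (not_le.mp hK))
    simp only [Set.indicator_of_notMem (show x ∉ {x | V x ≤ R} from hK)]
    nlinarith

theorem drift_condition_for_P_squared_general
    {X : Type*} [MeasurableSpace X]
    (κ : Kernel X X) [IsMarkovKernel κ]
    (V : X → ℝ) (hV1 : ∀ x, 1 ≤ V x)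
    (lam b R : ℝ) (hlam : 0 < lam) (hlam1 : lam ≤ 1) (hb : 0 ≤ b)
    (hR : 2 * b / lam < R)
    -- drift condition (v4) with K = {x | V x ≤ R}
    (hdrift : ∀ x, ∫⁻ y, ENNReal.ofReal (V y) ∂(κ x)
      ≤ ENNReal.ofReal ((1 - lam) * V x + b * Set.indicator {x | V x ≤ R} 1 x)) :
    ∀ x, ∫⁻ y, (∫⁻ z, ENNReal.ofReal (V z) ∂(κ y)) ∂(κ x)
      ≤ ENNReal.ofReal ((1 - lam * (3 / 2 - lam)) * V x
          + (2 - lam) * b * Set.indicator {x | V x ≤ R} 1 x) := by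
  intro x
  have hlam0 : 0 ≤ 1 - lam := sub_nonneg.mpr hlam1
  have hVx : 0 ≤ V x := zero_le_one.trans (hV1 x)
  have hind : ∀ y, Set.indicator {x | V x ≤ R} (1 : X → ℝ) y ≤ 1 := fun y =>
    Set.indicator_le_self' (fun _ _ => zero_le_one) y
  have hPV : ∀ y, ∫⁻ z, ENNReal.ofReal (V z) ∂(κ y)
      ≤ ENNReal.ofReal (1 - lam) * ENNReal.ofReal (V y) + ENNReal.ofReal b := fun y =>
    (hdrift y).trans (ENNReal.ofReal_mul_add_mul_le hlam0 hb (hind y) (V y))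
  calc ∫⁻ y, (∫⁻ z, ENNReal.ofReal (V z) ∂(κ y)) ∂(κ x)
      ≤ ENNReal.ofReal (1 - lam) * ∫⁻ y, ENNReal.ofReal (V y) ∂(κ x) + ENNReal.ofReal b :=
        lintegral_le_mul_lintegral_add ENNReal.ofReal_ne_top hPV
    _ ≤ ENNReal.ofReal (1 - lam) * ENNReal.ofReal ((1 - lam) * V x
          + b * Set.indicator {x | V x ≤ R} 1 x) + ENNReal.ofReal b := by
        gcongr
        exact hdrift x
    _ = ENNReal.ofReal ((1 - lam) * ((1 - lam) * V x
          + b * Set.indicator {x | V x ≤ R} 1 x) + b) := by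
        have hind0 : 0 ≤ Set.indicator {x | V x ≤ R} (1 : X → ℝ) x :=
          Set.indicator_nonneg (fun _ _ => zero_le_one) x
        rw [← ENNReal.ofReal_mul hlam0, ← ENNReal.ofReal_add
          (mul_nonneg hlam0 (add_nonneg (mul_nonneg hlam0 hVx) (mul_nonneg hb hind0))) hb]
    _ ≤ _ := ENNReal.ofReal_le_ofReal (iterated_drift_bound_le hlam hR hVx)

/-- **Proposition 1, drift part.** If `P` satisfies the drift condition
`PV ≤ (1-λ)V + b 1_K` with `K = {V ≤ R}` and `R > 2b/λ`, then `P²` satisfies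
`P²V ≤ (1-λ')V + b' 1_K` with `λ' = λ(3/2 - λ)` and `b' = (2-λ)b`. -/
theorem drift_condition_for_P_squared
    {X : Type*} [MeasurableSpace X]
    (κ : Kernel X X) [IsMarkovKernel κ]
    (V : X → ℝ) (hVmeas : Measurable V) (hV1 : ∀ x, 1 ≤ V x)
    (lam b R : ℝ) (hlam : 0 < lam) (hlam1 : lam ≤ 1) (hb : 0 ≤ b)
    (hR : 2 * b / lam < R)
    -- drift condition (v4) with K = {x | V x ≤ R}
    (hdrift : ∀ x, ∫⁻ y, ENNReal.ofReal (V y) ∂(κ x)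
      ≤ ENNReal.ofReal ((1 - lam) * V x + b * Set.indicator {x | V x ≤ R} 1 x)) :
    ∀ x, ∫⁻ y, (∫⁻ z, ENNReal.ofReal (V z) ∂(κ y)) ∂(κ x)
      ≤ ENNReal.ofReal ((1 - lam * (3 / 2 - lam)) * V x
          + (2 - lam) * b * Set.indicator {x | V x ≤ R} 1 x) :=
  drift_condition_for_P_squared_general κ V hV1 lam b R hlam hlam1 hb hR hdrift
end

section
/- (Proposition 1, spectral gap part.) Suppose the probability measure π is reversible and invariant for the Markov operator P, that π(K) > 0 and ν(K) > 0, and that P satisfies the drift condition PV(x) ≤ (1−λ)V(x) + b·1_K(x) and the minorization condition P1_A(x) ≥ α ν(A) 1_K(x) for all A ∈ ℬ and x, where V : X → [1, ∞) is measurable, λ ∈ (0,1], b ∈ [0, ∞), α > 0, ν is a probability measure, and K = {x ∈ X : V(x) ≤ R} with R > 2b/λ. Then for every f ∈ L²(π) with ∫ f dπ = 0, ‖Pf‖_{2,π} ≤ (1 − β⁺)^{1/2} ‖f‖_{2,π}, where β⁺ = λ(3/2 − λ) / (1 + 2b(2−λ)/(α² ν(K))). -/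
open MeasureTheory ProbabilityTheory
open scoped ENNReal NNReal

set_option linter.unusedSectionVars false
namespace SGAux
variable {X : Type*} [MeasurableSpace X]

lemma sq_integral_le (μ : Measure X) [IsProbabilityMeasure μ] {h : X → ℝ}
    (hh : MemLp h 2 μ) : (∫ x, h x ∂μ) ^ 2 ≤ ∫ x, h x ^ 2 ∂μ := by
  have h0 := variance_nonneg h μ
  rw [variance_eq_sub hh] at h0
  simp only [Pi.pow_apply] at h0
  linarith

lemma memL2_bound (μ : Measure X) [IsProbabilityMeasure μ] {u : X → ℝ} (hu : Measurable u)
    (C : ℝ) (hC : ∀ x, |u x| ≤ C) : MemLp u 2 μ :=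
  MemLp.of_bound hu.aestronglyMeasurable C (Filter.Eventually.of_forall fun x => by
    simpa [Real.norm_eq_abs] using hC x)

lemma Pmeas (κ : Kernel X X) [IsSFiniteKernel κ] {h : X → ℝ} (hh : Measurable h) :
    Measurable fun x => ∫ y, h y ∂κ x := by
  have := MeasureTheory.StronglyMeasurable.integral_kernel_prod_right' (κ := κ)
    (f := fun p => h p.2) ((hh.comp measurable_snd).stronglyMeasurable)
  exact this.measurable

section Inv
variable (κ : Kernel X X) [IsMarkovKernel κ] (π : Measure X) [IsProbabilityMeasure π]

lemma bind_eq
    (hinv : ∀ f : X → ℝ, Measurable f → (∃ C : ℝ, ∀ x, |f x| ≤ C) →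
      ∫ x, (∫ y, f y ∂(κ x)) ∂π = ∫ x, f x ∂π) :
    π.bind (fun x => κ x) = π := by
  ext s hs
  rw [Measure.bind_apply hs κ.measurable.aemeasurable]
  have h1 := hinv (Set.indicator s 1) (measurable_one.indicator hs)
    ⟨1, fun x => by by_cases hx : x ∈ s <;> simp [Set.indicator_apply, hx]⟩
  simp_rw [integral_indicator_one hs] at h1
  have h2 : ∫ x, (κ x s).toReal ∂π = (∫⁻ x, κ x s ∂π).toReal :=
    integral_toReal (κ.measurable_coe hs).aemeasurable
      (Filter.Eventually.of_forall fun x => measure_lt_top _ _)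
  have h3 : ∫⁻ x, κ x s ∂π ≠ ⊤ := by
    refine ne_top_of_le_ne_top ?_ (lintegral_mono fun x => prob_le_one (μ := κ x) (s := s))
    simp
  simp only [Measure.real] at h1
  rw [h2] at h1
  exact (ENNReal.toReal_eq_toReal_iff' h3 (measure_ne_top π s)).mp h1

lemma lin_inv (hbind : π.bind (fun x => κ x) = π) {g : X → ℝ≥0∞} (hg : Measurable g) :
    ∫⁻ x, (∫⁻ y, g y ∂(κ x)) ∂π = ∫⁻ y, g y ∂π := by
  conv_rhs => rw [← hbind]
  rw [Measure.lintegral_bind κ.measurable.aemeasurable hg.aemeasurable]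

end Inv

section Comp
variable (κ : Kernel X X) [IsMarkovKernel κ]

lemma integral_nonneg_eq (μ : Measure X) {g : X → ℝ} (hg : Measurable g) (hg0 : ∀ z, 0 ≤ g z) :
    ∫ z, g z ∂μ = (∫⁻ z, ENNReal.ofReal (g z) ∂μ).toReal := by
  rw [integral_eq_lintegral_of_nonneg_ae (Filter.Eventually.of_forall hg0)
    hg.aestronglyMeasurable]

lemma integral_comp_nonneg {g : X → ℝ} (hg : Measurable g) (hg0 : ∀ z, 0 ≤ g z) (x : X)
    (hfin : ∫⁻ z, ENNReal.ofReal (g z) ∂((κ ∘ₖ κ) x) ≠ ⊤) :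
    ∫ z, g z ∂((κ ∘ₖ κ) x) = ∫ y, (∫ z, g z ∂(κ y)) ∂(κ x) := by
  have hgE : Measurable fun z => ENNReal.ofReal (g z) := hg.ennreal_ofReal
  have hL : Measurable fun y => ∫⁻ z, ENNReal.ofReal (g z) ∂(κ y) := hgE.lintegral_kernel
  have hiter : ∫⁻ z, ENNReal.ofReal (g z) ∂((κ ∘ₖ κ) x)
      = ∫⁻ y, (∫⁻ z, ENNReal.ofReal (g z) ∂(κ y)) ∂(κ x) :=
    Kernel.lintegral_comp κ κ x hgE
  have haefin : ∀ᵐ y ∂(κ x), (∫⁻ z, ENNReal.ofReal (g z) ∂(κ y)) < ⊤ := by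
    refine ae_lt_top hL ?_
    rw [← hiter]; exact hfin
  rw [integral_nonneg_eq _ hg hg0, hiter]
  rw [← integral_toReal (hL.aemeasurable) haefin]
  refine integral_congr_ae ?_
  filter_upwards with y
  rw [integral_nonneg_eq _ hg hg0]

lemma integrable_P_nonneg (x : X) {g : X → ℝ} (hg : Measurable g) (hg0 : ∀ z, 0 ≤ g z)
    (hfin : ∫⁻ y, (∫⁻ z, ENNReal.ofReal (g z) ∂(κ y)) ∂(κ x) ≠ ⊤) :
    Integrable (fun y => ∫ z, g z ∂(κ y)) (κ x) := by
  have hL : Measurable fun y => ∫⁻ z, ENNReal.ofReal (g z) ∂(κ y) :=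
    hg.ennreal_ofReal.lintegral_kernel
  have heq : (fun y => ∫ z, g z ∂(κ y))
      = fun y => (∫⁻ z, ENNReal.ofReal (g z) ∂(κ y)).toReal := by
    funext y; exact integral_nonneg_eq _ hg hg0
  rw [heq]
  refine ⟨hL.ennreal_toReal.aestronglyMeasurable, ?_⟩
  have hb : ∀ y, ‖(∫⁻ z, ENNReal.ofReal (g z) ∂(κ y)).toReal‖ₑ
      ≤ ∫⁻ z, ENNReal.ofReal (g z) ∂(κ y) := fun y => by
    rw [Real.enorm_eq_ofReal ENNReal.toReal_nonneg]; exact ENNReal.ofReal_toReal_le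
  exact lt_of_le_of_lt (lintegral_mono hb) hfin.lt_top

lemma integral_comp_eq {h : X → ℝ} (hh : Measurable h) (x : X)
    (hfin : ∫⁻ z, ENNReal.ofReal |h z| ∂((κ ∘ₖ κ) x) ≠ ⊤) :
    ∫ z, h z ∂((κ ∘ₖ κ) x) = ∫ y, (∫ z, h z ∂(κ y)) ∂(κ x) := by
  have hp : Measurable fun z => max (h z) 0 := hh.max measurable_const
  have hm : Measurable fun z => max (-h z) 0 := hh.neg.max measurable_const
  have hple : ∀ z, ENNReal.ofReal (max (h z) 0) ≤ ENNReal.ofReal |h z| :=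
    fun z => ENNReal.ofReal_le_ofReal (by simp [le_abs_self, abs_nonneg, max_le_iff, abs_nonneg])
  have hmle : ∀ z, ENNReal.ofReal (max (-h z) 0) ≤ ENNReal.ofReal |h z| :=
    fun z => ENNReal.ofReal_le_ofReal (by
      have := neg_abs_le (h z); simp [max_le_iff, abs_nonneg]; linarith)
  have hpfin : ∫⁻ z, ENNReal.ofReal (max (h z) 0) ∂((κ ∘ₖ κ) x) ≠ ⊤ :=
    ne_top_of_le_ne_top hfin (lintegral_mono hple)
  have hmfin : ∫⁻ z, ENNReal.ofReal (max (-h z) 0) ∂((κ ∘ₖ κ) x) ≠ ⊤ :=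
    ne_top_of_le_ne_top hfin (lintegral_mono hmle)
  have hIp : Integrable (fun z => max (h z) 0) ((κ ∘ₖ κ) x) := by
    refine ⟨hp.aestronglyMeasurable, ?_⟩
    have : (∫⁻ z, ‖max (h z) 0‖ₑ ∂((κ ∘ₖ κ) x)) < ⊤ := by
      rw [lintegral_congr fun z => Real.enorm_eq_ofReal (le_max_right _ _)]
      exact hpfin.lt_top
    exact this
  have hIm : Integrable (fun z => max (-h z) 0) ((κ ∘ₖ κ) x) := by
    refine ⟨hm.aestronglyMeasurable, ?_⟩
    have : (∫⁻ z, ‖max (-h z) 0‖ₑ ∂((κ ∘ₖ κ) x)) < ⊤ := by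
      rw [lintegral_congr fun z => Real.enorm_eq_ofReal (le_max_right _ _)]
      exact hmfin.lt_top
    exact this
  have hiterp := Kernel.lintegral_comp κ κ x hp.ennreal_ofReal
  have hiterm := Kernel.lintegral_comp κ κ x hm.ennreal_ofReal
  have hdec : ∀ z, h z = max (h z) 0 - max (-h z) 0 := fun z => by
    rcases le_or_gt 0 (h z) with hz | hz
    · rw [max_eq_left hz, max_eq_right (by linarith)]; ring
    · rw [max_eq_right hz.le, max_eq_left (by linarith)]; ring
  have step1 : ∫ z, h z ∂((κ ∘ₖ κ) x)
      = ∫ z, max (h z) 0 ∂((κ ∘ₖ κ) x) - ∫ z, max (-h z) 0 ∂((κ ∘ₖ κ) x) := by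
    rw [← integral_sub hIp hIm]
    exact integral_congr_ae (Filter.Eventually.of_forall fun z => hdec z)
  have hIP : Integrable (fun y => ∫ z, max (h z) 0 ∂(κ y)) (κ x) :=
    integrable_P_nonneg κ x hp (fun z => le_max_right _ _) (by rw [← hiterp]; exact hpfin)
  have hIM : Integrable (fun y => ∫ z, max (-h z) 0 ∂(κ y)) (κ x) :=
    integrable_P_nonneg κ x hm (fun z => le_max_right _ _) (by rw [← hiterm]; exact hmfin)
  have haep : ∀ᵐ y ∂(κ x), (∫⁻ z, ENNReal.ofReal (max (h z) 0) ∂(κ y)) < ⊤ :=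
    ae_lt_top hp.ennreal_ofReal.lintegral_kernel (by rw [← hiterp]; exact hpfin)
  have haem : ∀ᵐ y ∂(κ x), (∫⁻ z, ENNReal.ofReal (max (-h z) 0) ∂(κ y)) < ⊤ :=
    ae_lt_top hm.ennreal_ofReal.lintegral_kernel (by rw [← hiterm]; exact hmfin)
  rw [step1, integral_comp_nonneg κ hp (fun z => le_max_right _ _) x hpfin,
    integral_comp_nonneg κ hm (fun z => le_max_right _ _) x hmfin, ← integral_sub hIP hIM]
  refine integral_congr_ae ?_
  filter_upwards [haep, haem] with y hyp hym
  have hIyp : Integrable (fun z => max (h z) 0) (κ y) := by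
    refine ⟨hp.aestronglyMeasurable, ?_⟩
    have : (∫⁻ z, ‖max (h z) 0‖ₑ ∂(κ y)) < ⊤ := by
      rw [lintegral_congr fun z => Real.enorm_eq_ofReal (le_max_right _ _)]
      exact hyp
    exact this
  have hIym : Integrable (fun z => max (-h z) 0) (κ y) := by
    refine ⟨hm.aestronglyMeasurable, ?_⟩
    have : (∫⁻ z, ‖max (-h z) 0‖ₑ ∂(κ y)) < ⊤ := by
      rw [lintegral_congr fun z => Real.enorm_eq_ofReal (le_max_right _ _)]
      exact hym
    exact this
  rw [← integral_sub hIyp hIym]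
  exact (integral_congr_ae (Filter.Eventually.of_forall fun z => hdec z)).symm

end Comp

section Swap
variable (κ : Kernel X X) [IsMarkovKernel κ] (π : Measure X) [IsProbabilityMeasure π]

lemma Pind_eq (u : Set X) (hu : MeasurableSet u) (x : X) :
    ∫ y, Set.indicator u (1 : X → ℝ) y ∂(κ x) = (κ x u).toReal :=
  integral_indicator_one hu

lemma PQ_toReal (t : Set X) (ht : MeasurableSet t) (x : X) :
    ∫ y, (κ y t).toReal ∂(κ x) = ((κ ∘ₖ κ) x t).toReal := by
  rw [Kernel.comp_apply' _ _ _ ht]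
  exact integral_toReal ((κ.measurable_coe ht).aemeasurable)
    (Filter.Eventually.of_forall fun y => measure_lt_top _ _)

lemma setL_toReal (t : Set X) (ht : MeasurableSet t) (s : Set X) (hs : MeasurableSet s) :
    ∫ x in s, ((κ ∘ₖ κ) x t).toReal ∂π = (∫⁻ x in s, (κ ∘ₖ κ) x t ∂π).toReal :=
  integral_toReal (((κ ∘ₖ κ).measurable_coe ht).aemeasurable)
    (Filter.Eventually.of_forall fun y => measure_lt_top _ _)

lemma Qrev
    (hrev : ∀ f g : X → ℝ, MemLp f 2 π → MemLp g 2 π →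
      ∫ x, f x * (∫ y, g y ∂(κ x)) ∂π = ∫ x, (∫ y, f y ∂(κ x)) * g x ∂π)
    {s t : Set X} (hs : MeasurableSet s) (ht : MeasurableSet t) :
    ∫⁻ x in s, (κ ∘ₖ κ) x t ∂π = ∫⁻ x in t, (κ ∘ₖ κ) x s ∂π := by
  have hmeas : ∀ u : Set X, MeasurableSet u → Measurable fun x => (κ x u).toReal :=
    fun u hu => (κ.measurable_coe hu).ennreal_toReal
  have hbd : ∀ (u : Set X) (x : X), |(κ x u).toReal| ≤ 1 := fun u x => by
    rw [abs_of_nonneg ENNReal.toReal_nonneg]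
    exact ENNReal.toReal_le_of_le_ofReal zero_le_one (by simpa using prob_le_one)
  have hL2 : ∀ u : Set X, MeasurableSet u → MemLp (fun x => (κ x u).toReal) 2 π :=
    fun u hu => memL2_bound π (hmeas u hu) 1 (hbd u)
  have hL2ind : ∀ u : Set X, MeasurableSet u → MemLp (Set.indicator u (1 : X → ℝ)) 2 π :=
    fun u hu => memL2_bound π (measurable_one.indicator hu) 1
      (fun x => by by_cases hx : x ∈ u <;> simp [Set.indicator_apply, hx])
  have h1 := hrev (Set.indicator s (1 : X → ℝ)) (fun y => (κ y t).toReal)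
    (hL2ind s hs) (hL2 t ht)
  have h2 := hrev (Set.indicator t (1 : X → ℝ)) (fun y => (κ y s).toReal)
    (hL2ind t ht) (hL2 s hs)
  simp_rw [PQ_toReal κ t ht, PQ_toReal κ s hs, Pind_eq κ s hs, Pind_eq κ t ht] at h1 h2
  have hmul : ∀ x, (κ x s).toReal * (κ x t).toReal = (κ x t).toReal * (κ x s).toReal :=
    fun x => mul_comm _ _
  rw [integral_congr_ae (Filter.Eventually.of_forall hmul)] at h1
  rw [← h2] at h1
  have hind : ∀ (u : Set X) (hu : MeasurableSet u) (v : X → ℝ),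
      ∫ x, Set.indicator u (1 : X → ℝ) x * v x ∂π = ∫ x in u, v x ∂π := by
    intro u hu v
    rw [← integral_indicator hu]
    refine integral_congr_ae (Filter.Eventually.of_forall fun x => ?_)
    by_cases hx : x ∈ u <;> simp [Set.indicator_apply, hx]
  rw [hind s hs _, hind t ht _] at h1
  rw [setL_toReal κ π t ht s hs, setL_toReal κ π s hs t ht] at h1
  have hne : ∀ (u v : Set X), MeasurableSet u → MeasurableSet v →
      ∫⁻ x in u, (κ ∘ₖ κ) x v ∂π ≠ ⊤ := by
    intro u v hu hv
    refine ne_top_of_le_ne_top ?_ (lintegral_mono fun x => prob_le_one)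
    simp [lintegral_one]
  exact (ENNReal.toReal_eq_toReal_iff' (hne s t hs ht) (hne t s ht hs)).mp h1

lemma swap_inv
    (hrev : ∀ f g : X → ℝ, MemLp f 2 π → MemLp g 2 π →
      ∫ x, f x * (∫ y, g y ∂(κ x)) ∂π = ∫ x, (∫ y, f y ∂(κ x)) * g x ∂π) :
    (π ⊗ₘ (κ ∘ₖ κ)).map Prod.swap = π ⊗ₘ (κ ∘ₖ κ) := by
  haveI : IsProbabilityMeasure ((π ⊗ₘ (κ ∘ₖ κ)).map Prod.swap) :=
    Measure.isProbabilityMeasure_map measurable_swap.aemeasurable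
  refine ext_of_generate_finite _ generateFrom_prod.symm isPiSystem_prod ?_ (by simp)
  rintro _ ⟨u, hu, v, hv, rfl⟩
  simp only [Set.mem_setOf_eq] at hu hv
  rw [Measure.map_apply measurable_swap ((hu.prod hv)), Set.preimage_swap_prod,
    Measure.compProd_apply_prod hv hu, Measure.compProd_apply_prod hu hv]
  exact Qrev κ π hrev hv hu

end Swap


section Main
variable (κ : Kernel X X) [IsMarkovKernel κ] (π : Measure X) [IsProbabilityMeasure π]

lemma amgm_weight (a c v1 v2 : ℝ) (h1 : 0 < v1) (h2 : 0 < v2) :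
    |2 * a * c| ≤ a ^ 2 * v2 / v1 + c ^ 2 * v1 / v2 := by
  rw [div_add_div _ _ h1.ne' h2.ne', le_div_iff₀ (mul_pos h1 h2)]
  rcases abs_cases (2 * a * c) with ⟨he, _⟩ | ⟨he, _⟩ <;> rw [he] <;>
    nlinarith [sq_nonneg (a * v2 - c * v1), sq_nonneg (a * v2 + c * v1)]

set_option maxHeartbeats 2000000 in
lemma main_contraction
    (hbind : π.bind (fun x => κ x) = π)
    (hrev : ∀ f g : X → ℝ, MemLp f 2 π → MemLp g 2 π →
      ∫ x, f x * (∫ y, g y ∂(κ x)) ∂π = ∫ x, (∫ y, f y ∂(κ x)) * g x ∂π)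
    (V : X → ℝ) (hVmeas : Measurable V) (hV1 : ∀ x, 1 ≤ V x)
    (lam b R : ℝ) (hlam : 0 < lam) (hlam1 : lam ≤ 1) (hb : 0 ≤ b) (hR : 2 * b / lam < R)
    (hR0 : 0 < R)
    (α : ℝ) (hα : 0 < α) (ν : Measure X) [IsProbabilityMeasure ν]
    (hνK : 0 < ν {x | V x ≤ R})
    (hdrift : ∀ x, ∫⁻ y, ENNReal.ofReal (V y) ∂(κ x)
      ≤ ENNReal.ofReal ((1 - lam) * V x + b * Set.indicator {x | V x ≤ R} 1 x))
    (hminor : ∀ A : Set X, MeasurableSet A → ∀ x ∈ {x | V x ≤ R},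
      ENNReal.ofReal α * ν A ≤ κ x A)
    (h : X → ℝ) (hhm : Measurable h) (hh : MemLp h 2 π) (hhν : MemLp h 2 ν)
    (hν0 : ∫ x, h x ∂ν = 0) :
    ∫ x, (∫ y, h y ∂(κ x)) ^ 2 ∂π
      ≤ (1 - lam * (3 / 2 - lam) / (1 + 2 * b * (2 - lam) / (α ^ 2 * (ν {x | V x ≤ R}).toReal)))
        * ∫ x, h x ^ 2 ∂π := by
  set K : Set X := {x | V x ≤ R} with hKdef
  have hK : MeasurableSet K := measurableSet_le hVmeas measurable_const
  set Q : Kernel X X := κ ∘ₖ κ with hQdef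
  set m : Measure (X × X) := π ⊗ₘ Q with hmdef
  set Ph : X → ℝ := fun x => ∫ y, h y ∂(κ x) with hPhdef
  have hPhm : Measurable Ph := Pmeas κ hhm
  set S : ℝ := ∫ x, h x ^ 2 ∂π with hSdef
  set NP : ℝ := ∫ x, Ph x ^ 2 ∂π with hNPdef
  have hS0 : 0 ≤ S := integral_nonneg fun x => sq_nonneg _
  have hh2int : Integrable (fun x => h x ^ 2) π :=
    (memLp_two_iff_integrable_sq hhm.aestronglyMeasurable).1 hh
  have hsqE : Measurable fun y => ENNReal.ofReal (h y ^ 2) := (hhm.pow_const 2).ennreal_ofReal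
  have hl2fin : ∫⁻ y, ENNReal.ofReal (h y ^ 2) ∂π = ENNReal.ofReal S :=
    (ofReal_integral_eq_lintegral_ofReal hh2int
      (Filter.Eventually.of_forall fun x => sq_nonneg _)).symm
  have hinvL : ∀ {g : X → ℝ≥0∞}, Measurable g →
      (∫⁻ x, (∫⁻ y, g y ∂(κ x)) ∂π) = ∫⁻ y, g y ∂π := fun hg => lin_inv κ π hbind hg
  have hiter2 : ∫⁻ x, (∫⁻ y, ENNReal.ofReal (h y ^ 2) ∂(κ x)) ∂π = ENNReal.ofReal S := by
    rw [hinvL hsqE]; exact hl2fin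
  have hinnerM : Measurable fun x => ∫⁻ y, ENNReal.ofReal (h y ^ 2) ∂(κ x) :=
    hsqE.lintegral_kernel
  have ae1 : ∀ᵐ x ∂π, (∫⁻ y, ENNReal.ofReal (h y ^ 2) ∂(κ x)) < ⊤ :=
    ae_lt_top hinnerM (by rw [hiter2]; exact ENNReal.ofReal_ne_top)
  -- pointwise facts
  set Psq : X → ℝ := fun x => (∫⁻ y, ENNReal.ofReal (h y ^ 2) ∂(κ x)).toReal with hPsqdef
  have hPsqm : Measurable Psq := hinnerM.ennreal_toReal
  have haeP : ∀ᵐ x ∂π, Ph x ^ 2 ≤ Psq x ∧ Integrable h (κ x)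
      ∧ (∫ y, h y ^ 2 ∂(κ x)) = Psq x := by
    filter_upwards [ae1] with x hx
    have hIsq : Integrable (fun y => h y ^ 2) (κ x) := by
      refine ⟨(hhm.pow_const 2).aestronglyMeasurable, ?_⟩
      have : (∫⁻ y, ‖h y ^ 2‖ₑ ∂(κ x)) < ⊤ := by
        rw [lintegral_congr fun y => Real.enorm_eq_ofReal (sq_nonneg _)]
        exact hx
      exact this
    have hL2x : MemLp h 2 (κ x) :=
      (memLp_two_iff_integrable_sq hhm.aestronglyMeasurable).2 hIsq
    have hIx : Integrable h (κ x) := hL2x.integrable one_le_two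
    have heq : (∫ y, h y ^ 2 ∂(κ x)) = Psq x := by
      rw [hPsqdef]; exact integral_nonneg_eq _ (hhm.pow_const 2) (fun z => sq_nonneg _)
    exact ⟨heq ▸ sq_integral_le (κ x) hL2x, hIx, heq⟩
  have hPsqInt : Integrable Psq π := by
    refine ⟨hPsqm.aestronglyMeasurable, ?_⟩
    have hb' : ∀ x, ‖Psq x‖ₑ ≤ ∫⁻ y, ENNReal.ofReal (h y ^ 2) ∂(κ x) := fun x => by
      rw [Real.enorm_eq_ofReal ENNReal.toReal_nonneg]; exact ENNReal.ofReal_toReal_le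
    exact lt_of_le_of_lt (lintegral_mono hb')
      (by rw [hiter2]; exact ENNReal.ofReal_lt_top)
  have hPsqS : ∫ x, Psq x ∂π = S := by
    rw [hPsqdef]
    rw [integral_toReal hinnerM.aemeasurable ae1, hiter2, ENNReal.toReal_ofReal hS0]
  have hPh2int : Integrable (fun x => Ph x ^ 2) π := by
    refine hPsqInt.mono' ((hPhm.pow_const 2).aestronglyMeasurable) ?_
    filter_upwards [haeP] with x hx
    rw [Real.norm_eq_abs, abs_of_nonneg (sq_nonneg _)]
    exact hx.1
  have hNP_le_S : NP ≤ S := by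
    rw [hNPdef, ← hPsqS]
    refine integral_mono_ae hPh2int hPsqInt ?_
    filter_upwards [haeP] with x hx using hx.1
  have hNP0 : 0 ≤ NP := integral_nonneg fun x => sq_nonneg _
  have hPhL2 : MemLp Ph 2 π :=
    (memLp_two_iff_integrable_sq hPhm.aestronglyMeasurable).2 hPh2int
  -- NP = ∫ h · P(Ph)
  have hNP_eq : NP = ∫ x, h x * (∫ y, Ph y ∂(κ x)) ∂π := by
    have h1 := hrev h Ph hh hPhL2
    rw [hNPdef, h1]
    refine (integral_congr_ae (Filter.Eventually.of_forall fun x => ?_)).symm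
    show (∫ y, h y ∂(κ x)) * Ph x = Ph x ^ 2
    show Ph x * Ph x = Ph x ^ 2
    rw [sq]
  -- swap invariance of m
  have hswap : m.map Prod.swap = m := swap_inv κ π hrev
  have hswapL : ∀ {F : X × X → ℝ≥0∞}, Measurable F →
      ∫⁻ p, F (Prod.swap p) ∂m = ∫⁻ p, F p ∂m := by
    intro F hF
    conv_rhs => rw [← hswap]
    rw [lintegral_map hF measurable_swap]
  -- marginal lintegral computations
  have e1 : ∫⁻ p, ENNReal.ofReal (h p.1 ^ 2) ∂m = ENNReal.ofReal S := by
    rw [hmdef, Measure.lintegral_compProd (f := fun p => ENNReal.ofReal (h p.1 ^ 2))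
      (((hhm.comp measurable_fst).pow_const 2).ennreal_ofReal)]
    calc ∫⁻ x, (∫⁻ _, ENNReal.ofReal (h x ^ 2) ∂(Q x)) ∂π
        = ∫⁻ x, ENNReal.ofReal (h x ^ 2) ∂π := by
          refine lintegral_congr fun x => ?_
          rw [lintegral_const, measure_univ, mul_one]
      _ = ENNReal.ofReal S := hl2fin
  have hQiter : ∀ {g : X → ℝ≥0∞}, Measurable g →
      (fun x => ∫⁻ y, g y ∂(Q x)) = fun x => ∫⁻ y, (∫⁻ z, g z ∂(κ y)) ∂(κ x) := by
    intro g hg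
    funext x
    rw [hQdef]; exact Kernel.lintegral_comp κ κ x hg
  have hinvQ : ∀ {g : X → ℝ≥0∞}, Measurable g →
      ∫⁻ x, (∫⁻ y, g y ∂(Q x)) ∂π = ∫⁻ y, g y ∂π := by
    intro g hg
    rw [hQiter hg, hinvL (hg.lintegral_kernel), hinvL hg]
  have e2 : ∫⁻ p, ENNReal.ofReal (h p.2 ^ 2) ∂m = ENNReal.ofReal S := by
    rw [hmdef, Measure.lintegral_compProd (f := fun p => ENNReal.ofReal (h p.2 ^ 2))
      (((hhm.comp measurable_snd).pow_const 2).ennreal_ofReal)]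
    rw [hinvQ hsqE]; exact hl2fin
  -- integrability over m
  have hInt1 : Integrable (fun p => h p.1 ^ 2) m := by
    refine ⟨((hhm.comp measurable_fst).pow_const 2).aestronglyMeasurable, ?_⟩
    have : (∫⁻ p, ‖h p.1 ^ 2‖ₑ ∂m) < ⊤ := by
      rw [lintegral_congr fun p => Real.enorm_eq_ofReal (sq_nonneg _), e1]
      exact ENNReal.ofReal_lt_top
    exact this
  have hInt2 : Integrable (fun p => h p.2 ^ 2) m := by
    refine ⟨((hhm.comp measurable_snd).pow_const 2).aestronglyMeasurable, ?_⟩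
    have : (∫⁻ p, ‖h p.2 ^ 2‖ₑ ∂m) < ⊤ := by
      rw [lintegral_congr fun p => Real.enorm_eq_ofReal (sq_nonneg _), e2]
      exact ENNReal.ofReal_lt_top
    exact this
  have hIntCross : Integrable (fun p => h p.1 * h p.2) m := by
    refine ((hInt1.add hInt2).const_mul (1/2 : ℝ)).mono'
      (((hhm.comp measurable_fst).mul (hhm.comp measurable_snd)).aestronglyMeasurable) ?_
    refine Filter.Eventually.of_forall fun p => ?_
    simp only [Pi.add_apply, Real.norm_eq_abs, abs_mul]
    nlinarith [sq_nonneg (|h p.1| - |h p.2|), sq_abs (h p.1), sq_abs (h p.2),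
      abs_nonneg (h p.1), abs_nonneg (h p.2)]
  -- integrals over m
  have hm1 : ∫ p, h p.1 ^ 2 ∂m = S := by
    rw [integral_nonneg_eq m (g := fun p => h p.1 ^ 2) ((hhm.comp measurable_fst).pow_const 2) (fun p => sq_nonneg _),
      e1, ENNReal.toReal_ofReal hS0]
  have hm2 : ∫ p, h p.2 ^ 2 ∂m = S := by
    rw [integral_nonneg_eq m (g := fun p => h p.2 ^ 2) ((hhm.comp measurable_snd).pow_const 2) (fun p => sq_nonneg _),
      e2, ENNReal.toReal_ofReal hS0]
  -- cross term = NP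
  have habs : Measurable fun z => ENNReal.ofReal |h z| := hhm.abs.ennreal_ofReal
  have haefinQ : ∀ᵐ x ∂π, (∫⁻ z, ENNReal.ofReal |h z| ∂(Q x)) < ⊤ := by
    have hbound : ∀ x, (∫⁻ z, ENNReal.ofReal |h z| ∂(Q x))
        ≤ 1 + ∫⁻ z, ENNReal.ofReal (h z ^ 2) ∂(Q x) := by
      intro x
      calc ∫⁻ z, ENNReal.ofReal |h z| ∂(Q x)
          ≤ ∫⁻ z, (1 + ENNReal.ofReal (h z ^ 2)) ∂(Q x) := by
            refine lintegral_mono fun z => ?_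
            have habs1 : |h z| ≤ 1 + h z ^ 2 := by
              nlinarith [sq_abs (h z), sq_nonneg (|h z| - 1), abs_nonneg (h z)]
            calc ENNReal.ofReal |h z| ≤ ENNReal.ofReal (1 + h z ^ 2) :=
                  ENNReal.ofReal_le_ofReal habs1
              _ = 1 + ENNReal.ofReal (h z ^ 2) := by
                  rw [ENNReal.ofReal_add zero_le_one (sq_nonneg _), ENNReal.ofReal_one]
        _ = 1 + ∫⁻ z, ENNReal.ofReal (h z ^ 2) ∂(Q x) := by
            rw [lintegral_add_left measurable_const, lintegral_one, measure_univ]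
    have hQsqM : Measurable fun x => ∫⁻ z, ENNReal.ofReal (h z ^ 2) ∂(Q x) := by
      rw [hQiter hsqE]; exact hinnerM.lintegral_kernel
    have hfin2 : ∀ᵐ x ∂π, (∫⁻ z, ENNReal.ofReal (h z ^ 2) ∂(Q x)) < ⊤ :=
      ae_lt_top hQsqM (by rw [hinvQ hsqE, hl2fin]; exact ENNReal.ofReal_ne_top)
    filter_upwards [hfin2] with x hx
    exact lt_of_le_of_lt (hbound x) (by
      exact ENNReal.add_lt_top.mpr ⟨ENNReal.one_lt_top, hx⟩)
  have hcross : ∫ p, h p.1 * h p.2 ∂m = NP := by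
    rw [hmdef, Measure.integral_compProd hIntCross, hNP_eq]
    refine integral_congr_ae ?_
    filter_upwards [haefinQ] with x hx
    have hQint : ∫ z, h z ∂(Q x) = ∫ y, (∫ z, h z ∂(κ y)) ∂(κ x) := by
      rw [hQdef]
      exact integral_comp_eq κ hhm x (by
        rw [← hQdef]
        exact hx.ne)
    calc ∫ y, h x * h y ∂(Q x) = h x * ∫ y, h y ∂(Q x) := integral_const_mul _ _
      _ = h x * (∫ y, Ph y ∂(κ x)) := by rw [hQint]
  -- ======== inequality I (drift / symmetrization) ========
  have hVpos : ∀ x, 0 < V x := fun x => lt_of_lt_of_le zero_lt_one (hV1 x)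
  set F : X × X → ℝ≥0∞ := fun p => ENNReal.ofReal (h p.1 ^ 2 * V p.2 / V p.1) with hFdef
  have hFm : Measurable F :=
    ((((hhm.comp measurable_fst).pow_const 2).mul (hVmeas.comp measurable_snd)).div
      (hVmeas.comp measurable_fst)).ennreal_ofReal
  set J : ℝ≥0∞ := ∫⁻ p, F p ∂m with hJdef
  set u : X → ℝ := fun x => if V x ≤ R then (1 - lam) ^ 2 + (2 - lam) * b
    else (1 - lam) ^ 2 + b / R with hudef
  have hum : Measurable u :=
    Measurable.ite (measurableSet_le hVmeas measurable_const) measurable_const measurable_const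
  have hu0 : ∀ x, 0 ≤ u x := by
    intro x
    simp only [hudef]
    split <;>
      nlinarith [sq_nonneg (1 - lam), mul_nonneg (by linarith : (0:ℝ) ≤ 2 - lam) hb,
        div_nonneg hb hR0.le]
  have huC : ∀ x, u x ≤ (1 - lam) ^ 2 + (2 - lam) * b + b / R := by
    intro x
    simp only [hudef]
    split
    · nlinarith [div_nonneg hb hR0.le]
    · nlinarith [mul_nonneg (by linarith : (0:ℝ) ≤ 2 - lam) hb]
  -- drift for the two-step kernel
  set W : X → ℝ := fun x => (1 - lam) * ((1 - lam) * V x + b * Set.indicator K 1 x) + b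
    with hWdef
  have hind01 : ∀ x, 0 ≤ Set.indicator K (1 : X → ℝ) x ∧ Set.indicator K (1 : X → ℝ) x ≤ 1 := by
    intro x; by_cases hx : x ∈ K <;> simp [Set.indicator_apply, hx]
  have h1lam : (0:ℝ) ≤ 1 - lam := by linarith
  have h2lam : (0:ℝ) ≤ 2 - lam := by linarith
  have hQdrift : ∀ x, ∫⁻ z, ENNReal.ofReal (V z) ∂(Q x) ≤ ENNReal.ofReal (W x) := by
    intro x
    have hVE : Measurable fun z => ENNReal.ofReal (V z) := hVmeas.ennreal_ofReal
    rw [hQdef, Kernel.lintegral_comp κ κ x hVE]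
    calc ∫⁻ y, (∫⁻ z, ENNReal.ofReal (V z) ∂(κ y)) ∂(κ x)
        ≤ ∫⁻ y, ENNReal.ofReal ((1 - lam) * V y + b * Set.indicator K 1 y) ∂(κ x) :=
          lintegral_mono fun y => hdrift y
      _ ≤ ∫⁻ y, (ENNReal.ofReal (1 - lam) * ENNReal.ofReal (V y) + ENNReal.ofReal b) ∂(κ x) := by
          refine lintegral_mono fun y => ?_
          refine le_trans ENNReal.ofReal_add_le (add_le_add ?_ ?_)
          · exact le_of_eq (ENNReal.ofReal_mul h1lam)
          · refine ENNReal.ofReal_le_ofReal ?_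
            nlinarith [(hind01 y).1, (hind01 y).2]
      _ = ENNReal.ofReal (1 - lam) * (∫⁻ y, ENNReal.ofReal (V y) ∂(κ x)) + ENNReal.ofReal b := by
          rw [lintegral_add_right _ measurable_const, lintegral_const, measure_univ, mul_one,
            lintegral_const_mul _ hVE]
      _ ≤ ENNReal.ofReal (1 - lam) * ENNReal.ofReal ((1 - lam) * V x + b * Set.indicator K 1 x)
            + ENNReal.ofReal b := add_le_add (mul_le_mul_right (hdrift x) _) le_rfl
      _ = ENNReal.ofReal (W x) := by
          rw [← ENNReal.ofReal_mul h1lam, ← ENNReal.ofReal_add ?h1 hb, hWdef]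
          case h1 =>
            have hi := (hind01 x).1
            have hx1 : 0 ≤ (1 - lam) * V x := mul_nonneg h1lam (by nlinarith [hV1 x])
            have hx2 : 0 ≤ b * Set.indicator K 1 x := mul_nonneg hb hi
            exact mul_nonneg h1lam (by linarith)
  have hWu : ∀ x, W x ≤ u x * V x := by
    intro x
    by_cases hx : x ∈ K
    · have hxR : V x ≤ R := hx
      simp only [hWdef, hudef, Set.indicator_of_mem hx, if_pos hxR, Pi.one_apply]
      nlinarith [hV1 x, mul_nonneg (mul_nonneg h2lam hb) (sub_nonneg.mpr (hV1 x))]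
    · have hxR : ¬ V x ≤ R := hx
      simp only [hWdef, hudef, Set.indicator_of_notMem hx, if_neg hxR]
      have hVR : R < V x := lt_of_not_ge hxR
      nlinarith [div_mul_cancel₀ b hR0.ne', div_nonneg hb hR0.le, sq_nonneg (1 - lam)]
  have hHu : Integrable (fun x => h x ^ 2 * u x) π := by
    refine (hh2int.const_mul ((1 - lam) ^ 2 + (2 - lam) * b + b / R)).mono'
      (((hhm.pow_const 2).mul hum).aestronglyMeasurable) ?_
    refine Filter.Eventually.of_forall fun x => ?_
    rw [Real.norm_eq_abs, abs_mul, abs_of_nonneg (sq_nonneg _), abs_of_nonneg (hu0 x)]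
    calc h x ^ 2 * u x ≤ h x ^ 2 * ((1 - lam) ^ 2 + (2 - lam) * b + b / R) :=
        mul_le_mul_of_nonneg_left (huC x) (sq_nonneg _)
      _ = ((1 - lam) ^ 2 + (2 - lam) * b + b / R) * h x ^ 2 := mul_comm _ _
  have hJle : J ≤ ENNReal.ofReal (∫ x, h x ^ 2 * u x ∂π) := by
    rw [hJdef, hmdef, Measure.lintegral_compProd hFm]
    have hinner : ∀ x, (∫⁻ y, F (x, y) ∂(Q x)) ≤ ENNReal.ofReal (h x ^ 2 * u x) := by
      intro x
      have hx0 : 0 ≤ h x ^ 2 / V x := div_nonneg (sq_nonneg _) (hVpos x).le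
      have hrw : ∀ y : X, F (x, y) = ENNReal.ofReal (h x ^ 2 / V x) * ENNReal.ofReal (V y) := by
        intro y
        show ENNReal.ofReal (h x ^ 2 * V y / V x) = _
        rw [← ENNReal.ofReal_mul hx0]
        congr 1
        ring
      calc ∫⁻ y, F (x, y) ∂(Q x)
          = ENNReal.ofReal (h x ^ 2 / V x) * ∫⁻ y, ENNReal.ofReal (V y) ∂(Q x) := by
            rw [lintegral_congr hrw, lintegral_const_mul _ hVmeas.ennreal_ofReal]
        _ ≤ ENNReal.ofReal (h x ^ 2 / V x) * ENNReal.ofReal (W x) :=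
            mul_le_mul_right (hQdrift x) _
        _ = ENNReal.ofReal (h x ^ 2 / V x * W x) := (ENNReal.ofReal_mul hx0).symm
        _ ≤ ENNReal.ofReal (h x ^ 2 * u x) := by
            refine ENNReal.ofReal_le_ofReal ?_
            rw [div_mul_eq_mul_div, div_le_iff₀ (hVpos x)]
            calc h x ^ 2 * W x ≤ h x ^ 2 * (u x * V x) :=
                mul_le_mul_of_nonneg_left (hWu x) (sq_nonneg _)
              _ = h x ^ 2 * u x * V x := by ring
    calc (∫⁻ x, ∫⁻ y, F (x, y) ∂(Q x) ∂π) ≤ ∫⁻ x, ENNReal.ofReal (h x ^ 2 * u x) ∂π :=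
          lintegral_mono hinner
      _ = ENNReal.ofReal (∫ x, h x ^ 2 * u x ∂π) :=
          (ofReal_integral_eq_lintegral_ofReal hHu
            (Filter.Eventually.of_forall fun x => mul_nonneg (sq_nonneg _) (hu0 x))).symm
  have hswapF : ∫⁻ p, ENNReal.ofReal (h p.2 ^ 2 * V p.1 / V p.2) ∂m = J := by
    rw [hJdef]
    have heqF : (fun p : X × X => ENNReal.ofReal (h p.2 ^ 2 * V p.1 / V p.2))
        = fun p => F (Prod.swap p) := rfl
    rw [heqF]
    exact hswapL hFm
  have hFswapm : Measurable fun p : X × X => ENNReal.ofReal (h p.2 ^ 2 * V p.1 / V p.2) :=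
    hFm.comp measurable_swap
  have hcs : ENNReal.ofReal (2 * NP) ≤ 2 * J := by
    have h2NP : 2 * NP = ∫ p, 2 * (h p.1 * h p.2) ∂m := by rw [integral_const_mul, hcross]
    have habs2 : ∫ p, 2 * (h p.1 * h p.2) ∂m ≤ ∫ p, |2 * (h p.1 * h p.2)| ∂m :=
      integral_mono (hIntCross.const_mul 2) (hIntCross.const_mul 2).abs fun p => le_abs_self _
    have e3 : ENNReal.ofReal (∫ p, |2 * (h p.1 * h p.2)| ∂m)
        = ∫⁻ p, ENNReal.ofReal |2 * (h p.1 * h p.2)| ∂m :=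
      ofReal_integral_eq_lintegral_ofReal (hIntCross.const_mul 2).abs
        (Filter.Eventually.of_forall fun p => abs_nonneg _)
    have e4 : ∫⁻ p, ENNReal.ofReal |2 * (h p.1 * h p.2)| ∂m
        ≤ ∫⁻ p, (F p + ENNReal.ofReal (h p.2 ^ 2 * V p.1 / V p.2)) ∂m := by
      refine lintegral_mono fun p => ?_
      have hamgm := amgm_weight (h p.1) (h p.2) (V p.1) (V p.2) (hVpos p.1) (hVpos p.2)
      calc ENNReal.ofReal |2 * (h p.1 * h p.2)|
          ≤ ENNReal.ofReal (h p.1 ^ 2 * V p.2 / V p.1 + h p.2 ^ 2 * V p.1 / V p.2) := by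
            refine ENNReal.ofReal_le_ofReal ?_
            rw [← mul_assoc]
            exact hamgm
        _ = F p + ENNReal.ofReal (h p.2 ^ 2 * V p.1 / V p.2) := by
            rw [ENNReal.ofReal_add
              (div_nonneg (mul_nonneg (sq_nonneg _) (hVpos _).le) (hVpos _).le)
              (div_nonneg (mul_nonneg (sq_nonneg _) (hVpos _).le) (hVpos _).le)]
    calc ENNReal.ofReal (2 * NP) ≤ ENNReal.ofReal (∫ p, |2 * (h p.1 * h p.2)| ∂m) := by
          rw [h2NP]; exact ENNReal.ofReal_le_ofReal habs2
      _ = ∫⁻ p, ENNReal.ofReal |2 * (h p.1 * h p.2)| ∂m := e3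
      _ ≤ ∫⁻ p, (F p + ENNReal.ofReal (h p.2 ^ 2 * V p.1 / V p.2)) ∂m := e4
      _ = J + J := by rw [lintegral_add_left hFm, hswapF, hJdef]
      _ = 2 * J := (two_mul J).symm
  have hNP_le_I : NP ≤ ∫ x, h x ^ 2 * u x ∂π := by
    have hint0 : (0:ℝ) ≤ ∫ x, h x ^ 2 * u x ∂π :=
      integral_nonneg fun x => mul_nonneg (sq_nonneg _) (hu0 x)
    have h2 : ENNReal.ofReal (2 * NP) ≤ ENNReal.ofReal (2 * ∫ x, h x ^ 2 * u x ∂π) := by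
      refine le_trans hcs ?_
      rw [ENNReal.ofReal_mul zero_le_two, ENNReal.ofReal_ofNat]
      exact mul_le_mul_right hJle 2
    have := (ENNReal.ofReal_le_ofReal_iff (by linarith)).mp h2
    linarith
  -- split the integral over K and Kᶜ
  set SK : ℝ := ∫ x in K, h x ^ 2 ∂π with hSKdef
  set Sc : ℝ := ∫ x in Kᶜ, h x ^ 2 ∂π with hScdef
  have hSsum : SK + Sc = S := by
    rw [hSKdef, hScdef, hSdef]; exact integral_add_compl hK hh2int
  have hSK0 : 0 ≤ SK := integral_nonneg fun x => sq_nonneg _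
  have hSc0 : 0 ≤ Sc := integral_nonneg fun x => sq_nonneg _
  have hIu : ∫ x, h x ^ 2 * u x ∂π
      = ((1 - lam) ^ 2 + (2 - lam) * b) * SK + ((1 - lam) ^ 2 + b / R) * Sc := by
    rw [← integral_add_compl hK hHu]
    congr 1
    · calc ∫ x in K, h x ^ 2 * u x ∂π
          = ∫ x in K, ((1 - lam) ^ 2 + (2 - lam) * b) * h x ^ 2 ∂π := by
            refine setIntegral_congr_fun hK fun x hx => ?_
            have hxR : V x ≤ R := hx
            simp only [hudef, if_pos hxR]
            ring
        _ = ((1 - lam) ^ 2 + (2 - lam) * b) * SK := by rw [integral_const_mul, hSKdef]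
    · calc ∫ x in Kᶜ, h x ^ 2 * u x ∂π
          = ∫ x in Kᶜ, ((1 - lam) ^ 2 + b / R) * h x ^ 2 ∂π := by
            refine setIntegral_congr_fun hK.compl fun x hx => ?_
            have hxR : ¬ V x ≤ R := hx
            simp only [hudef, if_neg hxR]
            ring
        _ = ((1 - lam) ^ 2 + b / R) * Sc := by rw [integral_const_mul, hScdef]
  have ineqI : NP ≤ ((1 - lam) ^ 2 + (2 - lam) * b) * SK + ((1 - lam) ^ 2 + b / R) * Sc := by
    rw [← hIu]; exact hNP_le_I
  -- ======== inequality II (minorization) ========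
  set epsr : ℝ := α ^ 2 * (ν K).toReal with hepsdef
  have hνKfin : ν K ≠ ⊤ := measure_ne_top ν K
  have heps0 : 0 < epsr := mul_pos (pow_pos hα 2) (ENNReal.toReal_pos hνK.ne' hνKfin)
  have hepsE : ENNReal.ofReal epsr = ENNReal.ofReal (α ^ 2) * ν K := by
    rw [hepsdef, ENNReal.ofReal_mul (pow_nonneg hα.le 2), ENNReal.ofReal_toReal hνKfin]
  have hQminor : ∀ x ∈ K, ENNReal.ofReal epsr • ν ≤ Q x := by
    intro x hx
    refine Measure.le_iff.mpr fun A hA => ?_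
    rw [Measure.smul_apply, smul_eq_mul]
    have step1 : (ENNReal.ofReal α * ν A) * ((κ x) K) ≤ Q x A := by
      rw [hQdef, Kernel.comp_apply' _ _ _ hA]
      calc (ENNReal.ofReal α * ν A) * ((κ x) K)
          = ∫⁻ _ in K, ENNReal.ofReal α * ν A ∂(κ x) := by rw [setLIntegral_const]
        _ ≤ ∫⁻ y in K, (κ y) A ∂(κ x) :=
            setLIntegral_mono (κ.measurable_coe hA) fun y hy => hminor A hA y hy
        _ ≤ ∫⁻ y, (κ y) A ∂(κ x) := setLIntegral_le_lintegral _ _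
    refine le_trans ?_ step1
    have step2 : ENNReal.ofReal α * ν K ≤ (κ x) K := hminor K hK x hx
    calc ENNReal.ofReal epsr * ν A
        = (ENNReal.ofReal α * ν A) * (ENNReal.ofReal α * ν K) := by
          rw [hepsE, ENNReal.ofReal_pow hα.le]
          ring
      _ ≤ (ENNReal.ofReal α * ν A) * ((κ x) K) := mul_le_mul_right step2 _
  have hG : Integrable (fun p : X × X => (h p.1 - h p.2) ^ 2) m := by
    have hgr : (fun p : X × X => (h p.1 - h p.2) ^ 2)
        = fun p => h p.1 ^ 2 + h p.2 ^ 2 - 2 * (h p.1 * h p.2) := by funext p; ring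
    rw [hgr]
    have hIntSum : Integrable (fun p : X × X => h p.1 ^ 2 + h p.2 ^ 2) m := hInt1.add hInt2
    exact hIntSum.sub (hIntCross.const_mul 2)
  have hGval : ∫ p, (h p.1 - h p.2) ^ 2 ∂m = 2 * S - 2 * NP := by
    have hgr : (fun p : X × X => (h p.1 - h p.2) ^ 2)
        = fun p => h p.1 ^ 2 + h p.2 ^ 2 - 2 * (h p.1 * h p.2) := by funext p; ring
    have hIntSum : Integrable (fun p : X × X => h p.1 ^ 2 + h p.2 ^ 2) m := hInt1.add hInt2
    rw [hgr, integral_sub hIntSum (hIntCross.const_mul 2),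
      integral_add hInt1 hInt2, hm1, hm2, integral_const_mul, hcross]
    ring
  have hGm : Measurable fun p : X × X => ENNReal.ofReal ((h p.1 - h p.2) ^ 2) :=
    (((hhm.comp measurable_fst).sub (hhm.comp measurable_snd)).pow_const 2).ennreal_ofReal
  have hIhν : Integrable h ν := hhν.integrable one_le_two
  have hIh2ν : Integrable (fun y => h y ^ 2) ν :=
    (memLp_two_iff_integrable_sq hhm.aestronglyMeasurable).1 hhν
  have hinnerν : ∀ x : X, ENNReal.ofReal (h x ^ 2)
      ≤ ∫⁻ y, ENNReal.ofReal ((h x - h y) ^ 2) ∂ν := by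
    intro x
    have hgr : (fun y => (h x - h y) ^ 2)
        = fun y => (h x ^ 2 - 2 * h x * h y) + h y ^ 2 := by funext y; ring
    have hIsub1 : Integrable (fun y => h x ^ 2 - 2 * h x * h y) ν :=
      (integrable_const _).sub (hIhν.const_mul (2 * h x))
    have hIsub : Integrable (fun y => (h x - h y) ^ 2) ν := by
      rw [hgr]; exact hIsub1.add hIh2ν
    have hval : ∫ y, (h x - h y) ^ 2 ∂ν = h x ^ 2 + ∫ y, h y ^ 2 ∂ν := by
      rw [hgr, integral_add hIsub1 hIh2ν, integral_sub (integrable_const _)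
        (hIhν.const_mul (2 * h x)), integral_const_mul, hν0, integral_const, probReal_univ]
      simp
    calc ENNReal.ofReal (h x ^ 2) ≤ ENNReal.ofReal (∫ y, (h x - h y) ^ 2 ∂ν) := by
          refine ENNReal.ofReal_le_ofReal ?_
          rw [hval]
          have : (0:ℝ) ≤ ∫ y, h y ^ 2 ∂ν := integral_nonneg fun y => sq_nonneg _
          linarith
      _ = ∫⁻ y, ENNReal.ofReal ((h x - h y) ^ 2) ∂ν :=
          ofReal_integral_eq_lintegral_ofReal hIsub
            (Filter.Eventually.of_forall fun y => sq_nonneg _)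
  have ineqII : epsr * SK ≤ 2 * S - 2 * NP := by
    have hL : ENNReal.ofReal (2 * S - 2 * NP)
        = ∫⁻ p, ENNReal.ofReal ((h p.1 - h p.2) ^ 2) ∂m := by
      rw [← hGval]
      exact ofReal_integral_eq_lintegral_ofReal hG
        (Filter.Eventually.of_forall fun p => sq_nonneg _)
    have hQGm : Measurable fun x => ∫⁻ y, ENNReal.ofReal ((h x - h y) ^ 2) ∂(Q x) :=
      Measurable.lintegral_kernel_prod_right' (κ := Q) hGm
    have hLB : ENNReal.ofReal epsr * ENNReal.ofReal SK
        ≤ ∫⁻ p, ENNReal.ofReal ((h p.1 - h p.2) ^ 2) ∂m := by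
      rw [hmdef, Measure.lintegral_compProd hGm]
      have hSKl : ENNReal.ofReal SK = ∫⁻ x in K, ENNReal.ofReal (h x ^ 2) ∂π := by
        rw [hSKdef]
        exact ofReal_integral_eq_lintegral_ofReal (hh2int.restrict)
          (Filter.Eventually.of_forall fun x => sq_nonneg _)
      calc ENNReal.ofReal epsr * ENNReal.ofReal SK
          = ∫⁻ x in K, ENNReal.ofReal epsr * ENNReal.ofReal (h x ^ 2) ∂π := by
            rw [lintegral_const_mul _ (hhm.pow_const 2).ennreal_ofReal, ← hSKl]
        _ ≤ ∫⁻ x in K, (∫⁻ y, ENNReal.ofReal ((h x - h y) ^ 2) ∂(Q x)) ∂π := by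
            refine setLIntegral_mono hQGm fun x hx => ?_
            calc ENNReal.ofReal epsr * ENNReal.ofReal (h x ^ 2)
                ≤ ENNReal.ofReal epsr * ∫⁻ y, ENNReal.ofReal ((h x - h y) ^ 2) ∂ν :=
                  mul_le_mul_right (hinnerν x) _
              _ = ∫⁻ y, ENNReal.ofReal ((h x - h y) ^ 2) ∂(ENNReal.ofReal epsr • ν) :=
                  by rw [lintegral_smul_measure, smul_eq_mul]
              _ ≤ ∫⁻ y, ENNReal.ofReal ((h x - h y) ^ 2) ∂(Q x) :=
                  lintegral_mono' (hQminor x hx) le_rfl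
        _ ≤ ∫⁻ x, (∫⁻ y, ENNReal.ofReal ((h x - h y) ^ 2) ∂(Q x)) ∂π :=
            setLIntegral_le_lintegral _ _
    have : ENNReal.ofReal (epsr * SK) ≤ ENNReal.ofReal (2 * S - 2 * NP) := by
      rw [ENNReal.ofReal_mul heps0.le, hL]
      exact hLB
    exact (ENNReal.ofReal_le_ofReal_iff (by linarith)).mp this
  -- ======== combine ========
  have hbR : b / R ≤ lam / 2 := by
    rw [div_le_div_iff₀ hR0 zero_lt_two]
    have := (div_lt_iff₀ hlam).mp hR
    linarith
  set d : ℝ := epsr + 2 * ((2 - lam) * b) with hddef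
  have hd0 : 0 < d := by nlinarith [mul_nonneg h2lam hb]
  have hA : lam * (2 - lam) * S ≤ (S - NP) + ((2 - lam) * b) * SK + (b / R) * Sc := by
    have hexp3 : (1 - lam) ^ 2 * SK + (1 - lam) ^ 2 * Sc = (1 - lam) ^ 2 * S := by
      rw [← hSsum]; ring
    nlinarith [ineqI]
  have hB : (epsr / 2) * SK ≤ S - NP := by linarith [ineqII]
  have hmain : (lam * (3 / 2 - lam) * epsr) * S ≤ d * (S - NP) := by
    have t1 : epsr * (lam * (2 - lam) * S)
        ≤ epsr * ((S - NP) + ((2 - lam) * b) * SK + (b / R) * Sc) :=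
      mul_le_mul_of_nonneg_left hA heps0.le
    have t2 : (2 * ((2 - lam) * b)) * ((epsr / 2) * SK) ≤ (2 * ((2 - lam) * b)) * (S - NP) :=
      mul_le_mul_of_nonneg_left hB (by nlinarith [mul_nonneg h2lam hb])
    have t3 : epsr * ((b / R) * Sc) ≤ epsr * ((lam / 2) * S) := by
      have hScS : Sc ≤ S := by linarith
      have hsc : (b / R) * Sc ≤ (lam / 2) * S :=
        calc (b / R) * Sc ≤ (lam / 2) * Sc := mul_le_mul_of_nonneg_right hbR hSc0
          _ ≤ (lam / 2) * S := mul_le_mul_of_nonneg_left hScS (by linarith)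
      exact mul_le_mul_of_nonneg_left hsc heps0.le
    rw [hddef]
    nlinarith [t1, t2, t3]
  have hβeq : lam * (3 / 2 - lam) / (1 + 2 * b * (2 - lam) / epsr)
      = lam * (3 / 2 - lam) * epsr / d := by
    rw [hddef]
    rw [div_eq_div_iff (by positivity) (by nlinarith [mul_nonneg h2lam hb])]
    field_simp
  have hfinal : NP ≤ (1 - lam * (3 / 2 - lam) / (1 + 2 * b * (2 - lam) / epsr)) * S := by
    rw [hβeq]
    have hstep : lam * (3 / 2 - lam) * epsr / d * S ≤ S - NP := by
      rw [div_mul_eq_mul_div, div_le_iff₀ hd0]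
      nlinarith [hmain]
    nlinarith [hstep]
  exact hfinal



end Main

section PFacts
variable (κ : Kernel X X) [IsMarkovKernel κ] (π : Measure X) [IsProbabilityMeasure π]

lemma P_facts (hbind : π.bind (fun x => κ x) = π) {h : X → ℝ}
    (hhm : Measurable h) (hh : MemLp h 2 π) :
    MemLp (fun x => ∫ y, h y ∂(κ x)) 2 π ∧ (∀ᵐ x ∂π, Integrable h (κ x)) := by
  have hPhm : Measurable fun x => ∫ y, h y ∂(κ x) := Pmeas κ hhm
  have hh2int : Integrable (fun x => h x ^ 2) π :=
    (memLp_two_iff_integrable_sq hhm.aestronglyMeasurable).1 hh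
  have hsqE : Measurable fun y => ENNReal.ofReal (h y ^ 2) := (hhm.pow_const 2).ennreal_ofReal
  have hS0 : (0:ℝ) ≤ ∫ x, h x ^ 2 ∂π := integral_nonneg fun x => sq_nonneg _
  have hl2fin : ∫⁻ y, ENNReal.ofReal (h y ^ 2) ∂π = ENNReal.ofReal (∫ x, h x ^ 2 ∂π) :=
    (ofReal_integral_eq_lintegral_ofReal hh2int
      (Filter.Eventually.of_forall fun x => sq_nonneg _)).symm
  have hiter2 : ∫⁻ x, (∫⁻ y, ENNReal.ofReal (h y ^ 2) ∂(κ x)) ∂π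
      = ENNReal.ofReal (∫ x, h x ^ 2 ∂π) := by
    rw [lin_inv κ π hbind hsqE]; exact hl2fin
  have hinnerM : Measurable fun x => ∫⁻ y, ENNReal.ofReal (h y ^ 2) ∂(κ x) :=
    hsqE.lintegral_kernel
  have ae1 : ∀ᵐ x ∂π, (∫⁻ y, ENNReal.ofReal (h y ^ 2) ∂(κ x)) < ⊤ :=
    ae_lt_top hinnerM (by rw [hiter2]; exact ENNReal.ofReal_ne_top)
  have haeP : ∀ᵐ x ∂π, (∫ y, h y ∂(κ x)) ^ 2 ≤ (∫⁻ y, ENNReal.ofReal (h y ^ 2) ∂(κ x)).toReal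
      ∧ Integrable h (κ x) := by
    filter_upwards [ae1] with x hx
    have hIsq : Integrable (fun y => h y ^ 2) (κ x) := by
      refine ⟨(hhm.pow_const 2).aestronglyMeasurable, ?_⟩
      have : (∫⁻ y, ‖h y ^ 2‖ₑ ∂(κ x)) < ⊤ := by
        rw [lintegral_congr fun y => Real.enorm_eq_ofReal (sq_nonneg _)]
        exact hx
      exact this
    have hL2x : MemLp h 2 (κ x) :=
      (memLp_two_iff_integrable_sq hhm.aestronglyMeasurable).2 hIsq
    have heq : (∫ y, h y ^ 2 ∂(κ x)) = (∫⁻ y, ENNReal.ofReal (h y ^ 2) ∂(κ x)).toReal :=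
      integral_nonneg_eq _ (hhm.pow_const 2) fun z => sq_nonneg _
    exact ⟨heq ▸ sq_integral_le (κ x) hL2x, hL2x.integrable one_le_two⟩
  have hPsqInt : Integrable (fun x => (∫⁻ y, ENNReal.ofReal (h y ^ 2) ∂(κ x)).toReal) π := by
    refine ⟨hinnerM.ennreal_toReal.aestronglyMeasurable, ?_⟩
    have hb' : ∀ x, ‖(∫⁻ y, ENNReal.ofReal (h y ^ 2) ∂(κ x)).toReal‖ₑ
        ≤ ∫⁻ y, ENNReal.ofReal (h y ^ 2) ∂(κ x) := fun x => by
      rw [Real.enorm_eq_ofReal ENNReal.toReal_nonneg]; exact ENNReal.ofReal_toReal_le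
    exact lt_of_le_of_lt (lintegral_mono hb')
      (by rw [hiter2]; exact ENNReal.ofReal_lt_top)
  have hPh2int : Integrable (fun x => (∫ y, h y ∂(κ x)) ^ 2) π := by
    refine hPsqInt.mono' ((hPhm.pow_const 2).aestronglyMeasurable) ?_
    filter_upwards [haeP] with x hx
    rw [Real.norm_eq_abs, abs_of_nonneg (sq_nonneg _)]
    exact hx.1
  exact ⟨(memLp_two_iff_integrable_sq hPhm.aestronglyMeasurable).2 hPh2int,
    haeP.mono fun x hx => hx.2⟩

end PFacts

end SGAux

set_option maxHeartbeats 1000000 in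
/-- **Proposition 1, spectral gap part.** Under reversibility, the drift condition with
level set `K = {V ≤ R}`, `R > 2b/λ`, and the minorization condition, the Markov operator
`P` satisfies `‖Pf‖_{2,π} ≤ (1 - β⁺)^{1/2} ‖f‖_{2,π}` on mean-zero `L²(π)` functions,
where `β⁺ = λ(3/2 - λ)/(1 + 2b(2-λ)/(α² ν(K)))`. -/
theorem spectral_gap_via_P_squared
    {X : Type*} [MeasurableSpace X]
    (κ : Kernel X X) [IsMarkovKernel κ]
    (π : Measure X) [IsProbabilityMeasure π]
    -- invariance: ∫ Pf dπ = ∫ f dπ for all bounded measurable f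
    (hinv : ∀ f : X → ℝ, Measurable f → (∃ C : ℝ, ∀ x, |f x| ≤ C) →
      ∫ x, (∫ y, f y ∂(κ x)) ∂π = ∫ x, f x ∂π)
    -- reversibility: ⟨f, Pg⟩_π = ⟨Pf, g⟩_π for all f, g ∈ L²(π)
    (hrev : ∀ f g : X → ℝ, MemLp f 2 π → MemLp g 2 π →
      ∫ x, f x * (∫ y, g y ∂(κ x)) ∂π = ∫ x, (∫ y, f y ∂(κ x)) * g x ∂π)
    (V : X → ℝ) (hVmeas : Measurable V) (hV1 : ∀ x, 1 ≤ V x)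
    (lam b R : ℝ) (hlam : 0 < lam) (hlam1 : lam ≤ 1) (hb : 0 ≤ b)
    (hR : 2 * b / lam < R)
    (α : ℝ) (hα : 0 < α) (ν : Measure X) [IsProbabilityMeasure ν]
    (hπK : 0 < π {x | V x ≤ R}) (hνK : 0 < ν {x | V x ≤ R})
    -- drift condition (v4) with K = {x | V x ≤ R}
    (hdrift : ∀ x, ∫⁻ y, ENNReal.ofReal (V y) ∂(κ x)
      ≤ ENNReal.ofReal ((1 - lam) * V x + b * Set.indicator {x | V x ≤ R} 1 x))
    -- minorization condition: P 1_A(x) ≥ α ν(A) 1_K(x)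
    (hminor : ∀ A : Set X, MeasurableSet A → ∀ x ∈ {x | V x ≤ R},
      ENNReal.ofReal α * ν A ≤ κ x A) :
    ∀ f : X → ℝ, MemLp f 2 π → ∫ x, f x ∂π = 0 →
      Real.sqrt (∫ x, (∫ y, f y ∂(κ x)) ^ 2 ∂π)
        ≤ Real.sqrt (1 - lam * (3 / 2 - lam)
              / (1 + 2 * b * (2 - lam) / (α ^ 2 * (ν {x | V x ≤ R}).toReal)))
          * Real.sqrt (∫ x, (f x) ^ 2 ∂π) := by
  intro f hf hf0
  set K : Set X := {x | V x ≤ R} with hKdef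
  have hK : MeasurableSet K := measurableSet_le hVmeas measurable_const
  have hR0 : 0 < R := lt_of_le_of_lt (div_nonneg (by linarith) hlam.le) hR
  have hbind : π.bind (fun x => κ x) = π := SGAux.bind_eq κ π hinv
  -- measurable representative
  set g0 : X → ℝ := (hf.aestronglyMeasurable.mk f) with hg0def
  have hg0sm : StronglyMeasurable g0 := hf.aestronglyMeasurable.stronglyMeasurable_mk
  have hg0m : Measurable g0 := hg0sm.measurable
  have hae : f =ᵐ[π] g0 := hf.aestronglyMeasurable.ae_eq_mk
  have hMem : MemLp g0 2 π := hf.ae_eq hae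
  -- replace f by g0 in the goal
  obtain ⟨N, hNsub, hNmeas, hNnull⟩ :=
    exists_measurable_superset_of_null (ae_iff.mp hae)
  have hker0 : ∀ᵐ x ∂π, κ x N = 0 := by
    have hNint : ∫⁻ x, κ x N ∂π = 0 := by
      have : (π.bind (fun x => κ x)) N = π N := by rw [hbind]
      rw [Measure.bind_apply hNmeas κ.measurable.aemeasurable] at this
      rw [this, hNnull]
    exact (lintegral_eq_zero_iff (κ.measurable_coe hNmeas)).mp hNint
  have hPeq : ∀ᵐ x ∂π, (∫ y, f y ∂(κ x)) = ∫ y, g0 y ∂(κ x) := by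
    filter_upwards [hker0] with x hx
    refine integral_congr_ae (ae_iff.mpr ?_)
    exact measure_mono_null hNsub hx
  have hfa : ∫ x, (∫ y, f y ∂(κ x)) ^ 2 ∂π = ∫ x, (∫ y, g0 y ∂(κ x)) ^ 2 ∂π :=
    integral_congr_ae (hPeq.mono fun x hx => by simp only [hx])
  have hsq : ∫ x, f x ^ 2 ∂π = ∫ x, g0 x ^ 2 ∂π :=
    integral_congr_ae (hae.mono fun x hx => by simp only [hx])
  have h00 : ∫ x, g0 x ∂π = 0 := by
    rw [← integral_congr_ae hae]; exact hf0
  -- ν is dominated by a multiple of π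
  have hαfin : ENNReal.ofReal α * π K ≠ ⊤ :=
    ENNReal.mul_ne_top ENNReal.ofReal_ne_top (measure_ne_top _ _)
  have hα0 : ENNReal.ofReal α * π K ≠ 0 := by
    refine mul_ne_zero ?_ hπK.ne'
    simpa [ENNReal.ofReal_eq_zero, not_le] using hα
  have hνle : ν ≤ (ENNReal.ofReal α * π K)⁻¹ • π := by
    refine Measure.le_iff.mpr fun A hA => ?_
    have hbound : (ENNReal.ofReal α * π K) * ν A ≤ π A := by
      have h1 : (π.bind (fun x => κ x)) A = π A := by rw [hbind]
      rw [Measure.bind_apply hA κ.measurable.aemeasurable] at h1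
      calc (ENNReal.ofReal α * π K) * ν A
          = ∫⁻ _ in K, ENNReal.ofReal α * ν A ∂π := by
            rw [setLIntegral_const]; ring
        _ ≤ ∫⁻ x in K, κ x A ∂π :=
            setLIntegral_mono (κ.measurable_coe hA) fun x hx => hminor A hA x hx
        _ ≤ ∫⁻ x, κ x A ∂π := setLIntegral_le_lintegral _ _
        _ = π A := h1
    rw [Measure.smul_apply, smul_eq_mul]
    calc ν A = (ENNReal.ofReal α * π K)⁻¹ * ((ENNReal.ofReal α * π K) * ν A) := by
          rw [← mul_assoc, ENNReal.inv_mul_cancel hα0 hαfin, one_mul]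
      _ ≤ (ENNReal.ofReal α * π K)⁻¹ * π A := mul_le_mul_right hbound _
  have hMemν : MemLp g0 2 ν :=
    MemLp.mono_measure hνle (hMem.smul_measure (ENNReal.inv_ne_top.mpr hα0))
  -- centered function
  set c0 : ℝ := ∫ x, g0 x ∂ν with hc0def
  set g : X → ℝ := fun x => g0 x - c0 with hgdef
  have hgm : Measurable g := hg0m.sub measurable_const
  have hgL2 : MemLp g 2 π := hMem.sub (memLp_const c0)
  have hgL2ν : MemLp g 2 ν := hMemν.sub (memLp_const c0)
  have hgν0 : ∫ x, g x ∂ν = 0 := by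
    rw [hgdef]
    rw [integral_sub (hMemν.integrable one_le_two) (integrable_const _), integral_const,
      probReal_univ, hc0def]
    simp
  -- main contraction applied to g
  have hmain := SGAux.main_contraction κ π hbind hrev V hVmeas hV1 lam b R hlam hlam1 hb hR hR0
    α hα ν hνK hdrift hminor g hgm hgL2 hgL2ν hgν0
  -- relate ∫ (P g0)² to ∫ (P g)²
  obtain ⟨hPgL2, haeInt⟩ := SGAux.P_facts κ π hbind hgm hgL2
  have hPgm : Measurable fun x => ∫ y, g y ∂(κ x) := SGAux.Pmeas κ hgm
  have hPg2int : Integrable (fun x => (∫ y, g y ∂(κ x)) ^ 2) π :=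
    (memLp_two_iff_integrable_sq hPgm.aestronglyMeasurable).1 hPgL2
  have hPgint : Integrable (fun x => ∫ y, g y ∂(κ x)) π := hPgL2.integrable one_le_two
  have hPg0eq : ∀ᵐ x ∂π, (∫ y, g0 y ∂(κ x)) = (∫ y, g y ∂(κ x)) + c0 := by
    filter_upwards [haeInt] with x hx
    have hg0int : Integrable g0 (κ x) := by
      have : g0 = fun y => g y + c0 := by funext y; rw [hgdef]; ring
      rw [this]
      exact hx.add (integrable_const _)
    rw [hgdef]
    rw [integral_sub hg0int (integrable_const _), integral_const, probReal_univ]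
    simp
  -- invariance of the mean for L² functions, via reversibility with the constant 1
  have hPgmean : ∫ x, (∫ y, g y ∂(κ x)) ∂π = ∫ x, g x ∂π := by
    have h1 := hrev g (fun _ => (1:ℝ)) hgL2 (SGAux.memL2_bound π measurable_const 1 (by simp))
    simp only [integral_const, probReal_univ, ENNReal.toReal_one, smul_eq_mul, one_smul,
      mul_one] at h1
    exact h1.symm
  have hgmean : ∫ x, g x ∂π = -c0 := by
    rw [hgdef]
    rw [integral_sub (hMem.integrable one_le_two) (integrable_const _), h00, integral_const,
      probReal_univ]
    simp
  -- expand
  have hexp : ∫ x, (∫ y, g0 y ∂(κ x)) ^ 2 ∂π = (∫ x, (∫ y, g y ∂(κ x)) ^ 2 ∂π) - c0 ^ 2 := by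
    have e1 : ∫ x, (∫ y, g0 y ∂(κ x)) ^ 2 ∂π
        = ∫ x, ((∫ y, g y ∂(κ x)) ^ 2 + 2 * c0 * (∫ y, g y ∂(κ x)) + c0 ^ 2) ∂π := by
      refine integral_congr_ae (hPg0eq.mono fun x hx => ?_)
      simp only [hx]; ring
    have hI2 : Integrable (fun x => (∫ y, g y ∂(κ x)) ^ 2 + 2 * c0 * (∫ y, g y ∂(κ x))) π :=
      hPg2int.add (hPgint.const_mul (2 * c0))
    rw [e1, integral_add hI2 (integrable_const _),
      integral_add hPg2int (hPgint.const_mul (2 * c0)), integral_const_mul, hPgmean, hgmean,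
      integral_const, probReal_univ]
    simp
    ring
  have hsqg : ∫ x, g x ^ 2 ∂π = (∫ x, g0 x ^ 2 ∂π) + c0 ^ 2 := by
    have e1 : ∫ x, g x ^ 2 ∂π = ∫ x, (g0 x ^ 2 - 2 * c0 * g0 x + c0 ^ 2) ∂π := by
      refine integral_congr_ae (Filter.Eventually.of_forall fun x => ?_)
      rw [hgdef]; ring
    have hg02int : Integrable (fun x => g0 x ^ 2) π :=
      (memLp_two_iff_integrable_sq hg0m.aestronglyMeasurable).1 hMem
    have hI1 : Integrable (fun x => g0 x ^ 2 - 2 * c0 * g0 x) π :=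
      hg02int.sub ((hMem.integrable one_le_two).const_mul (2 * c0))
    rw [e1, integral_add hI1 (integrable_const _),
      integral_sub hg02int ((hMem.integrable one_le_two).const_mul (2 * c0)),
      integral_const_mul, h00, integral_const, probReal_univ]
    simp
  -- β bounds
  set epsr : ℝ := α ^ 2 * (ν K).toReal with hepsdef
  have heps0 : 0 < epsr :=
    mul_pos (pow_pos hα 2) (ENNReal.toReal_pos hνK.ne' (measure_ne_top _ _))
  set β : ℝ := lam * (3 / 2 - lam) / (1 + 2 * b * (2 - lam) / epsr) with hβdef
  have hden0 : 0 < 1 + 2 * b * (2 - lam) / epsr := by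
    have : 0 ≤ 2 * b * (2 - lam) / epsr := by
      apply div_nonneg _ heps0.le
      nlinarith
    linarith
  have hβ0 : 0 ≤ β := by
    rw [hβdef]
    apply div_nonneg _ hden0.le
    nlinarith
  have hβ1 : β ≤ 1 := by
    rw [hβdef, div_le_one hden0]
    have : 0 ≤ 2 * b * (2 - lam) / epsr := by
      apply div_nonneg _ heps0.le
      nlinarith
    nlinarith [sq_nonneg (lam - 3 / 4)]
  -- final chain
  have hS0g0 : 0 ≤ ∫ x, g0 x ^ 2 ∂π := integral_nonneg fun x => sq_nonneg _
  have hchain : ∫ x, (∫ y, g0 y ∂(κ x)) ^ 2 ∂π ≤ (1 - β) * ∫ x, g0 x ^ 2 ∂π := by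
    rw [hexp]
    have := hmain
    rw [hsqg] at this
    nlinarith [this, sq_nonneg c0]
  rw [hfa, hsq]
  calc Real.sqrt (∫ x, (∫ y, g0 y ∂(κ x)) ^ 2 ∂π)
      ≤ Real.sqrt ((1 - β) * ∫ x, g0 x ^ 2 ∂π) := Real.sqrt_le_sqrt hchain
    _ = Real.sqrt (1 - β) * Real.sqrt (∫ x, g0 x ^ 2 ∂π) :=
        Real.sqrt_mul (by linarith) _
end

section
/- (Proposition 2, drift and minorization for the non-reversible multiplicative reversiblization P†P.) Let p and p† be Markov transition kernels on (X, ℬ) with associated Markov operators P and P†, both leaving the probability measure π invariant, and adjoint to each other on L²(π): ⟨Pf, g⟩_π = ⟨f, P†g⟩_π for all f, g ∈ L²(π). Suppose both P and P† satisfy the drift condition QV(x) ≤ (1−λ)V(x) + b·1_K(x) and the minorization condition Q1_A(x) ≥ α ν(A) 1_K(x) (for Q = P and Q = P†), with the same measurable V : X → [1, ∞), λ ∈ (0,1], b ∈ [0, ∞), α > 0, probability measure ν, and K = {x ∈ X : V(x) ≤ R} with R > 2b/λ. Then the operator P†P satisfies P†P V(x) ≤ (1−λ′)V(x) + b′·1_K(x)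 and P†P 1_A(x) ≥ α′ ν(A) 1_K(x) for all A ∈ ℬ and x, where λ′ = λ(3/2 − λ), b′ = (2−λ)b, and α′ = α² ν(K). -/
open MeasureTheory ProbabilityTheory

/-- **Proposition 2, drift and minorization for `P†P`.** If the mutually adjoint (in
`L²(π)`) Markov operators `P` and `P†` both satisfy the drift condition with
`K = {V ≤ R}`, `R > 2b/λ`, and the minorization condition, then so does `P†P`, with
constants `λ' = λ(3/2 - λ)`, `b' = (2-λ)b`, `α' = α² ν(K)`. -/
theorem drift_minorization_for_adjoint_composition
    {X : Type*} [MeasurableSpace X]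
    (κ κd : Kernel X X) [IsMarkovKernel κ] [IsMarkovKernel κd]
    (π : Measure X) [IsProbabilityMeasure π]
    -- invariance of π for P
    (hinv : ∀ f : X → ℝ, Measurable f → (∃ C : ℝ, ∀ x, |f x| ≤ C) →
      ∫ x, (∫ y, f y ∂(κ x)) ∂π = ∫ x, f x ∂π)
    -- invariance of π for P†
    (hinvd : ∀ f : X → ℝ, Measurable f → (∃ C : ℝ, ∀ x, |f x| ≤ C) →
      ∫ x, (∫ y, f y ∂(κd x)) ∂π = ∫ x, f x ∂π)
    -- adjointness: ⟨Pf, g⟩_π = ⟨f, P†g⟩_π for all f, g ∈ L²(π)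
    (hadj : ∀ f g : X → ℝ, MemLp f 2 π → MemLp g 2 π →
      ∫ x, (∫ y, f y ∂(κ x)) * g x ∂π = ∫ x, f x * (∫ y, g y ∂(κd x)) ∂π)
    (V : X → ℝ) (hVmeas : Measurable V) (hV1 : ∀ x, 1 ≤ V x)
    (lam b R : ℝ) (hlam : 0 < lam) (hlam1 : lam ≤ 1) (hb : 0 ≤ b)
    (hR : 2 * b / lam < R)
    (α : ℝ) (hα : 0 < α) (ν : Measure X) [IsProbabilityMeasure ν]
    -- drift condition (v4) for P, with K = {x | V x ≤ R}
    (hdrift : ∀ x, ∫⁻ y, ENNReal.ofReal (V y) ∂(κ x)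
      ≤ ENNReal.ofReal ((1 - lam) * V x + b * Set.indicator {x | V x ≤ R} 1 x))
    -- drift condition (v4) for P†
    (hdriftd : ∀ x, ∫⁻ y, ENNReal.ofReal (V y) ∂(κd x)
      ≤ ENNReal.ofReal ((1 - lam) * V x + b * Set.indicator {x | V x ≤ R} 1 x))
    -- minorization condition for P
    (hminor : ∀ A : Set X, MeasurableSet A → ∀ x ∈ {x | V x ≤ R},
      ENNReal.ofReal α * ν A ≤ κ x A)
    -- minorization condition for P†
    (hminord : ∀ A : Set X, MeasurableSet A → ∀ x ∈ {x | V x ≤ R},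
      ENNReal.ofReal α * ν A ≤ κd x A) :
    -- drift condition for P†P : (P†P)V(x) = ∫ (PV)(y) κd(x, dy)
    (∀ x, ∫⁻ y, (∫⁻ z, ENNReal.ofReal (V z) ∂(κ y)) ∂(κd x)
      ≤ ENNReal.ofReal ((1 - lam * (3 / 2 - lam)) * V x
          + (2 - lam) * b * Set.indicator {x | V x ≤ R} 1 x))
    ∧
    -- minorization condition for P†P : (P†P) 1_A(x) = ∫ κ(y, A) κd(x, dy)
    (∀ A : Set X, MeasurableSet A → ∀ x ∈ {x | V x ≤ R},
      ENNReal.ofReal α ^ 2 * ν {x | V x ≤ R} * ν A ≤ ∫⁻ y, κ y A ∂(κd x)) := by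
  have hKm : MeasurableSet {x : X | V x ≤ R} :=
    measurableSet_le hVmeas measurable_const
  have hV0 : ∀ x, (0:ℝ) ≤ V x := fun x => le_trans zero_le_one (hV1 x)
  have h1lam : (0:ℝ) ≤ 1 - lam := by linarith
  have hind0 : ∀ x, (0:ℝ) ≤ Set.indicator {x : X | V x ≤ R} 1 x := fun x =>
    Set.indicator_nonneg (fun _ _ => zero_le_one) x
  have hind1 : ∀ x, Set.indicator {x : X | V x ≤ R} (1 : X → ℝ) x ≤ 1 := fun x => by
    by_cases h : x ∈ {x : X | V x ≤ R}
    · rw [Set.indicator_of_mem h]; exact le_refl 1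
    · rw [Set.indicator_of_notMem h]; exact zero_le_one
  constructor
  · intro x
    -- step 1: bound inner integral by drift for κ, then integrate w.r.t. κd
    have step1 : ∫⁻ y, (∫⁻ z, ENNReal.ofReal (V z) ∂(κ y)) ∂(κd x)
        ≤ ∫⁻ y, (ENNReal.ofReal ((1 - lam) * V y)
            + ENNReal.ofReal (b * Set.indicator {x : X | V x ≤ R} 1 y)) ∂(κd x) := by
      refine lintegral_mono fun y => ?_
      refine (hdrift y).trans ?_
      rw [← ENNReal.ofReal_add (mul_nonneg h1lam (hV0 y)) (mul_nonneg hb (hind0 y))]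
    have step2 : ∫⁻ y, (ENNReal.ofReal ((1 - lam) * V y)
            + ENNReal.ofReal (b * Set.indicator {x : X | V x ≤ R} 1 y)) ∂(κd x)
        = (∫⁻ y, ENNReal.ofReal ((1 - lam) * V y) ∂(κd x))
          + ∫⁻ y, ENNReal.ofReal (b * Set.indicator {x : X | V x ≤ R} 1 y) ∂(κd x) := by
      refine lintegral_add_left ?_ _
      exact (ENNReal.measurable_ofReal.comp ((measurable_const.mul hVmeas)))
    have step3 : ∫⁻ y, ENNReal.ofReal ((1 - lam) * V y) ∂(κd x)
        ≤ ENNReal.ofReal (1 - lam)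
          * ENNReal.ofReal ((1 - lam) * V x + b * Set.indicator {x : X | V x ≤ R} 1 x) := by
      calc ∫⁻ y, ENNReal.ofReal ((1 - lam) * V y) ∂(κd x)
          = ENNReal.ofReal (1 - lam) * ∫⁻ y, ENNReal.ofReal (V y) ∂(κd x) := by
            simp_rw [ENNReal.ofReal_mul h1lam]
            exact lintegral_const_mul _ (ENNReal.measurable_ofReal.comp hVmeas)
        _ ≤ _ := mul_le_mul_right (hdriftd x) _
    have step4 : ∫⁻ y, ENNReal.ofReal (b * Set.indicator {x : X | V x ≤ R} 1 y) ∂(κd x)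
        ≤ ENNReal.ofReal b := by
      calc ∫⁻ y, ENNReal.ofReal (b * Set.indicator {x : X | V x ≤ R} 1 y) ∂(κd x)
          ≤ ∫⁻ _, ENNReal.ofReal b ∂(κd x) := by
            refine lintegral_mono fun y => ENNReal.ofReal_le_ofReal ?_
            calc b * Set.indicator {x : X | V x ≤ R} 1 y ≤ b * 1 :=
                  mul_le_mul_of_nonneg_left (hind1 y) hb
              _ = b := mul_one b
        _ = ENNReal.ofReal b := by simp
    have hreal : (1 - lam) * ((1 - lam) * V x + b * Set.indicator {x : X | V x ≤ R} 1 x) + b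
        ≤ (1 - lam * (3 / 2 - lam)) * V x
          + (2 - lam) * b * Set.indicator {x : X | V x ≤ R} 1 x := by
      by_cases h : x ∈ {x : X | V x ≤ R}
      · rw [Set.indicator_of_mem h]
        simp only [Pi.one_apply]
        have := hV0 x
        nlinarith [hlam.le]
      · rw [Set.indicator_of_notMem h]
        have hVx : R < V x := lt_of_not_ge h
        have hRb : 2 * b < lam * R := by
          have := (div_lt_iff₀ hlam).mp hR
          linarith
        have : 2 * b ≤ lam * V x := le_trans hRb.le (by nlinarith)
        nlinarith
    calc ∫⁻ y, (∫⁻ z, ENNReal.ofReal (V z) ∂(κ y)) ∂(κd x)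
        ≤ (∫⁻ y, ENNReal.ofReal ((1 - lam) * V y) ∂(κd x))
          + ∫⁻ y, ENNReal.ofReal (b * Set.indicator {x : X | V x ≤ R} 1 y) ∂(κd x) :=
          step1.trans (le_of_eq step2)
      _ ≤ ENNReal.ofReal (1 - lam)
          * ENNReal.ofReal ((1 - lam) * V x + b * Set.indicator {x : X | V x ≤ R} 1 x)
          + ENNReal.ofReal b := add_le_add step3 step4
      _ = ENNReal.ofReal ((1 - lam) * ((1 - lam) * V x
            + b * Set.indicator {x : X | V x ≤ R} 1 x) + b) := by
          rw [← ENNReal.ofReal_mul h1lam, ← ENNReal.ofReal_add (mul_nonneg h1lam (add_nonneg (mul_nonneg h1lam (hV0 x)) (mul_nonneg hb (hind0 x)))) hb]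
      _ ≤ _ := ENNReal.ofReal_le_ofReal hreal
  · intro A hA x hx
    have key : ∫⁻ y, ({x : X | V x ≤ R}).indicator
        (fun _ => ENNReal.ofReal α * ν A) y ∂(κd x) ≤ ∫⁻ y, κ y A ∂(κd x) := by
      refine lintegral_mono fun y => ?_
      by_cases h : y ∈ {x : X | V x ≤ R}
      · rw [Set.indicator_of_mem h]; exact hminor A hA y h
      · rw [Set.indicator_of_notMem h]; exact zero_le
    have heval : ∫⁻ y, ({x : X | V x ≤ R}).indicator
        (fun _ => ENNReal.ofReal α * ν A) y ∂(κd x)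
        = ENNReal.ofReal α * ν A * κd x {x : X | V x ≤ R} := by
      rw [lintegral_indicator hKm _, lintegral_const]
      rw [Measure.restrict_apply_univ]
    have hK : ENNReal.ofReal α * ν {x : X | V x ≤ R} ≤ κd x {x : X | V x ≤ R} :=
      hminord _ hKm x hx
    calc ENNReal.ofReal α ^ 2 * ν {x : X | V x ≤ R} * ν A
        = ENNReal.ofReal α * ν A * (ENNReal.ofReal α * ν {x : X | V x ≤ R}) := by ring
      _ ≤ ENNReal.ofReal α * ν A * κd x {x : X | V x ≤ R} := mul_le_mul_right hK _
      _ = _ := heval.symm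
      _ ≤ _ := key
end

section
/- (Ornstein–Uhlenbeck example: minorization condition.) Let a ∈ (0,1) and σ > 0, and let p(x, ·) be the Gaussian measure on ℝ with mean (1−a)x and variance σ². Let R = ((σ² + 1)/(a(1−a)))^{1/2}, let ν be the centered Gaussian probability measure on ℝ with variance σ²/2, and let α = 2^{-1/2} · exp(−(1−a)(σ² + 1)/(a σ²)). Then for every Borel set A ⊆ ℝ and every x with |x| ≤ R, p(x, A) ≥ α ν(A). -/
open MeasureTheory ProbabilityTheory

/-- **Ornstein–Uhlenbeck example: minorization condition.** For the Markov kernel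
`p(x, ·) = N((1-a)x, σ²)` on `ℝ`, with `R = ((σ²+1)/(a(1-a)))^{1/2}`,
`ν = N(0, σ²/2)` and `α = 2^{-1/2} exp(-(1-a)(σ²+1)/(a σ²))`, one has
`p(x, A) ≥ α ν(A)` for all Borel `A` and all `|x| ≤ R`. -/
theorem ou_minorization_condition
    (a σ : ℝ) (ha0 : 0 < a) (ha1 : a < 1) (hσ : 0 < σ)
    (p : ℝ → Measure ℝ)
    (hp : ∀ x, p x = gaussianReal ((1 - a) * x) (σ ^ 2).toNNReal)
    (R : ℝ) (hR : R = Real.sqrt ((σ ^ 2 + 1) / (a * (1 - a))))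
    (ν : Measure ℝ) (hν : ν = gaussianReal 0 (σ ^ 2 / 2).toNNReal)
    (α : ℝ) (hα : α = (2 : ℝ) ^ (-(1 : ℝ) / 2) * Real.exp (-((1 - a) * (σ ^ 2 + 1)) / (a * σ ^ 2))) :
    ∀ A : Set ℝ, MeasurableSet A → ∀ x : ℝ, |x| ≤ R →
      ENNReal.ofReal α * ν A ≤ p x A := by
  intro A hA x hx
  have hσ2 : (0:ℝ) < σ ^ 2 := by positivity
  have h1a : (0:ℝ) < 1 - a := by linarith
  have hπ : (0:ℝ) < Real.pi := Real.pi_pos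
  have hv1 : (σ ^ 2).toNNReal ≠ 0 := by
    simp only [ne_eq, Real.toNNReal_eq_zero, not_le]; exact hσ2
  have hv2 : (σ ^ 2 / 2).toNNReal ≠ 0 := by
    simp only [ne_eq, Real.toNNReal_eq_zero, not_le]; positivity
  have hc1 : ((σ ^ 2).toNNReal : ℝ) = σ ^ 2 := Real.coe_toNNReal _ hσ2.le
  have hc2 : ((σ ^ 2 / 2).toNNReal : ℝ) = σ ^ 2 / 2 := Real.coe_toNNReal _ (by positivity)
  have hα_pos : 0 < α := by rw [hα]; positivity
  -- key bound on x²
  have hx2 : a * (1 - a) * x ^ 2 ≤ σ ^ 2 + 1 := by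
    have hRnn : 0 ≤ (σ ^ 2 + 1) / (a * (1 - a)) := by positivity
    have habs := abs_le.mp hx
    have hxx : x ^ 2 ≤ (σ ^ 2 + 1) / (a * (1 - a)) := by
      nlinarith [Real.sq_sqrt hRnn, sq_le_sq' habs.1 habs.2, hR]
    calc a * (1 - a) * x ^ 2 ≤ a * (1 - a) * ((σ ^ 2 + 1) / (a * (1 - a))) :=
          mul_le_mul_of_nonneg_left hxx (by positivity)
      _ = σ ^ 2 + 1 := by field_simp
  rw [hp, hν, gaussianReal_apply _ hv1 A, gaussianReal_apply _ hv2 A,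
    ← lintegral_const_mul' _ _ ENNReal.ofReal_ne_top]
  refine lintegral_mono fun y => ?_
  rw [gaussianPDF, gaussianPDF, ← ENNReal.ofReal_mul hα_pos.le]
  refine ENNReal.ofReal_le_ofReal ?_
  rw [gaussianPDFReal, gaussianPDFReal, hc1, hc2]
  set m : ℝ := (1 - a) * x with hm
  -- exponent inequality
  have key : -((1 - a) * (σ ^ 2 + 1)) / (a * σ ^ 2) + -(y - 0) ^ 2 / (2 * (σ ^ 2 / 2))
      ≤ -(y - m) ^ 2 / (2 * σ ^ 2) := by
    rw [← sub_nonneg]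
    have heq : -(y - m) ^ 2 / (2 * σ ^ 2)
        - (-((1 - a) * (σ ^ 2 + 1)) / (a * σ ^ 2) + -(y - 0) ^ 2 / (2 * (σ ^ 2 / 2)))
        = (2 * (1 - a) * (σ ^ 2 + 1) + 2 * a * y ^ 2 - a * (y - m) ^ 2) / (2 * a * σ ^ 2) := by
      field_simp
      ring
    rw [heq]
    apply div_nonneg _ (by positivity)
    have h1 : 0 ≤ a * (y + m) ^ 2 := by positivity
    have hm2 : a * m ^ 2 ≤ (1 - a) * (σ ^ 2 + 1) := by rw [hm]; nlinarith [hx2]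
    nlinarith [h1, hm2]
  -- constants
  have h2 : ((2:ℝ) ^ (-(1:ℝ) / 2)) = (Real.sqrt 2)⁻¹ := by
    rw [Real.sqrt_eq_rpow, ← Real.rpow_neg (by norm_num)]
    norm_num
  have hs1 : Real.sqrt (2 * Real.pi * σ ^ 2) = Real.sqrt 2 * Real.sqrt (Real.pi * σ ^ 2) := by
    rw [mul_assoc, Real.sqrt_mul (by norm_num)]
  have hs2 : (2 : ℝ) * Real.pi * (σ ^ 2 / 2) = Real.pi * σ ^ 2 := by ring
  rw [hα, h2, hs1, hs2]
  have hsp : 0 < Real.sqrt (Real.pi * σ ^ 2) := Real.sqrt_pos.mpr (by positivity)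
  have hs2p : 0 < Real.sqrt 2 := Real.sqrt_pos.mpr (by norm_num)
  calc (Real.sqrt 2)⁻¹ * Real.exp (-((1 - a) * (σ ^ 2 + 1)) / (a * σ ^ 2)) *
        ((Real.sqrt (Real.pi * σ ^ 2))⁻¹ * Real.exp (-(y - 0) ^ 2 / (2 * (σ ^ 2 / 2))))
      = (Real.sqrt 2)⁻¹ * (Real.sqrt (Real.pi * σ ^ 2))⁻¹ *
        Real.exp (-((1 - a) * (σ ^ 2 + 1)) / (a * σ ^ 2) + -(y - 0) ^ 2 / (2 * (σ ^ 2 / 2))) := by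
        rw [Real.exp_add]; ring
    _ ≤ (Real.sqrt 2)⁻¹ * (Real.sqrt (Real.pi * σ ^ 2))⁻¹ * Real.exp (-(y - m) ^ 2 / (2 * σ ^ 2)) := by
        exact mul_le_mul_of_nonneg_left (Real.exp_le_exp.mpr key) (by positivity)
    _ = (Real.sqrt 2 * Real.sqrt (Real.pi * σ ^ 2))⁻¹ * Real.exp (-(y - m) ^ 2 / (2 * σ ^ 2)) := by
        rw [mul_inv]
end

section
/- (Diffusion map: positive semi-definiteness.) Let ε > 0, let g_ε(z) = exp(−|z|²/(4ε)) be the Gaussian kernel on ℝ^d, and let U : ℝ^d → ℝ be measurable and bounded below, with 0 < Z := ∫∫ g_ε(x−y) e^{−U(x)−U(y)} dx dy < ∞. Define T_ε f(x) = (∫ g_ε(x−y) e^{−U(y)} f(y) dy) / (∫ g_ε(x−y) e^{−U(y)} dy) and let π be the probability measure with density π(x) = (1/Z) e^{−U(x)} ∫ g_ε(x−y) e^{−U(y)} dy. Then T_ε is positive semi-definite on L²(π): for all f ∈ L²(π), ⟨f, T_ε f⟩_π = (1/Z) ∫∫ g_ε(x−y) (e^{−U} f)(x) (e^{−U} f)(y)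 dx dy ≥ 0. -/
/-!
Writing the density of `π` as `Z⁻¹ e^{-U} D`, with `D` the denominator of `T_ε`, the factor `D`
cancels and `⟨f, T_ε f⟩_π` becomes `Z⁻¹` times the quadratic form of the kernel `g_ε(x - y)` at
`h = e^{-U} f`. That form is nonnegative because `g_ε` is a convolution square: completing the
square in the exponent (Apollonius' identity) gives
`∫ g_{ε/2}(x - z) g_{ε/2}(z - y) dz = C g_ε(x - y)`, so by Fubini the form equals
`C⁻¹ ∫ (∫ g_{ε/2}(x - z) h(x) dx)² dz`. Fubini applies because `2 |f(x) f(y)| ≤ f(x)² + f(y)²`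
bounds the integrand by one whose double integral is `Z ‖f‖²_{L²(π)}`.
-/

open MeasureTheory

section GaussKernel

variable {E : Type*} [NormedAddCommGroup E]

noncomputable def gaussKernel (ε : ℝ) (z : E) : ℝ := Real.exp (-‖z‖ ^ 2 / (4 * ε))

lemma gaussKernel_pos (ε : ℝ) (z : E) : 0 < gaussKernel ε z := Real.exp_pos _

lemma gaussKernel_sub_comm (ε : ℝ) (x y : E) : gaussKernel ε (x - y) = gaussKernel ε (y - x) := by
  rw [gaussKernel, gaussKernel, norm_sub_rev]

@[fun_prop]
lemma continuous_gaussKernel (ε : ℝ) : Continuous (gaussKernel (E := E) ε) := by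
  unfold gaussKernel; fun_prop

variable [InnerProductSpace ℝ E]

lemma gaussKernel_half_mul_gaussKernel_half (ε : ℝ) (x y z : E) :
    gaussKernel (ε / 2) (x - z) * gaussKernel (ε / 2) (z - y)
      = gaussKernel ε (x - y) * gaussKernel (ε / 4) (z - midpoint ℝ x y) := by
  have h := EuclideanGeometry.dist_sq_add_dist_sq_eq_two_mul_dist_midpoint_sq_add_half_dist_sq z x y
  rw [dist_comm z x] at h
  simp only [dist_eq_norm] at h
  simp only [gaussKernel, ← Real.exp_add]
  congr 1
  linear_combination (-(4 * (ε / 2))⁻¹) * h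

variable [FiniteDimensional ℝ E] [MeasurableSpace E] [BorelSpace E]

lemma integrable_gaussKernel {ε : ℝ} (hε : 0 < ε) : Integrable (gaussKernel (E := E) ε) := by
  have hb : 0 < ((4 * ε)⁻¹ : ℂ).re := by norm_cast; positivity
  refine (GaussianFourier.integrable_cexp_neg_mul_sq_norm_add hb 0 (0 : E)).norm.congr
    (ae_of_all _ fun z => ?_)
  simp only [Complex.norm_exp, gaussKernel]
  norm_cast
  simp [div_eq_inv_mul]

lemma integral_gaussKernel_pos {ε : ℝ} (hε : 0 < ε) : 0 < ∫ z, gaussKernel (E := E) ε z :=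
  integral_exp_pos (integrable_gaussKernel hε)

lemma integral_integral_gaussKernel_mul_eq {ε : ℝ} (hε : 0 < ε) {h : E → ℝ} (hh : Measurable h)
    (hint : Integrable (fun p : E × E => gaussKernel ε (p.1 - p.2) * h p.1 * h p.2)
      (volume.prod volume)) :
    ∫ x, ∫ y, gaussKernel ε (x - y) * h x * h y
      = (∫ z : E, gaussKernel (ε / 4) z)⁻¹ * ∫ z, (∫ x, gaussKernel (ε / 2) (x - z) * h x) ^ 2 := by
  set C := ∫ z : E, gaussKernel (ε / 4) z
  set F : E × E → E → ℝ := fun p z =>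
    gaussKernel (ε / 2) (p.1 - z) * h p.1 * (gaussKernel (ε / 2) (z - p.2) * h p.2)
  have hF : ∀ p z, F p z = gaussKernel ε (p.1 - p.2) * h p.1 * h p.2
      * gaussKernel (ε / 4) (z - midpoint ℝ p.1 p.2) := by
    intro p z
    linear_combination (h p.1 * h p.2) * gaussKernel_half_mul_gaussKernel_half ε p.1 p.2 z
  have hF_int : Integrable (Function.uncurry F) ((volume.prod volume).prod volume) := by
    have hF_meas : Measurable (Function.uncurry F) := by
      simp only [Function.uncurry_def, F]
      fun_prop
    refine (integrable_prod_iff hF_meas.aestronglyMeasurable).2 ⟨ae_of_all _ fun p => ?_, ?_⟩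
    · simp only [Function.uncurry_apply_pair, hF]
      exact ((integrable_gaussKernel (by positivity)).comp_sub_right _).const_mul _
    · have hnorm (z : E) : ‖gaussKernel (ε / 4) z‖ = gaussKernel (ε / 4) z :=
        Real.norm_of_nonneg (gaussKernel_pos _ _).le
      simp only [Function.uncurry_apply_pair, hF, norm_mul, hnorm, integral_const_mul,
        integral_sub_right_eq_self (μ := volume) (gaussKernel (E := E) (ε / 4))]
      simpa only [norm_mul] using hint.norm.mul_const C
  have hF_left : ∀ p, ∫ z, F p z = C * (gaussKernel ε (p.1 - p.2) * h p.1 * h p.2) := by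
    intro p
    simp only [hF, integral_const_mul, mul_comm]
    rw [integral_sub_right_eq_self (μ := volume) (gaussKernel (ε / 4))]
  have hF_right : ∀ z, ∫ p, F p z ∂(volume.prod volume)
      = (∫ x, gaussKernel (ε / 2) (x - z) * h x) ^ 2 := by
    intro z
    simp only [F, gaussKernel_sub_comm _ z, sq]
    exact integral_prod_mul (fun x => gaussKernel (ε / 2) (x - z) * h x)
      (fun x => gaussKernel (ε / 2) (x - z) * h x)
  have hC : 0 < C := integral_gaussKernel_pos (by positivity)
  calc ∫ x, ∫ y, gaussKernel ε (x - y) * h x * h y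
      = ∫ p, gaussKernel ε (p.1 - p.2) * h p.1 * h p.2 ∂(volume.prod volume) :=
        integral_integral hint
    _ = C⁻¹ * ∫ p, (∫ z, F p z) ∂(volume.prod volume) := by
        simp only [hF_left, integral_const_mul, inv_mul_cancel_left₀ hC.ne']
    _ = C⁻¹ * ∫ z, ∫ p, F p z ∂(volume.prod volume) := by rw [integral_integral_swap hF_int]
    _ = _ := by simp only [hF_right]

lemma integral_integral_gaussKernel_mul_nonneg {ε : ℝ} (hε : 0 < ε) {h : E → ℝ}
    (hh : Measurable h)
    (hint : Integrable (fun p : E × E => gaussKernel ε (p.1 - p.2) * h p.1 * h p.2)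
      (volume.prod volume)) :
    0 ≤ ∫ x, ∫ y, gaussKernel ε (x - y) * h x * h y := by
  rw [integral_integral_gaussKernel_mul_eq hε hh hint]
  exact mul_nonneg (inv_nonneg.2 (integral_gaussKernel_pos (by positivity)).le)
    (integral_nonneg fun z => sq_nonneg _)

end GaussKernel

section WithDensity

variable {α : Type*} [MeasurableSpace α] {μ : Measure α}

lemma absolutelyContinuous_withDensity_ofReal {ρ : α → ℝ} (hρ : Measurable ρ)
    (hρ_pos : ∀ x, 0 < ρ x) : μ ≪ μ.withDensity fun x => ENNReal.ofReal (ρ x) :=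
  withDensity_absolutelyContinuous' hρ.ennreal_ofReal.aemeasurable
    (ae_of_all _ fun x => (ENNReal.ofReal_pos.2 (hρ_pos x)).ne')

lemma MemLp.integrable_sq_mul_of_withDensity {ρ f : α → ℝ} (hρ : Measurable ρ)
    (hρ_nonneg : ∀ x, 0 ≤ ρ x) (hf : MemLp f 2 (μ.withDensity fun x => ENNReal.ofReal (ρ x))) :
    Integrable (fun x => f x ^ 2 * ρ x) μ := by
  have := (integrable_withDensity_iff_integrable_smul' hρ.ennreal_ofReal
    (ae_of_all _ fun _ => ENNReal.ofReal_lt_top)).1 hf.integrable_sq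
  simpa only [ENNReal.toReal_ofReal (hρ_nonneg _), smul_eq_mul, mul_comm] using this

variable [SFinite μ]

lemma integrable_kernel_mul_mul {K : α → α → ℝ} {f : α → ℝ}
    (hK_meas : Measurable fun p : α × α => K p.1 p.2) (hK_nonneg : ∀ x y, 0 ≤ K x y)
    (hK_symm : ∀ x y, K x y = K y x) (hK_int : ∀ x, Integrable (K x) μ) (hf : Measurable f)
    (hf_sq : Integrable (fun x => f x ^ 2 * ∫ y, K x y ∂μ) μ) :
    Integrable (fun p : α × α => K p.1 p.2 * f p.1 * f p.2) (μ.prod μ) := by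
  have hB : Integrable (fun p : α × α => f p.1 ^ 2 * K p.1 p.2) (μ.prod μ) := by
    refine (integrable_prod_iff (by fun_prop)).2
      ⟨ae_of_all _ fun x => (hK_int x).const_mul (f x ^ 2), ?_⟩
    simpa only [norm_mul, norm_pow, Real.norm_eq_abs, sq_abs, abs_of_nonneg (hK_nonneg _ _),
      integral_const_mul] using hf_sq
  refine ((hB.add hB.swap).div_const 2).mono' (by fun_prop) (ae_of_all _ fun p => ?_)
  simp only [Pi.add_apply, Function.comp_apply, Prod.fst_swap, Prod.snd_swap, hK_symm p.2 p.1,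
    norm_mul, Real.norm_eq_abs, abs_of_nonneg (hK_nonneg _ _)]
  nlinarith [two_mul_le_add_sq |f p.1| |f p.2|, hK_nonneg p.1 p.2, sq_abs (f p.1), sq_abs (f p.2)]

end WithDensity

section DiffusionMap

variable {E : Type*} [NormedAddCommGroup E] [InnerProductSpace ℝ E] [FiniteDimensional ℝ E]
  [MeasurableSpace E] [BorelSpace E] {ε c : ℝ} {U : E → ℝ}

lemma integrable_gaussKernel_sub_mul_exp_neg (hε : 0 < ε) (hU : Measurable U)
    (hc : ∀ x, c ≤ U x) (x : E) :
    Integrable (fun y => gaussKernel ε (x - y) * Real.exp (-U y)) :=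
  ((integrable_gaussKernel hε).comp_sub_left x).mul_bdd (c := Real.exp (-c)) (by fun_prop)
    (ae_of_all _ fun y => by
      rw [Real.norm_of_nonneg (Real.exp_pos _).le]
      exact Real.exp_le_exp.2 (neg_le_neg (hc y)))

lemma integral_gaussKernel_sub_mul_exp_neg_pos (hε : 0 < ε) (hU : Measurable U)
    (hc : ∀ x, c ≤ U x) (x : E) :
    0 < ∫ y, gaussKernel ε (x - y) * Real.exp (-U y) := by
  simpa only [gaussKernel, ← Real.exp_add] using
    integral_exp_pos (by simpa only [gaussKernel, ← Real.exp_add] using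
      integrable_gaussKernel_sub_mul_exp_neg hε hU hc x)

lemma measurable_integral_gaussKernel_sub_mul_exp_neg (hU : Measurable U) :
    Measurable fun x : E => ∫ y, gaussKernel ε (x - y) * Real.exp (-U y) :=
  (by fun_prop : Measurable fun p : E × E => gaussKernel ε (p.1 - p.2) * Real.exp (-U p.2))
    |>.stronglyMeasurable.integral_prod_right'.measurable

lemma measurable_diffusion_density (hU : Measurable U) (Z : ℝ) :
    Measurable fun x : E => 1 / Z * Real.exp (-U x)
      * ∫ y, gaussKernel ε (x - y) * Real.exp (-U y) := by
  have := measurable_integral_gaussKernel_sub_mul_exp_neg (ε := ε) hU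
  fun_prop

lemma diffusion_density_pos (hε : 0 < ε) (hU : Measurable U) (hc : ∀ x, c ≤ U x) {Z : ℝ}
    (hZ : 0 < Z) (x : E) :
    0 < 1 / Z * Real.exp (-U x) * ∫ y, gaussKernel ε (x - y) * Real.exp (-U y) := by
  have := integral_gaussKernel_sub_mul_exp_neg_pos hε hU hc x
  positivity

lemma integral_mul_diffusion_withDensity_eq (hε : 0 < ε) (hU : Measurable U)
    (hc : ∀ x, c ≤ U x) {Z : ℝ} (hZ : 0 < Z) (f : E → ℝ) :
    ∫ x, f x * ((∫ y, gaussKernel ε (x - y) * Real.exp (-U y) * f y)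
        / ∫ y, gaussKernel ε (x - y) * Real.exp (-U y))
      ∂volume.withDensity (fun x => ENNReal.ofReal
        (1 / Z * Real.exp (-U x) * ∫ y, gaussKernel ε (x - y) * Real.exp (-U y)))
    = 1 / Z * ∫ x, ∫ y, gaussKernel ε (x - y) * (Real.exp (-U x) * f x)
        * (Real.exp (-U y) * f y) := by
  rw [integral_withDensity_eq_integral_toReal_smul
    (measurable_diffusion_density hU Z).ennreal_ofReal
    (ae_of_all _ fun _ => ENNReal.ofReal_lt_top), ← integral_const_mul]
  refine integral_congr_ae (ae_of_all _ fun x => ?_)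
  have hD := (integral_gaussKernel_sub_mul_exp_neg_pos hε hU hc x).ne'
  simp only [ENNReal.toReal_ofReal (diffusion_density_pos hε hU hc hZ x).le, smul_eq_mul]
  rw [show (fun y => gaussKernel ε (x - y) * (Real.exp (-U x) * f x) * (Real.exp (-U y) * f y))
      = fun y => Real.exp (-U x) * f x * (gaussKernel ε (x - y) * Real.exp (-U y) * f y) from
    funext fun y => by ring, integral_const_mul]
  field_simp

lemma integrable_diffusion_quadratic_form (hε : 0 < ε) (hU : Measurable U)
    (hc : ∀ x, c ≤ U x) {f : E → ℝ} (hf : Measurable f)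
    (hf_sq : Integrable (fun x => f x ^ 2
      * (Real.exp (-U x) * ∫ y, gaussKernel ε (x - y) * Real.exp (-U y)))) :
    Integrable (fun p : E × E => gaussKernel ε (p.1 - p.2) * (Real.exp (-U p.1) * f p.1)
      * (Real.exp (-U p.2) * f p.2)) (volume.prod volume) := by
  have := integrable_kernel_mul_mul
    (K := fun x y => Real.exp (-U x) * (gaussKernel ε (x - y) * Real.exp (-U y)))
    (by fun_prop)
    (fun x y => (mul_pos (Real.exp_pos _) (mul_pos (gaussKernel_pos _ _) (Real.exp_pos _))).le)
    (fun x y => by rw [gaussKernel_sub_comm]; ring)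
    (fun x => (integrable_gaussKernel_sub_mul_exp_neg hε hU hc x).const_mul _) hf
    (by simpa only [integral_const_mul] using hf_sq)
  exact this.congr (ae_of_all _ fun p => by ring)

end DiffusionMap

theorem diffusion_map_positive_semidefinite_general
    {d : ℕ} (ε : ℝ) (hε : 0 < ε)
    (gε : EuclideanSpace ℝ (Fin d) → ℝ)
    (hg : ∀ z, gε z = Real.exp (-‖z‖ ^ 2 / (4 * ε)))
    (U : EuclideanSpace ℝ (Fin d) → ℝ) (hUmeas : Measurable U)
    (hUbdd : ∃ c : ℝ, ∀ x, c ≤ U x)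
    (Z : ℝ) (hZpos : 0 < Z)
    (T : (EuclideanSpace ℝ (Fin d) → ℝ) → (EuclideanSpace ℝ (Fin d) → ℝ))
    (hT : ∀ f x, T f x
      = (∫ y, gε (x - y) * Real.exp (-U y) * f y) / (∫ y, gε (x - y) * Real.exp (-U y)))
    (π : Measure (EuclideanSpace ℝ (Fin d)))
    (hπ : π = volume.withDensity
      (fun x => ENNReal.ofReal ((1 / Z) * Real.exp (-U x) * ∫ y, gε (x - y) * Real.exp (-U y)))) :
    ∀ f : EuclideanSpace ℝ (Fin d) → ℝ, MemLp f 2 π →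
      (∫ x, f x * T f x ∂π
        = (1 / Z) * ∫ x, (∫ y, gε (x - y) * (Real.exp (-U x) * f x)
            * (Real.exp (-U y) * f y) ∂volume) ∂volume)
      ∧ 0 ≤ ∫ x, f x * T f x ∂π := by
  intro f hf
  obtain rfl : gε = gaussKernel ε := funext hg
  obtain ⟨c, hc⟩ := hUbdd
  have hident : ∫ x, f x * T f x ∂π = 1 / Z * ∫ x, ∫ y, gaussKernel ε (x - y)
      * (Real.exp (-U x) * f x) * (Real.exp (-U y) * f y) := by
    simp only [hT, hπ]
    exact integral_mul_diffusion_withDensity_eq hε hUmeas hc hZpos f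
  refine ⟨hident, hident ▸ mul_nonneg (by positivity) ?_⟩
  have hρ_meas := measurable_diffusion_density (ε := ε) hUmeas Z
  have hρ_pos := diffusion_density_pos hε hUmeas hc hZpos
  -- Fubini needs a measurable representative of `f`; `π` has a positive density.
  obtain ⟨f', hf'_meas, hff'⟩ := hf.1
  have hff'_vol : f =ᵐ[volume] f' :=
    (hπ ▸ absolutelyContinuous_withDensity_ofReal hρ_meas hρ_pos).ae_eq hff'
  have hf'_sq := MemLp.integrable_sq_mul_of_withDensity hρ_meas (fun x => (hρ_pos x).le)
    (hπ ▸ hf.ae_eq hff')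
  have hZ := hZpos.ne'
  calc (0 : ℝ) ≤ ∫ x, ∫ y, gaussKernel ε (x - y) * (Real.exp (-U x) * f' x)
        * (Real.exp (-U y) * f' y) :=
      integral_integral_gaussKernel_mul_nonneg hε (by fun_prop)
        (integrable_diffusion_quadratic_form hε hUmeas hc hf'_meas.measurable
          ((hf'_sq.const_mul Z).congr (ae_of_all _ fun x => by field_simp)))
    _ = _ := integral_congr_ae (hff'_vol.mono fun x hx =>
      integral_congr_ae (hff'_vol.mono fun y hy => by rw [hx, hy]))

/-- **Diffusion map: positive semi-definiteness.** The diffusion map operator `T_ε` is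
positive semi-definite on `L²(π)`: for all `f ∈ L²(π)`,
`⟨f, T_ε f⟩_π = (1/Z) ∫∫ g_ε(x-y) (e^{-U} f)(x) (e^{-U} f)(y) dx dy ≥ 0`. -/
theorem diffusion_map_positive_semidefinite
    {d : ℕ} (ε : ℝ) (hε : 0 < ε)
    (gε : EuclideanSpace ℝ (Fin d) → ℝ)
    (hg : ∀ z, gε z = Real.exp (-‖z‖ ^ 2 / (4 * ε)))
    (U : EuclideanSpace ℝ (Fin d) → ℝ) (hUmeas : Measurable U)
    (hUbdd : ∃ c : ℝ, ∀ x, c ≤ U x)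
    (Z : ℝ) (hZpos : 0 < Z)
    (hZ : ENNReal.ofReal Z
      = ∫⁻ x, ∫⁻ y, ENNReal.ofReal (gε (x - y) * Real.exp (-U x - U y)) ∂volume ∂volume)
    (T : (EuclideanSpace ℝ (Fin d) → ℝ) → (EuclideanSpace ℝ (Fin d) → ℝ))
    (hT : ∀ f x, T f x
      = (∫ y, gε (x - y) * Real.exp (-U y) * f y) / (∫ y, gε (x - y) * Real.exp (-U y)))
    (π : Measure (EuclideanSpace ℝ (Fin d)))
    (hπ : π = volume.withDensity
      (fun x => ENNReal.ofReal ((1 / Z) * Real.exp (-U x) * ∫ y, gε (x - y) * Real.exp (-U y)))) :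
    ∀ f : EuclideanSpace ℝ (Fin d) → ℝ, MemLp f 2 π →
      (∫ x, f x * T f x ∂π
        = (1 / Z) * ∫ x, (∫ y, gε (x - y) * (Real.exp (-U x) * f x)
            * (Real.exp (-U y) * f y) ∂volume) ∂volume)
      ∧ 0 ≤ ∫ x, f x * T f x ∂π :=
  diffusion_map_positive_semidefinite_general ε hε gε hg U hUmeas hUbdd Z hZpos T hT π hπ
end
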